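/- arXiv:1901.09058 — 6 statements merged into one kernel-verified Lean document; each statement's English description precedes it below -/
import Mathlib

section
/- Let k ≥ 2 be an integer, let G₁ and G₂ be non-empty finite simple graphs, and let s ≥ 2 be an integer with the Ramsey property for (G₁, G₂), i.e., every blue/red edge-coloring of the complete graph K_s contains a blue copy of G₁ or a red copy of G₂. Then for every integer n ≥ (k³/12)·s³, every covering [k]-uniform hypergraph H on n vertices, together with any blue/red coloring of its edges, contains a blue Berge copy of G₁ or a red Berge copy of G₂. In particular, the cover Ramsey number satisfies R̂^[k](BG₁, BG₂) ≤ (k³/12)·R(G₁,G₂)³. -/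
/-!
Fix for every pair of vertices a hyperedge `D p` covering it. Two distinct pairs with the same
covering hyperedge span at least three vertices; there are at most `C(n,2) (C(k,2) - 1)` such
coincidences, each contained in at most `C(n-3, s-3)` of the `s`-sets, and for
`n ≥ k³ s³ / 12` this is fewer than `C(n, s)`. So some `s`-set `S` has its pairs covered by
pairwise distinct hyperedges. Colour each pair of `S` by the colour of its hyperedge: the Ramsey
property of `s` gives a blue `G₁` or a red `G₂` inside `S`, and its edges, carried by distinct
hyperedges, form a Berge copy.
-/

/-- `G` has a Berge copy in the hypergraph `H` (a finite set of edges, each a finite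
set of vertices) all of whose hyperedges satisfy the predicate `P`: there are distinct
core vertices `y v` (one for each vertex `v` of `G`) and distinct hyperedges `f e`
(one for each edge `e` of `G`) such that each edge `e = uv` of `G` satisfies
`{y u, y v} ⊆ f e`. -/
def HasBergeCopy {α V : Type*} (G : SimpleGraph α) (H : Finset (Finset V))
    (P : Finset V → Prop) : Prop :=
  ∃ (y : α → V) (f : Sym2 α → Finset V),
    Function.Injective y ∧ Set.InjOn f G.edgeSet ∧
      ∀ e ∈ G.edgeSet, f e ∈ H ∧ P (f e) ∧ ∀ v ∈ e, y v ∈ f e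

open Finset

namespace Sym2

variable {α : Type*} [DecidableEq α]

lemma card_filter_not_isDiag_sym2 (A : Finset α) :
    #{p ∈ A.sym2 | ¬p.IsDiag} = (#A).choose 2 := by
  rw [sym2_eq_image, filter_image_mk_not_isDiag, card_image_offDiag]

lemma toFinset_subset_iff {p : Sym2 α} {S : Finset α} :
    p.toFinset ⊆ S ↔ p ∈ S.sym2 := by
  simp [subset_iff, mem_sym2_iff]

lemma three_le_card_toFinset_union {p q : Sym2 α} (hp : ¬p.IsDiag) (hq : ¬q.IsDiag)
    (hpq : p ≠ q) : 3 ≤ #(p.toFinset ∪ q.toFinset) := by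
  induction p with | h a b => ?_
  induction q with | h c d => ?_
  simp only [mk_isDiag_iff, toFinset_mk_eq] at *
  have hcd : ¬ (c ∈ ({a, b} : Finset α) ∧ d ∈ ({a, b} : Finset α)) := by
    simp only [mem_insert, mem_singleton]
    rintro ⟨rfl | rfl, rfl | rfl⟩ <;> simp_all [Sym2.eq_swap]
  grind

end Sym2

namespace Nat

lemma choose_two_mul_mul_choose_lt_choose {n m s : ℕ} (hs : 3 ≤ s) (hsn : s ≤ n)
    (h : 3 * s.choose 3 * m + 2 < n) :
    n.choose 2 * m * (n - 3).choose (s - 3) < n.choose s := by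
  -- Multiply by `3 C(s,3)` and use `C(n,s) C(s,3) = C(n,3) C(n-3,s-3)`, `3 C(n,3) = C(n,2) (n-2)`.
  have h₂ : 0 < n.choose 2 := choose_pos (by omega)
  have h₃ : 0 < (n - 3).choose (s - 3) := choose_pos (by omega)
  refine Nat.lt_of_mul_lt_mul_right (a := 3 * s.choose 3) ?_
  calc n.choose 2 * m * (n - 3).choose (s - 3) * (3 * s.choose 3)
      = n.choose 2 * (3 * s.choose 3 * m) * (n - 3).choose (s - 3) := by ring
    _ < n.choose 2 * (n - 2) * (n - 3).choose (s - 3) := by gcongr; omega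
    _ = n.choose s * (3 * s.choose 3) := by
        rw [← choose_succ_right_eq, mul_comm (n.choose 3), mul_assoc, ← choose_mul hs]
        ring

end Nat

lemma three_mul_choose_three_mul_add_two_lt {k s n : ℕ} (hk : 2 ≤ k) (hs : 3 ≤ s)
    (hn : (k : ℝ) ^ 3 / 12 * (s : ℝ) ^ 3 ≤ n) :
    3 * s.choose 3 * (k.choose 2 - 1) + 2 < n := by
  have hk' : (2 : ℝ) ≤ k := by exact_mod_cast hk
  have hs' : (3 : ℝ) ≤ s := by exact_mod_cast hs
  have h₃ : (s.choose 3 : ℝ) ≤ s ^ 3 / 6 := by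
    simpa [Nat.factorial] using Nat.choose_le_pow_div (α := ℝ) 3 s
  have h₂ : ((k.choose 2 - 1 : ℕ) : ℝ) = k * (k - 1) / 2 - 1 := by
    rw [Nat.cast_sub (Nat.one_le_iff_ne_zero.2 (Nat.choose_pos hk).ne'), Nat.cast_choose_two,
      Nat.cast_one]
  have hm : (0 : ℝ) ≤ k * (k - 1) / 2 - 1 := by nlinarith
  -- With `C(s,3) ≤ s³/6` this reduces to `s³ ((k-1)³ + 7) > 24`.
  suffices h : ((3 * s.choose 3 * (k.choose 2 - 1) + 2 : ℕ) : ℝ) < n by exact_mod_cast h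
  rw [Nat.cast_add, Nat.cast_mul, Nat.cast_mul, h₂]
  push_cast
  nlinarith [mul_le_mul_of_nonneg_right h₃ hm, pow_le_pow_left₀ (by norm_num) hs' 3,
    pow_le_pow_left₀ (by norm_num) (by linarith : (1:ℝ) ≤ k - 1) 3]

lemma le_of_cube_mul_le {k s n : ℕ} (hk : 2 ≤ k)
    (hn : (k : ℝ) ^ 3 / 12 * (s : ℝ) ^ 3 ≤ n) : s ≤ n := by
  have hk' : (2 : ℝ) ^ 3 ≤ k ^ 3 := pow_le_pow_left₀ (by norm_num) (by exact_mod_cast hk) 3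
  have hs : (0 : ℝ) ≤ s := s.cast_nonneg
  suffices h : (s : ℝ) < n + 1 by exact_mod_cast Nat.lt_succ_iff.1 (by exact_mod_cast h)
  nlinarith [mul_nonneg hs (sq_nonneg ((s : ℝ) - 1)),
    mul_le_mul_of_nonneg_right hk' (pow_nonneg hs 3)]

section Counting

variable {V : Type*} [Fintype V] [DecidableEq V]

lemma card_filter_powersetCard_superset_le {T : Finset V} (hT : 3 ≤ #T) {s : ℕ} (hs : 3 ≤ s) :
    #{S ∈ powersetCard s univ | T ⊆ S} ≤ (Fintype.card V - 3).choose (s - 3) := by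
  obtain ⟨T₃, hT₃T, hT₃⟩ := exists_subset_card_eq hT
  calc #{S ∈ powersetCard s univ | T ⊆ S}
      ≤ #{S ∈ powersetCard s univ | T₃ ⊆ S} :=
        card_le_card (monotone_filter_right _ fun _ _ => hT₃T.trans)
    _ = (Fintype.card V - 3).choose (s - 3) := by
        rw [card_filter_powersetCard_subset _ _ _ (subset_univ _) (hT₃ ▸ hs), hT₃, card_univ]

open Classical in
lemma card_filter_not_injOn_le {k s : ℕ} (hs : 3 ≤ s) (D : Sym2 V → Finset V)
    (hD : ∀ p : Sym2 V, ¬p.IsDiag → #(D p) ≤ k ∧ p ∈ (D p).sym2) :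
    #{S ∈ powersetCard s (univ : Finset V) | ¬Set.InjOn D {p | p ∈ S.sym2 ∧ ¬p.IsDiag}} ≤
      (Fintype.card V).choose 2 * (k.choose 2 - 1) * (Fintype.card V - 3).choose (s - 3) := by
  -- Two distinct pairs `p`, `q` of a bad `S` with `D p = D q`: `q` is another pair inside `D p`,
  -- and `S` contains the at least three points of `p ∪ q`.
  have hbad :
      {S ∈ powersetCard s (univ : Finset V) | ¬Set.InjOn D {p | p ∈ S.sym2 ∧ ¬p.IsDiag}} ⊆
        {p ∈ (univ : Finset V).sym2 | ¬p.IsDiag}.biUnion fun p =>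
          ({q ∈ (D p).sym2 | ¬q.IsDiag}.erase p).biUnion fun q =>
            {S ∈ powersetCard s univ | p.toFinset ∪ q.toFinset ⊆ S} := by
    intro S hS
    simp only [mem_filter, Set.InjOn, not_forall] at hS
    obtain ⟨hS, p, ⟨hpS, hp⟩, q, ⟨hqS, hq⟩, hpq, hne⟩ := hS
    simp only [mem_biUnion, mem_filter, mem_erase]
    exact ⟨p, ⟨mem_sym2_iff.2 fun _ _ => mem_univ _, hp⟩, q,
      ⟨Ne.symm hne, hpq ▸ (hD q hq).2, hq⟩, hS,
      union_subset (Sym2.toFinset_subset_iff.2 hpS) (Sym2.toFinset_subset_iff.2 hqS)⟩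
  have hfiber : ∀ p ∈ {p ∈ (univ : Finset V).sym2 | ¬p.IsDiag},
      #({q ∈ (D p).sym2 | ¬q.IsDiag}.erase p) ≤ k.choose 2 - 1 := fun p hp => by
    obtain ⟨hDk, hpD⟩ := hD p (mem_filter.1 hp).2
    rw [card_erase_of_mem (mem_filter.2 ⟨hpD, (mem_filter.1 hp).2⟩),
      Sym2.card_filter_not_isDiag_sym2]
    exact Nat.sub_le_sub_right (Nat.choose_le_choose 2 hDk) 1
  calc _ ≤ _ := card_le_card hbad
    _ ≤ ∑ p ∈ {p ∈ (univ : Finset V).sym2 | ¬p.IsDiag},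
          ∑ q ∈ {q ∈ (D p).sym2 | ¬q.IsDiag}.erase p,
            #{S ∈ powersetCard s univ | p.toFinset ∪ q.toFinset ⊆ S} :=
        card_biUnion_le.trans (sum_le_sum fun _ _ => card_biUnion_le)
    _ ≤ ∑ p ∈ {p ∈ (univ : Finset V).sym2 | ¬p.IsDiag},
          ∑ q ∈ {q ∈ (D p).sym2 | ¬q.IsDiag}.erase p,
            (Fintype.card V - 3).choose (s - 3) := by
        gcongr with p hp q hq
        simp only [mem_erase, mem_filter] at hp hq
        exact card_filter_powersetCard_superset_le
          (Sym2.three_le_card_toFinset_union hp.2 hq.2.2 hq.1.symm) hs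
    _ ≤ ∑ p ∈ {p ∈ (univ : Finset V).sym2 | ¬p.IsDiag},
          (k.choose 2 - 1) * (Fintype.card V - 3).choose (s - 3) := by
        gcongr with p hp
        rw [sum_const, smul_eq_mul]
        exact Nat.mul_le_mul_right _ (hfiber p hp)
    _ = _ := by
        rw [sum_const, smul_eq_mul, Sym2.card_filter_not_isDiag_sym2, card_univ, mul_assoc]

lemma exists_card_eq_injOn {k s : ℕ} (D : Sym2 V → Finset V)
    (hD : ∀ p : Sym2 V, ¬p.IsDiag → #(D p) ≤ k ∧ p ∈ (D p).sym2)
    (hsn : s ≤ Fintype.card V)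
    (hcount : 3 ≤ s → (Fintype.card V).choose 2 * (k.choose 2 - 1) *
      (Fintype.card V - 3).choose (s - 3) < (Fintype.card V).choose s) :
    ∃ S : Finset V, #S = s ∧ Set.InjOn D {p | p ∈ S.sym2 ∧ ¬p.IsDiag} := by
  classical
  by_cases hs : s < 3
  -- Fewer than three points carry at most one pair.
  · obtain ⟨S, -, hS⟩ :=
      exists_subset_card_eq (show s ≤ #(univ : Finset V) by rwa [card_univ])
    refine ⟨S, hS, fun p ⟨hpS, hp⟩ q ⟨hqS, hq⟩ _ => by_contra fun hpq => ?_⟩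
    have := card_le_card (union_subset (Sym2.toFinset_subset_iff.2 hpS)
      (Sym2.toFinset_subset_iff.2 hqS))
    have := Sym2.three_le_card_toFinset_union hp hq hpq
    omega
  · by_contra! hbad
    have hall : {S ∈ powersetCard s (univ : Finset V) |
        ¬Set.InjOn D {p | p ∈ S.sym2 ∧ ¬p.IsDiag}} = powersetCard s univ :=
      filter_true_of_mem fun S hS => hbad S (mem_powersetCard.1 hS).2
    have := card_filter_not_injOn_le (not_lt.1 hs) D hD
    rw [hall, card_powersetCard, card_univ] at this
    exact (hcount (not_lt.1 hs)).not_ge this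

end Counting

lemma exists_pair_cover {V : Type*} {H : Finset (Finset V)}
    (hcov : ∀ u v : V, u ≠ v → ∃ h ∈ H, u ∈ h ∧ v ∈ h) :
    ∃ D : Sym2 V → Finset V, ∀ p : Sym2 V, ¬p.IsDiag → D p ∈ H ∧ p ∈ (D p).sym2 := by
  suffices ∀ p : Sym2 V, ∃ h, ¬p.IsDiag → h ∈ H ∧ p ∈ h.sym2 by
    choose D hD using this
    exact ⟨D, hD⟩
  intro p
  induction p with | h u v => ?_
  by_cases huv : u = v
  · exact ⟨∅, fun hp => absurd huv hp⟩
  · obtain ⟨h, hH, hu, hv⟩ := hcov u v huv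
    exact ⟨h, fun _ => ⟨hH, mk_mem_sym2_iff.2 ⟨hu, hv⟩⟩⟩

lemma hasBergeCopy_of_injOn {α V : Type*} {G : SimpleGraph α} {H : Finset (Finset V)}
    {P : Finset V → Prop} {D : Sym2 V → Finset V}
    (hD : ∀ p : Sym2 V, ¬p.IsDiag → D p ∈ H ∧ p ∈ (D p).sym2) {S : Finset V}
    (hinj : Set.InjOn D {p | p ∈ S.sym2 ∧ ¬p.IsDiag}) {y : α → V}
    (hy : Function.Injective y) (hyS : ∀ a, y a ∈ S)
    (hP : ∀ u v, G.Adj u v → P (D s(y u, y v))) :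
    HasBergeCopy G H P := by
  have hmap : ∀ e ∈ G.edgeSet, e.map y ∈ {p | p ∈ S.sym2 ∧ ¬p.IsDiag} := fun e he =>
    ⟨mem_sym2_iff.2 fun a ha => by obtain ⟨b, -, rfl⟩ := Sym2.mem_map.1 ha; exact hyS b,
      (Sym2.isDiag_map hy).not.2 (G.not_isDiag_of_mem_edgeSet he)⟩
  refine ⟨y, fun e => D (e.map y), hy, fun e₁ he₁ e₂ he₂ h =>
    Sym2.map.injective hy (hinj (hmap e₁ he₁) (hmap e₂ he₂) h), fun e he => ?_⟩
  obtain ⟨hH, hmem⟩ := hD _ (hmap e he).2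
  induction e with | h u v => ?_
  exact ⟨hH, hP u v he, fun w hw => mem_sym2_iff.1 hmem _ (Sym2.mem_map.2 ⟨w, hw, rfl⟩)⟩

theorem cover_ramsey_upper_bound_general
    {α₁ α₂ : Type*}
    (G₁ : SimpleGraph α₁) (G₂ : SimpleGraph α₂)
    (k s : ℕ) (hk : 2 ≤ k)
    (hRam : ∀ χ : Sym2 (Fin s) → Bool,
      (∃ φ : α₁ → Fin s, Function.Injective φ ∧
        ∀ u v, G₁.Adj u v → χ s(φ u, φ v) = true) ∨
      (∃ φ : α₂ → Fin s, Function.Injective φ ∧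
        ∀ u v, G₂.Adj u v → χ s(φ u, φ v) = false))
    (n : ℕ) (hn : ((k : ℝ) ^ 3 / 12) * (s : ℝ) ^ 3 ≤ (n : ℝ))
    (H : Finset (Finset (Fin n)))
    (hunif : ∀ h ∈ H, 1 ≤ h.card ∧ h.card ≤ k)
    (hcov : ∀ u v : Fin n, u ≠ v → ∃ h ∈ H, u ∈ h ∧ v ∈ h)
    (col : Finset (Fin n) → Bool) :
    HasBergeCopy G₁ H (fun h => col h = true) ∨
      HasBergeCopy G₂ H (fun h => col h = false) := by
  obtain ⟨D, hD⟩ := exists_pair_cover hcov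
  have hsn : s ≤ n := le_of_cube_mul_le hk hn
  obtain ⟨S, hS, hinj⟩ := exists_card_eq_injOn (s := s) D
    (fun p hp => ⟨(hunif _ (hD p hp).1).2, (hD p hp).2⟩)
    (by rwa [Fintype.card_fin])
    (fun hs => by
      simpa using Nat.choose_two_mul_mul_choose_lt_choose hs hsn
        (three_mul_choose_three_mul_add_two_lt hk hs hn))
  let e := S.orderEmbOfFin hS
  have heS : ∀ i, e i ∈ S := S.orderEmbOfFin_mem hS
  rcases hRam fun p => col (D (p.map e)) with ⟨φ, hφ, hcol⟩ | ⟨φ, hφ, hcol⟩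
  · exact .inl (hasBergeCopy_of_injOn hD hinj (e.injective.comp hφ) (fun _ => heS _) hcol)
  · exact .inr (hasBergeCopy_of_injOn hD hinj (e.injective.comp hφ) (fun _ => heS _) hcol)

/-- Cover Ramsey upper bound: if `s` has the Ramsey property for `(G₁, G₂)` and
`n ≥ (k³/12)·s³`, then every 2-colored covering `[k]`-uniform hypergraph on `n`
vertices contains a blue Berge-`G₁` or a red Berge-`G₂`. -/
theorem cover_ramsey_upper_bound
    {α₁ α₂ : Type*} [Fintype α₁] [Fintype α₂]
    (G₁ : SimpleGraph α₁) (G₂ : SimpleGraph α₂)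
    (hG₁ : G₁.edgeSet.Nonempty) (hG₂ : G₂.edgeSet.Nonempty)
    (k s : ℕ) (hk : 2 ≤ k) (hs : 2 ≤ s)
    (hRam : ∀ χ : Sym2 (Fin s) → Bool,
      (∃ φ : α₁ → Fin s, Function.Injective φ ∧
        ∀ u v, G₁.Adj u v → χ s(φ u, φ v) = true) ∨
      (∃ φ : α₂ → Fin s, Function.Injective φ ∧
        ∀ u v, G₂.Adj u v → χ s(φ u, φ v) = false))
    (n : ℕ) (hn : ((k : ℝ) ^ 3 / 12) * (s : ℝ) ^ 3 ≤ (n : ℝ))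
    (H : Finset (Finset (Fin n)))
    (hunif : ∀ h ∈ H, 1 ≤ h.card ∧ h.card ≤ k)
    (hcov : ∀ u v : Fin n, u ≠ v → ∃ h ∈ H, u ∈ h ∧ v ∈ h)
    (col : Finset (Fin n) → Bool) :
    HasBergeCopy G₁ H (fun h => col h = true) ∨
      HasBergeCopy G₂ H (fun h => col h = false) :=
  cover_ramsey_upper_bound_general G₁ G₂ k s hk hRam n hn H hunif hcov col
end

section
/- For all positive integers d and k there exists a constant c = c(d,k) such that the following holds: if G is a simple graph on n vertices with maximum degree at most d, then every covering [k]-uniform hypergraph H on at least c·n vertices, with any 2-edge-coloring of its edges, contains a monochromatic Berge copy of G. In particular, R̂^[k](BG, BG) ≤ c·n. -/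
open Finset
open scoped Classical


section Prelim
variable {α : Type*} [DecidableEq α]

/-- Trimming with average control: one can pick an `r`-subset whose `f`-sum is
proportionally small. -/
lemma exists_trim (S : Finset α) (f : α → ℕ) :
    ∀ r : ℕ, r ≤ S.card → ∃ S' ⊆ S, S'.card = r ∧
      S.card * (∑ v ∈ S', f v) ≤ r * (∑ v ∈ S, f v) := by
  induction S using Finset.strongInduction with
  | _ S ih =>
    intro r hr
    rcases Nat.eq_zero_or_pos r with h0 | hrpos
    · exact ⟨∅, empty_subset _, by simp [h0]⟩
    rcases eq_or_lt_of_le hr with heq | hlt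
    · exact ⟨S, Subset.rfl, heq.symm, by rw [heq]⟩
    have hSne : S.Nonempty := by
      rw [← Finset.card_pos]; omega
    obtain ⟨x, hxS, hxmax⟩ := Finset.exists_max_image S f hSne
    have hsum : (∑ v ∈ S, f v) ≤ S.card * f x := by
      calc (∑ v ∈ S, f v) ≤ ∑ _v ∈ S, f x := Finset.sum_le_sum (fun v hv => hxmax v hv)
      _ = S.card * f x := by rw [Finset.sum_const, smul_eq_mul]
    have hcard' : (S.erase x).card = S.card - 1 := Finset.card_erase_of_mem hxS
    have hr' : r ≤ (S.erase x).card := by omega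
    obtain ⟨S', hS'sub, hS'card, hS'sum⟩ := ih (S.erase x) (Finset.erase_ssubset hxS) r hr'
    refine ⟨S', hS'sub.trans (Finset.erase_subset _ _), hS'card, ?_⟩
    have hsplit : (∑ v ∈ S, f v) = (∑ v ∈ S.erase x, f v) + f x := by
      rw [Finset.sum_erase_add _ _ hxS]
    have h1 : S.card * (∑ v ∈ S.erase x, f v) + (∑ v ∈ S, f v)
        ≤ S.card * (∑ v ∈ S, f v) := by
      calc S.card * (∑ v ∈ S.erase x, f v) + (∑ v ∈ S, f v)
          ≤ S.card * (∑ v ∈ S.erase x, f v) + S.card * f x := by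
            exact Nat.add_le_add_left hsum _
        _ = S.card * (∑ v ∈ S, f v) := by rw [hsplit]; ring
    have hexp : (S.card - 1) * (∑ v ∈ S, f v)
        = S.card * (∑ v ∈ S, f v) - (∑ v ∈ S, f v) := by
      rw [Nat.sub_mul, one_mul]
    have key : S.card * (∑ v ∈ S.erase x, f v) ≤ (S.card - 1) * (∑ v ∈ S, f v) := by
      omega
    have hSm1pos : 0 < S.card - 1 := by omega
    have final : (S.card - 1) * (S.card * (∑ v ∈ S', f v))
        ≤ (S.card - 1) * (r * (∑ v ∈ S, f v)) := by
      calc (S.card - 1) * (S.card * (∑ v ∈ S', f v))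
          = S.card * ((S.card - 1) * (∑ v ∈ S', f v)) := by ring
        _ ≤ S.card * (r * (∑ v ∈ S.erase x, f v)) := by
            apply Nat.mul_le_mul_left
            calc (S.card - 1) * (∑ v ∈ S', f v) = (S.erase x).card * (∑ v ∈ S', f v) := by
                  rw [hcard']
              _ ≤ r * (∑ v ∈ S.erase x, f v) := hS'sum
        _ = r * (S.card * (∑ v ∈ S.erase x, f v)) := by ring
        _ ≤ r * ((S.card - 1) * (∑ v ∈ S, f v)) := Nat.mul_le_mul_left _ key
        _ = (S.card - 1) * (r * (∑ v ∈ S, f v)) := by ring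
    exact Nat.le_of_mul_le_mul_left final hSm1pos

/-- Splitting a finset into `t` disjoint parts of exact size `c`. -/
lemma exists_split (t c : ℕ) : ∀ (W : Finset α), t * c ≤ W.card →
    ∃ P : Fin t → Finset α, (∀ i, P i ⊆ W ∧ (P i).card = c) ∧
      ∀ i j, i ≠ j → Disjoint (P i) (P j) := by
  induction t with
  | zero => intro W _; exact ⟨fun i => i.elim0, fun i => i.elim0, fun i => i.elim0⟩
  | succ t ih =>
    intro W hW
    have hc : c ≤ W.card := by
      have : (t+1)*c = t*c + c := by ring
      omega
    obtain ⟨S, hSW, hScard⟩ := Finset.exists_subset_card_eq hc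
    have h2 : t * c ≤ (W \ S).card := by
      have hsd : (W \ S).card = W.card - c := by
        rw [Finset.card_sdiff_of_subset hSW, hScard]
      have : (t+1)*c = t*c + c := by ring
      omega
    obtain ⟨P', hP', hP'd⟩ := ih (W \ S) h2
    refine ⟨Fin.cons S P', ?_, ?_⟩
    · intro i
      induction i using Fin.cases with
      | zero => simpa using ⟨hSW, hScard⟩
      | succ i' =>
        simp only [Fin.cons_succ]
        exact ⟨(hP' i').1.trans (Finset.sdiff_subset), (hP' i').2⟩
    · intro i j hij
      induction i using Fin.cases with
      | zero =>
        induction j using Fin.cases with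
        | zero => exact absurd rfl hij
        | succ j' =>
          simp only [Fin.cons_zero, Fin.cons_succ]
          exact (Finset.disjoint_sdiff.mono_right (hP' j').1)
      | succ i' =>
        induction j using Fin.cases with
        | zero =>
          simp only [Fin.cons_zero, Fin.cons_succ]
          exact (Finset.disjoint_sdiff.mono_right (hP' i').1).symm
        | succ j' =>
          simp only [Fin.cons_succ]
          have : i' ≠ j' := fun h => hij (by rw [h])
          exact hP'd i' j' this

omit [DecidableEq α] in
/-- Markov-type bound for filters. -/
lemma markov_filter (S : Finset α) (f : α → ℕ) (θ : ℕ) :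
    (S.filter (fun v => θ < f v)).card * (θ + 1) ≤ ∑ v ∈ S, f v := by
  classical
  calc (S.filter (fun v => θ < f v)).card * (θ + 1)
      = ∑ _v ∈ S.filter (fun v => θ < f v), (θ + 1) := by
        rw [Finset.sum_const, smul_eq_mul]
    _ ≤ ∑ v ∈ S.filter (fun v => θ < f v), f v := by
        apply Finset.sum_le_sum; intro v hv
        exact (Finset.mem_filter.mp hv).2
    _ ≤ ∑ v ∈ S, f v := Finset.sum_le_sum_of_subset (Finset.filter_subset _ _)

omit [DecidableEq α] in
/-- Double counting of cross pairs. -/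
lemma cross_comm (S T : Finset α) (R : α → α → Prop) [∀ a b, Decidable (R a b)] :
    ∑ v ∈ S, (T.filter (fun w => R v w)).card
      = ∑ w ∈ T, (S.filter (fun v => R v w)).card := by
  simp only [Finset.card_filter]
  exact Finset.sum_comm

end Prelim


section Coloring
variable {n d : ℕ}

/-- Greedy proper coloring with `d+1` colors for graphs with max degree `≤ d`. -/
lemma exists_proper_coloring (G : SimpleGraph (Fin n))
    (hd : ∀ v : Fin n, ((Finset.univ.filter (fun w => G.Adj v w)).card ≤ d)) :
    ∃ φ : Fin n → Fin (d+1), ∀ u v, G.Adj u v → φ u ≠ φ v := by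
  classical
  suffices h : ∀ i : ℕ, i ≤ n → ∃ φ : Fin n → Fin (d+1),
      ∀ u v : Fin n, u.val < i → v.val < i → G.Adj u v → φ u ≠ φ v by
    obtain ⟨φ, hφ⟩ := h n le_rfl
    exact ⟨φ, fun u v huv => hφ u v u.isLt v.isLt huv⟩
  intro i
  induction i with
  | zero => exact fun _ => ⟨fun _ => 0, fun u v h1 => by omega⟩
  | succ i ih =>
    intro hin
    obtain ⟨φ, hφ⟩ := ih (by omega)
    set v₀ : Fin n := ⟨i, by omega⟩ with hv₀
    set E : Finset (Fin n) := Finset.univ.filter (fun u => u.val < i ∧ G.Adj v₀ u) with hE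
    have hEcard : (E.image φ).card < (Finset.univ : Finset (Fin (d+1))).card := by
      calc (E.image φ).card ≤ E.card := Finset.card_image_le
        _ ≤ (Finset.univ.filter (fun w => G.Adj v₀ w)).card := by
            apply Finset.card_le_card
            intro u hu
            simp only [hE, Finset.mem_filter] at hu ⊢
            exact ⟨hu.1, hu.2.2⟩
        _ ≤ d := hd v₀
        _ < d + 1 := Nat.lt_succ_self d
        _ = (Finset.univ : Finset (Fin (d+1))).card := by simp
    have hss : E.image φ ⊂ Finset.univ := Finset.ssubset_univ_iff.mpr
      (fun h => by rw [h] at hEcard; exact lt_irrefl _ hEcard)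
    obtain ⟨c, -, hc⟩ := Finset.exists_of_ssubset hss
    refine ⟨Function.update φ v₀ c, ?_⟩
    have hmem : ∀ v : Fin n, v.val < i → G.Adj v₀ v → φ v ∈ E.image φ := by
      intro v hvi hadj
      apply Finset.mem_image_of_mem
      simp only [hE, Finset.mem_filter]
      exact ⟨Finset.mem_univ _, hvi, hadj⟩
    have hlt : ∀ v : Fin n, v.val < i + 1 → v ≠ v₀ → v.val < i := by
      intro v hv hne
      rcases Nat.lt_succ_iff_lt_or_eq.mp hv with h | h
      · exact h
      · exact absurd (Fin.ext h : v = v₀) hne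
    intro u v hu hv huv
    by_cases hu0 : u = v₀ <;> by_cases hv0 : v = v₀
    · exact absurd (hu0 ▸ hv0 ▸ huv) (G.irrefl)
    · rw [hu0, Function.update_self, Function.update_of_ne hv0]
      intro hEq
      exact hc (hEq ▸ hmem v (hlt v hv hv0) (hu0 ▸ huv))
    · rw [hv0, Function.update_self, Function.update_of_ne hu0]
      intro hEq
      exact hc (hEq ▸ hmem u (hlt u hu hu0) (hv0 ▸ huv).symm)
    · rw [Function.update_of_ne hu0, Function.update_of_ne hv0]
      exact hφ u v (hlt u hu hu0) (hlt v hv hv0) huv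

end Coloring


noncomputable section EmbedDefs

def opts {V : Type*} [DecidableEq V] (H : Finset (Finset V)) (col : Finset V → Bool)
    (b : Bool) (a x : V) : Finset (Finset V) := H.filter fun h => col h = b ∧ a ∈ h ∧ x ∈ h

def Bad2 {V : Type*} [DecidableEq V] (V₀ : Finset V) (H : Finset (Finset V))
    (col : Finset V → Bool) (b : Bool) (D : ℕ) (a z : V) : Finset V :=
  V₀.filter fun x => (opts H col b a x).card < D ∧ ∃ h ∈ opts H col b a x, z ∈ h

variable {N n t : ℕ}

def bdeg (G : SimpleGraph (Fin n)) (i : ℕ) (w : Fin n) : ℕ :=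
  (Finset.univ.filter (fun u : Fin n => u.val < i ∧ G.Adj u w)).card

def cand (G : SimpleGraph (Fin n)) (A : Fin N → Fin N → Prop)
    (P : Fin t → Finset (Fin N)) (φ : Fin n → Fin t)
    (i : ℕ) (y : Fin n → Fin N) (w : Fin n) : Finset (Fin N) :=
  (P (φ w)).filter (fun x => ∀ u : Fin n, u.val < i → G.Adj u w → A (y u) x)

def usedPairs (G : SimpleGraph (Fin n)) (i : ℕ) : Finset (Fin n × Fin n) :=
  (Finset.univ ×ˢ Finset.univ).filter
    (fun uv => uv.1.val < i ∧ uv.2.val < i ∧ G.Adj uv.1 uv.2)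

def usedU (G : SimpleGraph (Fin n)) (i : ℕ) (Fn : Fin n → Fin n → Finset (Fin N)) :
    Finset (Fin N) :=
  (usedPairs G i).biUnion (fun uv => Fn uv.1 uv.2)

def usedImg (G : SimpleGraph (Fin n)) (i : ℕ) (Fn : Fin n → Fin n → Finset (Fin N)) :
    Finset (Finset (Fin N)) :=
  (usedPairs G i).image (fun uv => Fn uv.1 uv.2)

lemma usedPairs_card_le (G : SimpleGraph (Fin n)) (i : ℕ) (d : ℕ)
    (hdeg : ∀ v : Fin n, ((Finset.univ.filter (fun w => G.Adj v w)).card ≤ d)) :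
    (usedPairs G i).card ≤ n * d := by
  have hsub : usedPairs G i ⊆ Finset.univ.biUnion
      (fun u : Fin n => ({u} : Finset (Fin n)) ×ˢ (Finset.univ.filter (fun w => G.Adj u w))) := by
    intro uv huv
    simp only [usedPairs, Finset.mem_filter, Finset.mem_product] at huv
    apply Finset.mem_biUnion.mpr
    refine ⟨uv.1, Finset.mem_univ _, ?_⟩
    refine Finset.mem_product.mpr ⟨Finset.mem_singleton_self _, ?_⟩
    exact Finset.mem_filter.mpr ⟨Finset.mem_univ _, huv.2.2.2⟩
  calc (usedPairs G i).card
      ≤ (Finset.univ.biUnion (fun u : Fin n => ({u} : Finset (Fin n)) ×ˢ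
          (Finset.univ.filter (fun w => G.Adj u w)))).card := Finset.card_le_card hsub
    _ ≤ ∑ u : Fin n, (({u} : Finset (Fin n)) ×ˢ
          (Finset.univ.filter (fun w => G.Adj u w))).card := Finset.card_biUnion_le
    _ ≤ ∑ _u : Fin n, d := by
        apply Finset.sum_le_sum
        intro u _
        rw [Finset.card_product, Finset.card_singleton, one_mul]
        exact hdeg u
    _ = n * d := by simp [Finset.sum_const, Finset.card_univ]

end EmbedDefs

section Hyper
variable {V : Type*} [DecidableEq V]

lemma bad2_sum_le (V₀ : Finset V) (H : Finset (Finset V)) (col : Finset V → Bool)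
    (b : Bool) (D k : ℕ) (hk : ∀ h ∈ H, h.card ≤ k) (a : V) :
    ∑ z ∈ V₀, (Bad2 V₀ H col b D a z).card ≤ V₀.card * (D * k) := by
  have hswap : ∑ z ∈ V₀, (Bad2 V₀ H col b D a z).card
      = ∑ x ∈ V₀, (V₀.filter (fun z =>
          (opts H col b a x).card < D ∧ ∃ h ∈ opts H col b a x, z ∈ h)).card := by
    unfold Bad2
    simp only [Finset.card_filter]
    exact Finset.sum_comm
  rw [hswap]
  have hbound : ∀ x ∈ V₀, (V₀.filter (fun z =>
      (opts H col b a x).card < D ∧ ∃ h ∈ opts H col b a x, z ∈ h)).card ≤ D * k := by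
    intro x _
    by_cases hthin : (opts H col b a x).card < D
    · calc (V₀.filter (fun z =>
          (opts H col b a x).card < D ∧ ∃ h ∈ opts H col b a x, z ∈ h)).card
          ≤ ((opts H col b a x).biUnion (fun h => h)).card := by
            apply Finset.card_le_card
            intro z hz
            obtain ⟨-, -, h, hh, hzh⟩ := Finset.mem_filter.mp hz
            exact Finset.mem_biUnion.mpr ⟨h, hh, hzh⟩
        _ ≤ ∑ h ∈ opts H col b a x, h.card := Finset.card_biUnion_le
        _ ≤ ∑ _h ∈ opts H col b a x, k := by
            apply Finset.sum_le_sum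
            intro h hh
            exact hk h (Finset.mem_filter.mp hh).1
        _ = (opts H col b a x).card * k := by rw [Finset.sum_const, smul_eq_mul]
        _ ≤ D * k := Nat.mul_le_mul_right _ (le_of_lt hthin)
    · have : (V₀.filter (fun z =>
          (opts H col b a x).card < D ∧ ∃ h ∈ opts H col b a x, z ∈ h)) = ∅ := by
        apply Finset.filter_false_of_mem
        intro z _ hz
        exact hthin hz.1
      rw [this]; simp
  calc ∑ x ∈ V₀, (V₀.filter (fun z =>
      (opts H col b a x).card < D ∧ ∃ h ∈ opts H col b a x, z ∈ h)).card
      ≤ ∑ _x ∈ V₀, D * k := Finset.sum_le_sum hbound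
    _ = V₀.card * (D * k) := by rw [Finset.sum_const, smul_eq_mul]

end Hyper


noncomputable section Assign

variable {N n : ℕ}

/-- Greedy assignment of fresh, pairwise-distinct `b`-colored hyperedges to the new
edges created by embedding `x`, processing back-neighbours in decreasing order. -/
lemma assign (V₀ : Finset (Fin N)) (H : Finset (Finset (Fin N)))
    (col : Finset (Fin N) → Bool) (b : Bool) (D : ℕ)
    (x : Fin N) (hxV : x ∈ V₀) (y : Fin n → Fin N) (Bk : Finset (Fin n))
    (hthin : ∀ u ∈ Bk, ∀ u' ∈ Bk, u.val < u'.val →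
      x ∉ Bad2 V₀ H col b D (y u) (y u'))
    (hopts : ∀ u ∈ Bk, (opts H col b (y u) x).Nonempty) :
    ∀ (S : Finset (Fin n)), S ⊆ Bk →
    ∀ (Fprev : Finset (Finset (Fin N))),
      Fprev.card + S.card < D →
      (∀ f ∈ Fprev, x ∈ f → ∃ u' ∈ Bk, u' ∉ S ∧ (∀ u ∈ S, u.val < u'.val) ∧
          f ∈ opts H col b (y u') x) →
      ∃ g : Fin n → Finset (Fin N),
        (∀ u ∈ S, g u ∈ opts H col b (y u) x ∧ g u ∉ Fprev) ∧
        (∀ u ∈ S, ∀ u' ∈ S, u ≠ u' → g u ≠ g u') := by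
  intro S
  induction S using Finset.strongInduction with
  | _ S ih =>
  intro hSBk Fprev hcard hFx
  rcases S.eq_empty_or_nonempty with rfl | hSne
  · exact ⟨fun _ => ∅, fun u hu => absurd hu (Finset.notMem_empty u), fun u hu => absurd hu (Finset.notMem_empty u)⟩
  set u₀ := S.max' hSne with hu₀
  have hu₀S : u₀ ∈ S := S.max'_mem hSne
  have hu₀Bk : u₀ ∈ Bk := hSBk hu₀S
  -- find a fresh hyperedge for the pair (y u₀, x)
  have hfresh : ∃ h ∈ opts H col b (y u₀) x, h ∉ Fprev := by
    by_cases hth : (opts H col b (y u₀) x).card < D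
    · obtain ⟨h, hh⟩ := hopts u₀ hu₀Bk
      refine ⟨h, hh, ?_⟩
      intro hmem
      have hxh : x ∈ h := ((Finset.mem_filter.mp hh).2).2.2
      obtain ⟨u', hu'Bk, hu'S, hvals, hu'opts⟩ := hFx h hmem hxh
      have hlt : u₀.val < u'.val := hvals u₀ hu₀S
      apply hthin u₀ hu₀Bk u' hu'Bk hlt
      refine Finset.mem_filter.mpr ⟨hxV, hth, h, hh, ?_⟩
      exact ((Finset.mem_filter.mp hu'opts).2).2.1
    · push_neg at hth
      have hlt : Fprev.card < (opts H col b (y u₀) x).card := by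
        have : 0 < S.card := Finset.card_pos.mpr hSne
        omega
      have hss : (opts H col b (y u₀) x) ∩ Fprev ⊂ opts H col b (y u₀) x := by
        refine Finset.ssubset_iff_subset_ne.mpr ⟨Finset.inter_subset_left, ?_⟩
        intro heq
        have h1 : (opts H col b (y u₀) x).card ≤ Fprev.card := by
          calc (opts H col b (y u₀) x).card = ((opts H col b (y u₀) x) ∩ Fprev).card := by
                rw [heq]
            _ ≤ Fprev.card := Finset.card_le_card (Finset.inter_subset_right)
        omega
      obtain ⟨h, hh, hnot⟩ := Finset.exists_of_ssubset hss
      exact ⟨h, hh, fun hc => hnot (Finset.mem_inter.mpr ⟨hh, hc⟩)⟩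
  obtain ⟨h₀, hh₀, hh₀F⟩ := hfresh
  -- recurse on S ∖ {u₀}
  have hSS : S.erase u₀ ⊂ S := Finset.erase_ssubset hu₀S
  have hsub' : S.erase u₀ ⊆ Bk := (Finset.erase_subset _ _).trans hSBk
  have hcard' : (insert h₀ Fprev).card + (S.erase u₀).card < D := by
    have h1 : (insert h₀ Fprev).card ≤ Fprev.card + 1 := Finset.card_insert_le _ _
    have h2 : (S.erase u₀).card = S.card - 1 := Finset.card_erase_of_mem hu₀S
    have h3 : 0 < S.card := Finset.card_pos.mpr hSne
    omega
  have hFx' : ∀ f ∈ insert h₀ Fprev, x ∈ f → ∃ u' ∈ Bk, u' ∉ S.erase u₀ ∧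
      (∀ u ∈ S.erase u₀, u.val < u'.val) ∧ f ∈ opts H col b (y u') x := by
    intro f hf hxf
    rcases Finset.mem_insert.mp hf with rfl | hfold
    · refine ⟨u₀, hu₀Bk, Finset.notMem_erase _ _, ?_, hh₀⟩
      intro u hu
      have huS := Finset.mem_of_mem_erase hu
      have hne := Finset.ne_of_mem_erase hu
      have hle : u ≤ u₀ := S.le_max' u huS
      exact Fin.lt_iff_val_lt_val.mp (lt_of_le_of_ne hle hne)
    · obtain ⟨u', h1, h2, h3, h4⟩ := hFx f hfold hxf
      exact ⟨u', h1, fun hc => h2 (Finset.mem_of_mem_erase hc),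
        fun u hu => h3 u (Finset.mem_of_mem_erase hu), h4⟩
  obtain ⟨g, hg1, hg2⟩ := ih (S.erase u₀) hSS hsub' (insert h₀ Fprev) hcard' hFx'
  refine ⟨Function.update g u₀ h₀, ?_, ?_⟩
  · intro u hu
    by_cases hueq : u = u₀
    · rw [hueq, Function.update_self]
      exact ⟨hh₀, hh₀F⟩
    · rw [Function.update_of_ne hueq]
      have hu' : u ∈ S.erase u₀ := Finset.mem_erase.mpr ⟨hueq, hu⟩
      exact ⟨(hg1 u hu').1, fun hc => (hg1 u hu').2 (Finset.mem_insert_of_mem hc)⟩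
  · intro u hu u' hu' hne
    by_cases hueq : u = u₀ <;> by_cases hueq' : u' = u₀
    · exact absurd (hueq.trans hueq'.symm) hne
    · rw [hueq, Function.update_self, Function.update_of_ne hueq']
      have hmem : u' ∈ S.erase u₀ := Finset.mem_erase.mpr ⟨hueq', hu'⟩
      intro hEq
      exact (hg1 u' hmem).2 (hEq ▸ Finset.mem_insert_self _ _)
    · rw [hueq', Function.update_self, Function.update_of_ne hueq]
      have hmem : u ∈ S.erase u₀ := Finset.mem_erase.mpr ⟨hueq, hu⟩
      intro hEq
      exact (hg1 u hmem).2 (hEq.symm ▸ Finset.mem_insert_self _ _)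
    · rw [Function.update_of_ne hueq, Function.update_of_ne hueq']
      exact hg2 u (Finset.mem_erase.mpr ⟨hueq, hu⟩) u' (Finset.mem_erase.mpr ⟨hueq', hu'⟩) hne

end Assign

noncomputable section EmbedCore
variable {N n t : ℕ}

lemma pow_amp {p q m₀ X c d : ℕ} (hp : 1 ≤ p) (hpq : p ≤ q) (hcd : c ≤ d)
    (h : p ^ c * m₀ ≤ q ^ c * X) : p ^ d * m₀ ≤ q ^ d * X := by
  have h1 : p ^ d = p ^ (d - c) * p ^ c := by rw [← pow_add]; congr 1; omega
  have h2 : q ^ d = q ^ (d - c) * q ^ c := by rw [← pow_add]; congr 1; omega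
  calc p ^ d * m₀ = p ^ (d - c) * (p ^ c * m₀) := by rw [h1]; ring
    _ ≤ p ^ (d - c) * (q ^ c * X) := Nat.mul_le_mul_left _ h
    _ ≤ q ^ (d - c) * (q ^ c * X) :=
        Nat.mul_le_mul_right _ (Nat.pow_le_pow_left hpq _)
    _ = q ^ d * X := by rw [h2]; ring

end EmbedCore

noncomputable section EmbedMain
variable {N n t : ℕ}

def EmbInv (G : SimpleGraph (Fin n)) (V₀ : Finset (Fin N)) (H : Finset (Finset (Fin N)))
    (col : Finset (Fin N) → Bool) (b : Bool) (A : Fin N → Fin N → Prop)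
    (P : Fin t → Finset (Fin N)) (φ : Fin n → Fin t)
    (D p q m₀ τ : ℕ) (i : ℕ) (y : Fin n → Fin N)
    (Fn : Fin n → Fin n → Finset (Fin N)) : Prop :=
  (∀ u v : Fin n, u.val < i → v.val < i → y u = y v → u = v) ∧
  (∀ v : Fin n, v.val < i → y v ∈ P (φ v)) ∧
  (∀ u v : Fin n, u.val < i → v.val < i → G.Adj u v →
      Fn u v ∈ H ∧ col (Fn u v) = b ∧ y u ∈ Fn u v ∧ y v ∈ Fn u v) ∧
  (∀ u v : Fin n, Fn u v = Fn v u) ∧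
  (∀ u v u' v' : Fin n, u.val < i → v.val < i → u'.val < i → v'.val < i →
      G.Adj u v → G.Adj u' v' → Fn u v = Fn u' v' →
      (u = u' ∧ v = v') ∨ (u = v' ∧ v = u')) ∧
  (∀ w : Fin n, i ≤ w.val →
      p ^ bdeg G i w * m₀ ≤ q ^ bdeg G i w * (cand G A P φ i y w).card) ∧
  (∀ u v : Fin n, u.val < v.val → v.val < i →
      (∃ w : Fin n, i ≤ w.val ∧ G.Adj u w ∧ G.Adj v w) →
      (Bad2 V₀ H col b D (y u) (y v)).card ≤ τ)

lemma embed_step (G : SimpleGraph (Fin n)) (V₀ : Finset (Fin N)) (H : Finset (Finset (Fin N)))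
    (col : Finset (Fin N) → Bool) (b : Bool) (A : Fin N → Fin N → Prop)
    (P : Fin t → Finset (Fin N)) (φ : Fin n → Fin t)
    (d k D p q m₀ κB κC τ σ : ℕ)
    (hdeg : ∀ v : Fin n, (Finset.univ.filter (fun w => G.Adj v w)).card ≤ d)
    (hk : ∀ h ∈ H, h.card ≤ k)
    (hA : ∀ a x : Fin N, A a x → a ≠ x ∧ ∃ h ∈ H, col h = b ∧ a ∈ h ∧ x ∈ h)
    (hPV : ∀ j, P j ⊆ V₀)
    (hφ : ∀ u v, G.Adj u v → φ u ≠ φ v)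
    (hp : 1 ≤ p) (hpq : p ≤ q)
    (hHP2 : ∀ a c : Fin t, a ≠ c → ∀ C ⊆ P c, κC ≤ C.card → ∀ B ⊆ P a,
        (∀ x ∈ B, q * (C.filter (fun z => A x z)).card < p * C.card) → B.card < κB)
    (hD : d * n + d + 2 ≤ D)
    (hτσ : V₀.card * (D * k) ≤ τ * σ)
    (hHS : q ^ d * (n + d * n * k + d * d * τ + d * d * σ + d * κB + κC + 2) ≤ p ^ d * m₀)
    (i : ℕ) (hi : i < n) (y : Fin n → Fin N) (Fn : Fin n → Fin n → Finset (Fin N))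
    (hInv : EmbInv G V₀ H col b A P φ D p q m₀ τ i y Fn) :
    ∃ y' Fn', EmbInv G V₀ H col b A P φ D p q m₀ τ (i+1) y' Fn' := by
  obtain ⟨hinj, hmem, hedge, hsymm, hfinj, hcnd, hlook⟩ := hInv
  have hqpos : 0 < q := lt_of_lt_of_le hp hpq
  set v₀ : Fin n := ⟨i, hi⟩ with hv₀def
  have hv₀val : v₀.val = i := rfl
  have hlt_succ : ∀ u : Fin n, u.val < i + 1 → u ≠ v₀ → u.val < i := by
    intro u hu hne
    rcases Nat.lt_succ_iff_lt_or_eq.mp hu with h | h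
    · exact h
    · exact absurd (Fin.ext h) hne
  have hlt_ne : ∀ u : Fin n, u.val < i → u ≠ v₀ := by
    intro u hu h
    rw [h] at hu
    omega
  have hbdeg_le : ∀ (j : ℕ) (w : Fin n), bdeg G j w ≤ d := by
    intro j w
    unfold bdeg
    calc (Finset.univ.filter (fun u : Fin n => u.val < j ∧ G.Adj u w)).card
        ≤ (Finset.univ.filter (fun u : Fin n => G.Adj w u)).card := by
          apply Finset.card_le_card
          intro u hu
          simp only [Finset.mem_filter] at hu ⊢
          exact ⟨hu.1, hu.2.2.symm⟩
      _ ≤ d := hdeg w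
  have hcand_big : ∀ w : Fin n, i ≤ w.val →
      n + d * n * k + d * d * τ + d * d * σ + d * κB + κC + 2
        ≤ (cand G A P φ i y w).card := by
    intro w hw
    have h1 := pow_amp hp hpq (hbdeg_le i w) (hcnd w hw)
    have h2 : q ^ d * (n + d * n * k + d * d * τ + d * d * σ + d * κB + κC + 2)
        ≤ q ^ d * (cand G A P φ i y w).card := le_trans hHS h1
    exact Nat.le_of_mul_le_mul_left h2 (pow_pos hqpos d)
  set Bk : Finset (Fin n) :=
    Finset.univ.filter (fun u : Fin n => u.val < i ∧ G.Adj u v₀) with hBkdef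
  set Fw : Finset (Fin n) :=
    Finset.univ.filter (fun w : Fin n => i + 1 ≤ w.val ∧ G.Adj v₀ w) with hFwdef
  set LA : Finset (Fin n) := Finset.univ.filter
    (fun u : Fin n => u.val < i ∧ ∃ w : Fin n, i + 1 ≤ w.val ∧ G.Adj u w ∧ G.Adj v₀ w)
    with hLAdef
  have hBk_card : Bk.card ≤ d := by
    calc Bk.card ≤ (Finset.univ.filter (fun u : Fin n => G.Adj v₀ u)).card := by
          apply Finset.card_le_card
          intro u hu
          simp only [hBkdef, Finset.mem_filter] at hu ⊢
          exact ⟨hu.1, hu.2.2.symm⟩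
      _ ≤ d := hdeg v₀
  have hFw_card : Fw.card ≤ d := by
    calc Fw.card ≤ (Finset.univ.filter (fun w : Fin n => G.Adj v₀ w)).card := by
          apply Finset.card_le_card
          intro w hw
          simp only [hFwdef, Finset.mem_filter] at hw ⊢
          exact ⟨hw.1, hw.2.2⟩
      _ ≤ d := hdeg v₀
  have hLA_card : LA.card ≤ d * d := by
    have hsub : LA ⊆ (Finset.univ.filter (fun w : Fin n => G.Adj v₀ w)).biUnion
        (fun w => Finset.univ.filter (fun u : Fin n => G.Adj w u)) := by
      intro u hu
      simp only [hLAdef, Finset.mem_filter] at hu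
      obtain ⟨-, -, w, -, huw, hv₀w⟩ := hu
      apply Finset.mem_biUnion.mpr
      exact ⟨w, Finset.mem_filter.mpr ⟨Finset.mem_univ _, hv₀w⟩,
        Finset.mem_filter.mpr ⟨Finset.mem_univ _, huw.symm⟩⟩
    calc LA.card ≤ _ := Finset.card_le_card hsub
      _ ≤ ∑ w ∈ Finset.univ.filter (fun w : Fin n => G.Adj v₀ w),
            (Finset.univ.filter (fun u : Fin n => G.Adj w u)).card := Finset.card_biUnion_le
      _ ≤ ∑ _w ∈ Finset.univ.filter (fun w : Fin n => G.Adj v₀ w), d :=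
          Finset.sum_le_sum (fun w _ => hdeg w)
      _ = (Finset.univ.filter (fun w : Fin n => G.Adj v₀ w)).card * d := by
          rw [Finset.sum_const, smul_eq_mul]
      _ ≤ d * d := Nat.mul_le_mul_right _ (hdeg v₀)
  -- exclusion sets
  set X1 : Finset (Fin N) := (Finset.univ.filter (fun u : Fin n => u.val < i)).image y
    with hX1def
  set X2 : Finset (Fin N) := usedU G i Fn with hX2def
  set PR : Finset (Fin n × Fin n) := (Bk ×ˢ Bk).filter (fun uu => uu.1.val < uu.2.val)
    with hPRdef
  set X3 : Finset (Fin N) := PR.biUnion (fun uu => Bad2 V₀ H col b D (y uu.1) (y uu.2))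
    with hX3def
  set X4 : Finset (Fin N) := LA.biUnion
    (fun u => V₀.filter (fun z => τ < (Bad2 V₀ H col b D (y u) z).card)) with hX4def
  set X5 : Finset (Fin N) := Fw.biUnion (fun w => (P (φ v₀)).filter
      (fun x => q * ((cand G A P φ i y w).filter (fun z => A x z)).card
          < p * (cand G A P φ i y w).card)) with hX5def
  have hX1card : X1.card ≤ n := by
    calc X1.card ≤ (Finset.univ.filter (fun u : Fin n => u.val < i)).card :=
          Finset.card_image_le
      _ ≤ (Finset.univ : Finset (Fin n)).card := Finset.card_filter_le _ _
      _ = n := by simp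
  have hX2card : X2.card ≤ d * n * k := by
    calc X2.card ≤ ∑ uv ∈ usedPairs G i, (Fn uv.1 uv.2).card := Finset.card_biUnion_le
      _ ≤ ∑ _uv ∈ usedPairs G i, k := by
          apply Finset.sum_le_sum
          intro uv huv
          simp only [usedPairs, Finset.mem_filter] at huv
          exact hk _ (hedge uv.1 uv.2 huv.2.1 huv.2.2.1 huv.2.2.2).1
      _ = (usedPairs G i).card * k := by rw [Finset.sum_const, smul_eq_mul]
      _ ≤ n * d * k := Nat.mul_le_mul_right _ (usedPairs_card_le G i d hdeg)
      _ = d * n * k := by ring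
  have hPRmem : ∀ uu ∈ PR, uu.1 ∈ Bk ∧ uu.2 ∈ Bk ∧ uu.1.val < uu.2.val := by
    intro uu huu
    simp only [hPRdef, Finset.mem_filter, Finset.mem_product] at huu
    exact ⟨huu.1.1, huu.1.2, huu.2⟩
  have hX3card : X3.card ≤ d * d * τ := by
    calc X3.card ≤ ∑ uu ∈ PR, (Bad2 V₀ H col b D (y uu.1) (y uu.2)).card :=
          Finset.card_biUnion_le
      _ ≤ ∑ _uu ∈ PR, τ := by
          apply Finset.sum_le_sum
          intro uu huu
          obtain ⟨h1, h2, h3⟩ := hPRmem uu huu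
          simp only [hBkdef, Finset.mem_filter] at h1 h2
          exact hlook uu.1 uu.2 h3 h2.2.1 ⟨v₀, le_of_eq hv₀val.symm, h1.2.2, h2.2.2⟩
      _ = PR.card * τ := by rw [Finset.sum_const, smul_eq_mul]
      _ ≤ (d * d) * τ := by
          apply Nat.mul_le_mul_right
          calc PR.card ≤ (Bk ×ˢ Bk).card := Finset.card_filter_le _ _
            _ = Bk.card * Bk.card := Finset.card_product _ _
            _ ≤ d * d := Nat.mul_le_mul hBk_card hBk_card
  have hX4card : X4.card ≤ d * d * σ := by
    have hinner : ∀ u : Fin n,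
        (V₀.filter (fun z => τ < (Bad2 V₀ H col b D (y u) z).card)).card ≤ σ := by
      intro u
      have hm := markov_filter V₀ (fun z => (Bad2 V₀ H col b D (y u) z).card) τ
      have hs := bad2_sum_le V₀ H col b D k hk (y u)
      have h1 : (V₀.filter (fun z => τ < (Bad2 V₀ H col b D (y u) z).card)).card * (τ + 1)
          ≤ σ * (τ + 1) := by
        calc _ ≤ ∑ z ∈ V₀, (Bad2 V₀ H col b D (y u) z).card := hm
          _ ≤ V₀.card * (D * k) := hs
          _ ≤ τ * σ := hτσ
          _ ≤ σ * (τ + 1) := by nlinarith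
      exact Nat.le_of_mul_le_mul_right h1 (Nat.succ_pos τ)
    calc X4.card ≤ ∑ u ∈ LA,
        (V₀.filter (fun z => τ < (Bad2 V₀ H col b D (y u) z).card)).card :=
          Finset.card_biUnion_le
      _ ≤ ∑ _u ∈ LA, σ := Finset.sum_le_sum (fun u _ => hinner u)
      _ = LA.card * σ := by rw [Finset.sum_const, smul_eq_mul]
      _ ≤ d * d * σ := Nat.mul_le_mul_right _ hLA_card
  have hX5card : X5.card ≤ d * κB := by
    have hinner : ∀ w ∈ Fw, ((P (φ v₀)).filter
        (fun x => q * ((cand G A P φ i y w).filter (fun z => A x z)).card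
            < p * (cand G A P φ i y w).card)).card ≤ κB := by
      intro w hw
      simp only [hFwdef, Finset.mem_filter] at hw
      have hwv : i ≤ w.val := le_trans (Nat.le_succ i) hw.2.1
      have hφne : φ v₀ ≠ φ w := hφ v₀ w hw.2.2
      have hCsub : cand G A P φ i y w ⊆ P (φ w) := Finset.filter_subset _ _
      have hCcard : κC ≤ (cand G A P φ i y w).card := by
        have := hcand_big w hwv
        omega
      exact le_of_lt (hHP2 (φ v₀) (φ w) hφne (cand G A P φ i y w) hCsub hCcard _
        (Finset.filter_subset _ _) (fun x hx => (Finset.mem_filter.mp hx).2))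
    calc X5.card ≤ ∑ w ∈ Fw, ((P (φ v₀)).filter
        (fun x => q * ((cand G A P φ i y w).filter (fun z => A x z)).card
            < p * (cand G A P φ i y w).card)).card := Finset.card_biUnion_le
      _ ≤ ∑ w ∈ Fw, κB := Finset.sum_le_sum hinner
      _ = Fw.card * κB := by rw [Finset.sum_const, smul_eq_mul]
      _ ≤ d * κB := Nat.mul_le_mul_right _ hFw_card
  -- choose the image x of v₀
  have hv₀le : i ≤ v₀.val := le_of_eq hv₀val.symm
  have hchoice : ∃ x, x ∈ cand G A P φ i y v₀ ∧ x ∉ X1 ∪ X2 ∪ X3 ∪ X4 ∪ X5 := by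
    have hXcard : (X1 ∪ X2 ∪ X3 ∪ X4 ∪ X5).card < (cand G A P φ i y v₀).card := by
      have hu : (X1 ∪ X2 ∪ X3 ∪ X4 ∪ X5).card
          ≤ X1.card + X2.card + X3.card + X4.card + X5.card := by
        calc (X1 ∪ X2 ∪ X3 ∪ X4 ∪ X5).card
            ≤ (X1 ∪ X2 ∪ X3 ∪ X4).card + X5.card := Finset.card_union_le _ _
          _ ≤ (X1 ∪ X2 ∪ X3).card + X4.card + X5.card := by
              have := Finset.card_union_le (X1 ∪ X2 ∪ X3) X4
              omega
          _ ≤ (X1 ∪ X2).card + X3.card + X4.card + X5.card := by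
              have := Finset.card_union_le (X1 ∪ X2) X3
              omega
          _ ≤ X1.card + X2.card + X3.card + X4.card + X5.card := by
              have := Finset.card_union_le X1 X2
              omega
      have hbig := hcand_big v₀ hv₀le
      omega
    have hns : ¬ (cand G A P φ i y v₀ ⊆ X1 ∪ X2 ∪ X3 ∪ X4 ∪ X5) := by
      intro hsub
      exact absurd (Finset.card_le_card hsub) (not_le.mpr hXcard)
    obtain ⟨x, hx1, hx2⟩ := Finset.not_subset.mp hns
    exact ⟨x, hx1, hx2⟩
  obtain ⟨x, hxcand, hxX⟩ := hchoice
  have hxP : x ∈ P (φ v₀) := Finset.filter_subset _ _ hxcand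
  have hxV : x ∈ V₀ := hPV _ hxP
  have hxA : ∀ u : Fin n, u.val < i → G.Adj u v₀ → A (y u) x :=
    (Finset.mem_filter.mp hxcand).2
  have hxX1 : x ∉ X1 := fun h => hxX (by simp [Finset.mem_union, h])
  have hxX2 : x ∉ X2 := fun h => hxX (by simp [Finset.mem_union, h])
  have hxX3 : x ∉ X3 := fun h => hxX (by simp [Finset.mem_union, h])
  have hxX4 : x ∉ X4 := fun h => hxX (by simp [Finset.mem_union, h])
  have hxX5 : x ∉ X5 := fun h => hxX (by simp [Finset.mem_union, h])
  -- assign hyperedges to the new edges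
  have hBkmem : ∀ u ∈ Bk, u.val < i ∧ G.Adj u v₀ := by
    intro u hu
    simp only [hBkdef, Finset.mem_filter] at hu
    exact hu.2
  have hthin : ∀ u ∈ Bk, ∀ u' ∈ Bk, u.val < u'.val →
      x ∉ Bad2 V₀ H col b D (y u) (y u') := by
    intro u hu u' hu' hltv hbad
    apply hxX3
    rw [hX3def]
    exact Finset.mem_biUnion.mpr ⟨(u, u'),
      Finset.mem_filter.mpr ⟨Finset.mem_product.mpr ⟨hu, hu'⟩, hltv⟩, hbad⟩
  have hopts : ∀ u ∈ Bk, (opts H col b (y u) x).Nonempty := by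
    intro u hu
    obtain ⟨h1, h2⟩ := hBkmem u hu
    obtain ⟨-, h, hHh, hcolh, hyuh, hxh⟩ := hA (y u) x (hxA u h1 h2)
    exact ⟨h, Finset.mem_filter.mpr ⟨hHh, hcolh, hyuh, hxh⟩⟩
  have hFoldcard : (usedImg G i Fn).card + Bk.card < D := by
    have h1 : (usedImg G i Fn).card ≤ (usedPairs G i).card := Finset.card_image_le
    have h2 := usedPairs_card_le G i d hdeg
    have h3 : n * d = d * n := Nat.mul_comm n d
    omega
  have hFoldx : ∀ f ∈ usedImg G i Fn, x ∈ f → False := by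
    intro f hf hxf
    apply hxX2
    rw [hX2def]
    unfold usedImg at hf
    obtain ⟨uv, huv, rfl⟩ := Finset.mem_image.mp hf
    unfold usedU
    exact Finset.mem_biUnion.mpr ⟨uv, huv, hxf⟩
  obtain ⟨g, hg1, hg2⟩ := assign V₀ H col b D x hxV y Bk hthin hopts Bk Subset.rfl
    (usedImg G i Fn) hFoldcard (fun f hf hxf => absurd hxf (fun h' => hFoldx f hf h'))
  set y' : Fin n → Fin N := Function.update y v₀ x with hy'def
  set Fn' : Fin n → Fin n → Finset (Fin N) :=
    fun u v => if u = v₀ then g v else if v = v₀ then g u else Fn u v with hFn'def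
  have hy'old : ∀ u : Fin n, u ≠ v₀ → y' u = y u := by
    intro u hu
    rw [hy'def]
    exact Function.update_of_ne hu _ _
  have hy'v₀ : y' v₀ = x := by rw [hy'def]; exact Function.update_self _ _ _
  have hFn'v₀ : ∀ v, Fn' v₀ v = g v := by intro v; rw [hFn'def]; simp
  have hFn'v₀' : ∀ u, u ≠ v₀ → Fn' u v₀ = g u := by
    intro u hu; rw [hFn'def]; simp [hu]
  have hFn'old : ∀ u v, u ≠ v₀ → v ≠ v₀ → Fn' u v = Fn u v := by
    intro u v hu hv; rw [hFn'def]; simp [hu, hv]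
  have hgood : ∀ u ∈ Bk, g u ∈ H ∧ col (g u) = b ∧ y u ∈ g u ∧ x ∈ g u ∧
      g u ∉ usedImg G i Fn := by
    intro u hu
    obtain ⟨hg_opts, hg_notF⟩ := hg1 u hu
    have hm' := Finset.mem_filter.mp hg_opts
    exact ⟨hm'.1, hm'.2.1, hm'.2.2.1, hm'.2.2.2, hg_notF⟩
  have hBk_of : ∀ u : Fin n, u.val < i → G.Adj u v₀ → u ∈ Bk := by
    intro u h1 h2; rw [hBkdef]; exact Finset.mem_filter.mpr ⟨Finset.mem_univ _, h1, h2⟩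
  have hold_mem : ∀ u v : Fin n, u.val < i → v.val < i → G.Adj u v →
      ∀ z ∈ Fn u v, z ∈ X2 := by
    intro u v h1 h2 h3 z hz
    rw [hX2def]
    unfold usedU
    refine Finset.mem_biUnion.mpr ⟨(u, v), ?_, hz⟩
    unfold usedPairs
    simp only [Finset.mem_filter, Finset.mem_product]
    exact ⟨⟨Finset.mem_univ _, Finset.mem_univ _⟩, h1, h2, h3⟩
  refine ⟨y', Fn', ?_, ?_, ?_, ?_, ?_, ?_, ?_⟩
  · -- injectivity
    intro u v hu hv hyy
    by_cases hu0 : u = v₀ <;> by_cases hv0 : v = v₀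
    · rw [hu0, hv0]
    · exfalso
      rw [hu0, hy'v₀, hy'old v hv0] at hyy
      apply hxX1
      rw [hX1def]
      exact Finset.mem_image.mpr ⟨v, Finset.mem_filter.mpr
        ⟨Finset.mem_univ _, hlt_succ v hv hv0⟩, hyy.symm⟩
    · exfalso
      rw [hv0, hy'v₀, hy'old u hu0] at hyy
      apply hxX1
      rw [hX1def]
      exact Finset.mem_image.mpr ⟨u, Finset.mem_filter.mpr
        ⟨Finset.mem_univ _, hlt_succ u hu hu0⟩, hyy⟩
    · rw [hy'old u hu0, hy'old v hv0] at hyy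
      exact hinj u v (hlt_succ u hu hu0) (hlt_succ v hv hv0) hyy
  · -- membership in parts
    intro v hv
    by_cases hv0 : v = v₀
    · rw [hv0, hy'v₀]; exact hxP
    · rw [hy'old v hv0]; exact hmem v (hlt_succ v hv hv0)
  · -- edge data
    intro u v hu hv hadj
    by_cases hu0 : u = v₀ <;> by_cases hv0 : v = v₀
    · exact absurd ((hu0.trans hv0.symm) ▸ hadj) (G.loopless.irrefl v)
    · subst hu0
      have hvBk : v ∈ Bk := hBk_of v (hlt_succ v hv hv0) hadj.symm
      obtain ⟨h1, h2, h3, h4, -⟩ := hgood v hvBk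
      rw [hFn'v₀, hy'v₀, hy'old v hv0]
      exact ⟨h1, h2, h4, h3⟩
    · subst hv0
      have huBk : u ∈ Bk := hBk_of u (hlt_succ u hu hu0) hadj
      obtain ⟨h1, h2, h3, h4, -⟩ := hgood u huBk
      rw [hFn'v₀' u hu0, hy'v₀, hy'old u hu0]
      exact ⟨h1, h2, h3, h4⟩
    · rw [hFn'old u v hu0 hv0, hy'old u hu0, hy'old v hv0]
      exact hedge u v (hlt_succ u hu hu0) (hlt_succ v hv hv0) hadj
  · -- symmetry of Fn'
    intro u v
    by_cases hu0 : u = v₀ <;> by_cases hv0 : v = v₀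
    · rw [hu0, hv0]
    · rw [hu0, hFn'v₀, hFn'v₀' v hv0]
    · rw [hv0, hFn'v₀, hFn'v₀' u hu0]
    · rw [hFn'old u v hu0 hv0, hFn'old v u hv0 hu0]; exact hsymm u v
  · -- injectivity of hyperedge assignment
    intro u v u' v' hu hv hu' hv' hadj hadj' hEq
    have hnew : ∀ a b' : Fin n, a.val < i + 1 → b'.val < i + 1 → G.Adj a b' →
        (a = v₀ ∨ b' = v₀) → ∃ w ∈ Bk, Fn' a b' = g w ∧
          ((a = v₀ ∧ b' = w) ∨ (b' = v₀ ∧ a = w)) := by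
      intro a b' ha hb hab hcase
      rcases hcase with rfl | rfl
      · have hb0 : b' ≠ v₀ := fun h' => (G.loopless.irrefl v₀) (h' ▸ hab)
        exact ⟨b', hBk_of b' (hlt_succ b' hb hb0) hab.symm, hFn'v₀ b', Or.inl ⟨rfl, rfl⟩⟩
      · have ha0 : a ≠ v₀ := fun h' => (G.loopless.irrefl v₀) (h' ▸ hab)
        exact ⟨a, hBk_of a (hlt_succ a ha ha0) hab, hFn'v₀' a ha0, Or.inr ⟨rfl, rfl⟩⟩
    by_cases hA1 : u = v₀ ∨ v = v₀ <;> by_cases hA2 : u' = v₀ ∨ v' = v₀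
    · obtain ⟨w, hwBk, hw1, hw2⟩ := hnew u v hu hv hadj hA1
      obtain ⟨w', hw'Bk, hw'1, hw'2⟩ := hnew u' v' hu' hv' hadj' hA2
      have hgww' : g w = g w' := by rw [← hw1, ← hw'1]; exact hEq
      have hww' : w = w' := by
        by_contra hne
        exact hg2 w hwBk w' hw'Bk hne hgww'
      rcases hw2 with ⟨e1, e2⟩ | ⟨e1, e2⟩ <;> rcases hw'2 with ⟨e3, e4⟩ | ⟨e3, e4⟩
      · exact Or.inl ⟨by rw [e1, e3], by rw [e2, hww', e4]⟩
      · exact Or.inr ⟨by rw [e1, e3], by rw [e2, hww', e4]⟩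
      · exact Or.inr ⟨by rw [e2, hww', e4], by rw [e1, e3]⟩
      · exact Or.inl ⟨by rw [e2, hww', e4], by rw [e1, e3]⟩
    · push_neg at hA2
      obtain ⟨w, hwBk, hw1, -⟩ := hnew u v hu hv hadj hA1
      exfalso
      have hxg : x ∈ g w := (hgood w hwBk).2.2.2.1
      have hxF : x ∈ Fn u' v' := by
        rw [← hFn'old u' v' hA2.1 hA2.2, ← hEq, hw1]; exact hxg
      exact hxX2 (hold_mem u' v' (hlt_succ u' hu' hA2.1) (hlt_succ v' hv' hA2.2)
        hadj' x hxF)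
    · push_neg at hA1
      obtain ⟨w, hwBk, hw1, -⟩ := hnew u' v' hu' hv' hadj' hA2
      exfalso
      have hxg : x ∈ g w := (hgood w hwBk).2.2.2.1
      have hxF : x ∈ Fn u v := by
        rw [← hFn'old u v hA1.1 hA1.2, hEq, hw1]; exact hxg
      exact hxX2 (hold_mem u v (hlt_succ u hu hA1.1) (hlt_succ v hv hA1.2) hadj x hxF)
    · push_neg at hA1 hA2
      rw [hFn'old u v hA1.1 hA1.2, hFn'old u' v' hA2.1 hA2.2] at hEq
      exact hfinj u v u' v' (hlt_succ u hu hA1.1) (hlt_succ v hv hA1.2)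
        (hlt_succ u' hu' hA2.1) (hlt_succ v' hv' hA2.2) hadj hadj' hEq
  · -- candidate sets
    intro w hw
    have hwv₀ : w ≠ v₀ := by
      intro h'; rw [h'] at hw; simp only [hv₀val] at hw; omega
    by_cases hadj : G.Adj v₀ w
    · have hceq : cand G A P φ (i+1) y' w
          = (cand G A P φ i y w).filter (fun z => A x z) := by
        ext z
        simp only [cand, Finset.mem_filter]
        constructor
        · rintro ⟨hzP, hz⟩
          refine ⟨⟨hzP, fun u hu hu2 => ?_⟩, ?_⟩
          · have hz' := hz u (by omega) hu2
            rwa [hy'old u (hlt_ne u hu)] at hz'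
          · have hz' := hz v₀ (by omega) hadj
            rwa [hy'v₀] at hz'
        · rintro ⟨⟨hzP, hz⟩, hzx⟩
          refine ⟨hzP, fun u hu hu2 => ?_⟩
          by_cases hu0 : u = v₀
          · rw [hu0, hy'v₀]; exact hzx
          · rw [hy'old u hu0]
            exact hz u (hlt_succ u hu hu0) hu2
      have hbeq : bdeg G (i+1) w = bdeg G i w + 1 := by
        unfold bdeg
        have hins : Finset.univ.filter (fun u : Fin n => u.val < i + 1 ∧ G.Adj u w)
            = insert v₀ (Finset.univ.filter (fun u : Fin n => u.val < i ∧ G.Adj u w)) := by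
          ext u
          simp only [Finset.mem_filter, Finset.mem_insert, Finset.mem_univ, true_and]
          constructor
          · rintro ⟨h1, h2⟩
            by_cases hu0 : u = v₀
            · exact Or.inl hu0
            · exact Or.inr ⟨hlt_succ u h1 hu0, h2⟩
          · rintro (rfl | ⟨h1, h2⟩)
            · exact ⟨by omega, hadj⟩
            · exact ⟨by omega, h2⟩
        rw [hins, Finset.card_insert_of_notMem]
        simp only [Finset.mem_filter, hv₀val]
        rintro ⟨-, h1, -⟩
        omega
      have hwFw : w ∈ Fw := by
        rw [hFwdef]; exact Finset.mem_filter.mpr ⟨Finset.mem_univ _, hw, hadj⟩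
      have hnb : ¬ (q * ((cand G A P φ i y w).filter (fun z => A x z)).card
          < p * (cand G A P φ i y w).card) := by
        intro hcon
        apply hxX5
        rw [hX5def]
        exact Finset.mem_biUnion.mpr ⟨w, hwFw, Finset.mem_filter.mpr ⟨hxP, hcon⟩⟩
      push_neg at hnb
      rw [hceq, hbeq]
      have hprev : p ^ bdeg G i w * m₀ ≤ q ^ bdeg G i w * (cand G A P φ i y w).card :=
        hcnd w (by omega)
      calc p ^ (bdeg G i w + 1) * m₀ = p * (p ^ bdeg G i w * m₀) := by ring
        _ ≤ p * (q ^ bdeg G i w * (cand G A P φ i y w).card) := Nat.mul_le_mul_left _ hprev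
        _ = q ^ bdeg G i w * (p * (cand G A P φ i y w).card) := by ring
        _ ≤ q ^ bdeg G i w * (q * ((cand G A P φ i y w).filter (fun z => A x z)).card) :=
            Nat.mul_le_mul_left _ hnb
        _ = q ^ (bdeg G i w + 1) *
            ((cand G A P φ i y w).filter (fun z => A x z)).card := by ring
    · have hceq : cand G A P φ (i+1) y' w = cand G A P φ i y w := by
        ext z
        simp only [cand, Finset.mem_filter]
        constructor
        · rintro ⟨hzP, hz⟩
          refine ⟨hzP, fun u hu hu2 => ?_⟩
          have hz' := hz u (by omega) hu2
          rwa [hy'old u (hlt_ne u hu)] at hz'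
        · rintro ⟨hzP, hz⟩
          refine ⟨hzP, fun u hu hu2 => ?_⟩
          by_cases hu0 : u = v₀
          · exact absurd (hu0 ▸ hu2) hadj
          · rw [hy'old u hu0]
            exact hz u (hlt_succ u hu hu0) hu2
      have hbeq : bdeg G (i+1) w = bdeg G i w := by
        unfold bdeg
        congr 1
        ext u
        simp only [Finset.mem_filter, Finset.mem_univ, true_and]
        constructor
        · rintro ⟨h1, h2⟩
          by_cases hu0 : u = v₀
          · exact absurd (hu0 ▸ h2) hadj
          · exact ⟨hlt_succ u h1 hu0, h2⟩
        · rintro ⟨h1, h2⟩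
          exact ⟨by omega, h2⟩
      rw [hceq, hbeq]
      exact hcnd w (by omega)
  · -- lookahead invariant
    intro u v huv hv hwit
    obtain ⟨w, hw1, hw2, hw3⟩ := hwit
    by_cases hv0 : v = v₀
    · have hu_lt : u.val < i := by
        have : v.val = i := by rw [hv0]
        omega
      have huLA : u ∈ LA := by
        rw [hLAdef]
        refine Finset.mem_filter.mpr ⟨Finset.mem_univ _, hu_lt, w, hw1, hw2, ?_⟩
        rw [← hv0]; exact hw3
      rw [hy'old u (hlt_ne u hu_lt), hv0, hy'v₀]
      by_contra hcon
      push_neg at hcon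
      apply hxX4
      rw [hX4def]
      exact Finset.mem_biUnion.mpr ⟨u, huLA, Finset.mem_filter.mpr ⟨hxV, hcon⟩⟩
    · have hv_lt : v.val < i := hlt_succ v hv hv0
      have hu_lt : u.val < i := by omega
      rw [hy'old u (hlt_ne u hu_lt), hy'old v (hlt_ne v hv_lt)]
      exact hlook u v huv hv_lt ⟨w, by omega, hw2, hw3⟩

end EmbedMain

noncomputable section EmbedFull
variable {N n t : ℕ}

lemma embed (G : SimpleGraph (Fin n)) (V₀ : Finset (Fin N)) (H : Finset (Finset (Fin N)))
    (col : Finset (Fin N) → Bool) (b : Bool) (A : Fin N → Fin N → Prop)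
    (P : Fin t → Finset (Fin N)) (φ : Fin n → Fin t)
    (d k D p q m₀ κB κC τ σ : ℕ)
    (hdeg : ∀ v : Fin n, (Finset.univ.filter (fun w => G.Adj v w)).card ≤ d)
    (hk : ∀ h ∈ H, h.card ≤ k)
    (hA : ∀ a x : Fin N, A a x → a ≠ x ∧ ∃ h ∈ H, col h = b ∧ a ∈ h ∧ x ∈ h)
    (hPV : ∀ j, P j ⊆ V₀)
    (hφ : ∀ u v, G.Adj u v → φ u ≠ φ v)
    (hp : 1 ≤ p) (hpq : p ≤ q)
    (hHP2 : ∀ a c : Fin t, a ≠ c → ∀ C ⊆ P c, κC ≤ C.card → ∀ B ⊆ P a,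
        (∀ x ∈ B, q * (C.filter (fun z => A x z)).card < p * C.card) → B.card < κB)
    (hD : d * n + d + 2 ≤ D)
    (hτσ : V₀.card * (D * k) ≤ τ * σ)
    (hHS : q ^ d * (n + d * n * k + d * d * τ + d * d * σ + d * κB + κC + 2) ≤ p ^ d * m₀)
    (hm : ∀ j, m₀ ≤ (P j).card) :
    ∃ (y : Fin n → Fin N) (f : Sym2 (Fin n) → Finset (Fin N)),
      Function.Injective y ∧ Set.InjOn f G.edgeSet ∧
      ∀ e ∈ G.edgeSet, f e ∈ H ∧ col (f e) = b ∧ ∀ v ∈ e, y v ∈ f e := by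
  have hqpos : 0 < q := lt_of_lt_of_le hp hpq
  have hm₀pos : 0 < m₀ := by
    rcases Nat.eq_zero_or_pos m₀ with h0 | h; swap
    · exact h
    exfalso
    rw [h0, Nat.mul_zero] at hHS
    have h1 : 1 ≤ q ^ d := Nat.one_le_pow _ _ hqpos
    have h2 : 1 * 2 ≤ q ^ d * (n + d * n * k + d * d * τ + d * d * σ + d * κB + κC + 2) :=
      Nat.mul_le_mul h1 (by omega)
    omega
  have hPne : ∀ j : Fin t, (P j).Nonempty :=
    fun j => Finset.card_pos.mp (lt_of_lt_of_le hm₀pos (hm j))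
  have hstage : ∀ i : ℕ, i ≤ n →
      ∃ y Fn, EmbInv G V₀ H col b A P φ D p q m₀ τ i y Fn := by
    intro i
    induction i with
    | zero =>
      intro _
      refine ⟨fun v => (hPne (φ v)).choose, fun _ _ => ∅, ?_, ?_, ?_, ?_, ?_, ?_, ?_⟩
      · intro u v hu; omega
      · intro v hv; omega
      · intro u v hu; omega
      · intro u v; rfl
      · intro u v u' v' hu; omega
      · intro w _
        have hbd : bdeg G 0 w = 0 := by
          unfold bdeg
          rw [Finset.card_eq_zero]
          apply Finset.filter_false_of_mem
          intro u _
          rintro ⟨h1, -⟩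
          omega
        have hcd : cand G A P φ 0 (fun v => (hPne (φ v)).choose) w = P (φ w) := by
          unfold cand
          apply Finset.filter_true_of_mem
          intro x _ u hu
          omega
        rw [hbd, hcd]
        simpa using hm (φ w)
      · intro u v huv hv; omega
    | succ i ih =>
      intro hin
      obtain ⟨y, Fn, hInv⟩ := ih (by omega)
      exact embed_step G V₀ H col b A P φ d k D p q m₀ κB κC τ σ hdeg hk hA hPV hφ
        hp hpq hHP2 hD hτσ hHS i (by omega) y Fn hInv
  obtain ⟨y, Fn, hinj, hmem, hedge, hsymm, hfinj, -, -⟩ := hstage n le_rfl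
  refine ⟨y, Sym2.lift ⟨Fn, hsymm⟩, ?_, ?_, ?_⟩
  · intro u v h
    exact hinj u v u.isLt v.isLt h
  · intro e1 he1 e2 he2 hf
    revert he1 he2 hf
    refine Sym2.inductionOn₂ e1 e2 ?_
    intro u v u' v' he1 he2 hf
    have hadj : G.Adj u v := he1
    have hadj' : G.Adj u' v' := he2
    simp only [Sym2.lift_mk] at hf
    rcases hfinj u v u' v' u.isLt v.isLt u'.isLt v'.isLt hadj hadj' hf with
      ⟨h1, h2⟩ | ⟨h1, h2⟩
    · rw [h1, h2]
    · rw [h1, h2, Sym2.eq_swap]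
  · intro e he
    revert he
    refine Sym2.ind ?_ e
    intro u v he
    have hadj : G.Adj u v := he
    obtain ⟨h1, h2, h3, h4⟩ := hedge u v u.isLt v.isLt hadj
    refine ⟨by simpa using h1, by simpa using h2, ?_⟩
    intro w hw
    rw [Sym2.mem_iff] at hw
    rcases hw with rfl | rfl
    · simpa using h3
    · simpa using h4

end EmbedFull

noncomputable section Chain
variable {N n : ℕ}

def ARc (He : Fin N → Fin N → Finset (Fin N)) (col : Finset (Fin N) → Bool)
    (v z : Fin N) : Prop := v ≠ z ∧ col (He v z) = true

def ABc (He : Fin N → Fin N → Finset (Fin N)) (col : Finset (Fin N) → Bool)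
    (v z : Fin N) : Prop := v ≠ z ∧ col (He v z) = false

lemma ARc_symm (He : Fin N → Fin N → Finset (Fin N)) (col : Finset (Fin N) → Bool)
    (hHesymm : ∀ u v : Fin N, u ≠ v → He u v = He v u) (v z : Fin N) :
    ARc He col v z ↔ ARc He col z v := by
  unfold ARc
  constructor
  · rintro ⟨h1, h2⟩
    exact ⟨h1.symm, by rwa [← hHesymm v z h1]⟩
  · rintro ⟨h1, h2⟩
    exact ⟨h1.symm, by rwa [hHesymm v z h1.symm]⟩

lemma ABc_symm (He : Fin N → Fin N → Finset (Fin N)) (col : Finset (Fin N) → Bool)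
    (hHesymm : ∀ u v : Fin N, u ≠ v → He u v = He v u) (v z : Fin N) :
    ABc He col v z ↔ ABc He col z v := by
  unfold ABc
  constructor
  · rintro ⟨h1, h2⟩
    exact ⟨h1.symm, by rwa [← hHesymm v z h1]⟩
  · rintro ⟨h1, h2⟩
    exact ⟨h1.symm, by rwa [hHesymm v z h1.symm]⟩

/-- On sets not containing `v`, non-blue-adjacency coincides with red-adjacency. -/
lemma filter_notAB_eq_AR (He : Fin N → Fin N → Finset (Fin N)) (col : Finset (Fin N) → Bool)
    (S : Finset (Fin N)) (v : Fin N) (hv : v ∉ S) :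
    S.filter (fun z => ¬ ABc He col v z) = S.filter (fun z => ARc He col v z) := by
  apply Finset.filter_congr
  intro z hz
  have hne : v ≠ z := fun h => hv (h ▸ hz)
  unfold ABc ARc
  constructor
  · intro h
    refine ⟨hne, ?_⟩
    by_contra hc
    have : col (He v z) = false := by
      cases hcol : col (He v z)
      · rfl
      · exact absurd hcol hc
    exact h ⟨hne, this⟩
  · rintro ⟨-, h2⟩ ⟨-, h3⟩
    rw [h2] at h3
    exact Bool.true_eq_false.mp h3 |>.elim

end Chain

noncomputable section ChainMain
variable {N n : ℕ}

lemma chain_rec (G : SimpleGraph (Fin n))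
    (V₀ : Finset (Fin N)) (H : Finset (Finset (Fin N))) (col : Finset (Fin N) → Bool)
    (He : Fin N → Fin N → Finset (Fin N))
    (hHe : ∀ u v : Fin N, u ≠ v → He u v ∈ H ∧ u ∈ He u v ∧ v ∈ He u v)
    (hHesymm : ∀ u v : Fin N, u ≠ v → He u v = He v u)
    (d k D νd mh τ σ wlow F κCb m₀b : ℕ) (mredf : ℕ → ℕ)
    (φ : Fin n → Fin (d+1)) (hφ : ∀ u v, G.Adj u v → φ u ≠ φ v)
    (hdeg : ∀ v : Fin n, (Finset.univ.filter (fun w => G.Adj v w)).card ≤ d)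
    (hk : ∀ h ∈ H, h.card ≤ k)
    (hD : d * n + d + 2 ≤ D)
    (hτσ : V₀.card * (D * k) ≤ τ * σ)
    (hmh : 2 ≤ mh)
    (hνd : 4 * (d + 1) ≤ νd)
    (hwlow : 1 ≤ wlow) (hF : 1 ≤ F)
    (hredHS : ∀ r : ℕ, r < d + 1 →
      (2 * νd ^ 4) ^ d * (n + d * n * k + d * d * τ + d * d * σ + d * mh
        + 2 * (wlow * F ^ r) + 2) ≤ 1 ^ d * mredf r)
    (hsplitOK : ∀ r : ℕ, r < d + 1 → (d + 1) * mredf r ≤ wlow * F ^ (r + 1))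
    (hblueHS : 2 ^ d * (n + d * n * k + d * d * τ + d * d * σ + d * 1 + κCb + 2)
        ≤ 1 ^ d * m₀b)
    (hκCb : 2 * mh ≤ νd * κCb)
    (hm₀b : 4 * m₀b ≤ 3 * mh) :
    ∀ (jrem j : ℕ), j + jrem = d + 1 →
    ∀ (W : Finset (Fin N)) (SS : ℕ → Finset (Fin N)),
      W ⊆ V₀ →
      wlow * F ^ jrem ≤ W.card →
      (∀ l, l < j → (SS l).card = mh ∧ SS l ⊆ V₀) →
      (∀ l, l < j → Disjoint (SS l) W) →
      (∀ l l', l < l' → l' < j → Disjoint (SS l) (SS l')) →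
      (∀ l, l < j → ∀ v ∈ W,
        νd ^ 2 * ((SS l).filter (fun z => ¬ ABc He col v z)).card ≤ mh) →
      (∀ l l', l < l' → l' < j → ∀ v ∈ SS l',
        νd ^ 2 * ((SS l).filter (fun z => ¬ ABc He col v z)).card ≤ mh) →
      ∃ (bb : Bool) (y : Fin n → Fin N) (f : Sym2 (Fin n) → Finset (Fin N)),
        Function.Injective y ∧ Set.InjOn f G.edgeSet ∧
        ∀ e ∈ G.edgeSet, f e ∈ H ∧ col (f e) = bb ∧ ∀ v ∈ e, y v ∈ f e := by
  have hνd1 : 1 ≤ νd := by omega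
  have hABc_A : ∀ a x : Fin N, ABc He col a x →
      a ≠ x ∧ ∃ h ∈ H, col h = false ∧ a ∈ h ∧ x ∈ h := by
    intro a x ⟨h1, h2⟩
    exact ⟨h1, He a x, (hHe a x h1).1, h2, (hHe a x h1).2.1, (hHe a x h1).2.2⟩
  have hARc_A : ∀ a x : Fin N, ARc He col a x →
      a ≠ x ∧ ∃ h ∈ H, col h = true ∧ a ∈ h ∧ x ∈ h := by
    intro a x ⟨h1, h2⟩
    exact ⟨h1, He a x, (hHe a x h1).1, h2, (hHe a x h1).2.1, (hHe a x h1).2.2⟩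
  intro jrem
  induction jrem with
  | zero =>
    intro j hj W SS hWV hWcard hI1 hI2 hI3 hI4 hI5
    have hjt : j = d + 1 := by omega
    subst hjt
    -- BLUE EXIT
    set PS : Fin (d+1) → Finset (Fin N) := fun l =>
      (SS l.val).filter (fun z => ∀ l' : ℕ, l.val < l' → l' < d + 1 →
        νd * ((SS l').filter (fun w => ¬ ABc He col z w)).card ≤ mh) with hPSdef
    have hPSsub : ∀ l : Fin (d+1), PS l ⊆ SS l.val := fun l => Finset.filter_subset _ _
    have hBb : ∀ (l : Fin (d+1)) (l' : ℕ), l.val < l' → l' < d + 1 →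
        νd * ((SS l.val).filter (fun z =>
          mh < νd * ((SS l').filter (fun w => ¬ ABc He col z w)).card)).card ≤ mh := by
      intro l l' hl1 hl2
      have hsum : νd ^ 2 * (∑ z ∈ SS l.val,
          ((SS l').filter (fun w => ¬ ABc He col z w)).card) ≤ mh * mh := by
        have hcc : ∑ z ∈ SS l.val, ((SS l').filter (fun w => ¬ ABc He col z w)).card
            = ∑ w ∈ SS l', ((SS l.val).filter (fun z => ¬ ABc He col z w)).card :=
          cross_comm _ _ _
        have hcg : ∀ w ∈ SS l', ((SS l.val).filter (fun z => ¬ ABc He col z w))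
            = ((SS l.val).filter (fun z => ¬ ABc He col w z)) := by
          intro w _
          apply Finset.filter_congr
          intro z _
          constructor
          · intro hh hc
            exact hh ((ABc_symm He col hHesymm z w).mpr hc)
          · intro hh hc
            exact hh ((ABc_symm He col hHesymm z w).mp hc)
        rw [hcc]
        calc νd ^ 2 * ∑ w ∈ SS l', ((SS l.val).filter (fun z => ¬ ABc He col z w)).card
            = ∑ w ∈ SS l', νd ^ 2 *
                ((SS l.val).filter (fun z => ¬ ABc He col z w)).card := by
              rw [Finset.mul_sum]
          _ ≤ ∑ _w ∈ SS l', mh := by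
              apply Finset.sum_le_sum
              intro w hw
              rw [hcg w hw]
              exact hI5 l.val l' hl1 hl2 w hw
          _ = (SS l').card * mh := by rw [Finset.sum_const, smul_eq_mul]
          _ = mh * mh := by rw [(hI1 l' hl2).1]
      have hmk := markov_filter (SS l.val)
        (fun z => νd * ((SS l').filter (fun w => ¬ ABc He col z w)).card) mh
      have h2 : (((SS l.val).filter (fun z =>
          mh < νd * ((SS l').filter (fun w => ¬ ABc He col z w)).card)).card
            * (mh + 1)) * νd ≤ mh * mh := by
        calc _ ≤ (∑ z ∈ SS l.val,
              νd * ((SS l').filter (fun w => ¬ ABc He col z w)).card) * νd :=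
              Nat.mul_le_mul_right _ hmk
          _ = νd ^ 2 * (∑ z ∈ SS l.val,
              ((SS l').filter (fun w => ¬ ABc He col z w)).card) := by
              rw [← Finset.mul_sum]; ring
          _ ≤ mh * mh := hsum
      have h3 : (νd * ((SS l.val).filter (fun z =>
          mh < νd * ((SS l').filter (fun w => ¬ ABc He col z w)).card)).card) * (mh + 1)
          ≤ mh * (mh + 1) := by
        calc _ = (((SS l.val).filter (fun z =>
              mh < νd * ((SS l').filter (fun w => ¬ ABc He col z w)).card)).card
                * (mh + 1)) * νd := by ring
          _ ≤ mh * mh := h2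
          _ ≤ mh * (mh + 1) := Nat.mul_le_mul_left _ (Nat.le_succ _)
      exact Nat.le_of_mul_le_mul_right h3 (Nat.succ_pos mh)
    have hRcard : ∀ l : Fin (d+1),
        4 * ((SS l.val).filter (fun z => ¬ (∀ l' : ℕ, l.val < l' → l' < d + 1 →
          νd * ((SS l').filter (fun w => ¬ ABc He col z w)).card ≤ mh))).card ≤ mh := by
      intro l
      have hsub : (SS l.val).filter (fun z => ¬ (∀ l' : ℕ, l.val < l' → l' < d + 1 →
          νd * ((SS l').filter (fun w => ¬ ABc He col z w)).card ≤ mh))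
          ⊆ ((Finset.range (d+1)).filter (fun l' => l.val < l')).biUnion
            (fun l' => (SS l.val).filter (fun z =>
              mh < νd * ((SS l').filter (fun w => ¬ ABc He col z w)).card)) := by
        intro z hz
        obtain ⟨hz1, hz2⟩ := Finset.mem_filter.mp hz
        push_neg at hz2
        obtain ⟨l', h1, h2, h3⟩ := hz2
        exact Finset.mem_biUnion.mpr ⟨l',
          Finset.mem_filter.mpr ⟨Finset.mem_range.mpr h2, h1⟩,
          Finset.mem_filter.mpr ⟨hz1, h3⟩⟩
      have hbound : νd * ((SS l.val).filter (fun z => ¬ (∀ l' : ℕ, l.val < l' →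
          l' < d + 1 → νd * ((SS l').filter (fun w => ¬ ABc He col z w)).card ≤ mh))).card
          ≤ (d + 1) * mh := by
        calc νd * _ ≤ νd * (((Finset.range (d+1)).filter (fun l' => l.val < l')).biUnion
              (fun l' => (SS l.val).filter (fun z =>
                mh < νd * ((SS l').filter (fun w => ¬ ABc He col z w)).card))).card :=
              Nat.mul_le_mul_left _ (Finset.card_le_card hsub)
          _ ≤ νd * (∑ l' ∈ (Finset.range (d+1)).filter (fun l' => l.val < l'),
              ((SS l.val).filter (fun z =>
                mh < νd * ((SS l').filter (fun w => ¬ ABc He col z w)).card)).card) :=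
              Nat.mul_le_mul_left _ Finset.card_biUnion_le
          _ = ∑ l' ∈ (Finset.range (d+1)).filter (fun l' => l.val < l'),
              νd * ((SS l.val).filter (fun z =>
                mh < νd * ((SS l').filter (fun w => ¬ ABc He col z w)).card)).card := by
              rw [Finset.mul_sum]
          _ ≤ ∑ _l' ∈ (Finset.range (d+1)).filter (fun l' => l.val < l'), mh := by
              apply Finset.sum_le_sum
              intro l' hl'
              obtain ⟨hr, hlt⟩ := Finset.mem_filter.mp hl'
              exact hBb l l' hlt (Finset.mem_range.mp hr)
          _ = ((Finset.range (d+1)).filter (fun l' => l.val < l')).card * mh := by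
              rw [Finset.sum_const, smul_eq_mul]
          _ ≤ (d + 1) * mh := by
              apply Nat.mul_le_mul_right
              calc _ ≤ (Finset.range (d+1)).card := Finset.card_filter_le _ _
                _ = d + 1 := Finset.card_range _
      have h4 : (4 * (d+1)) * ((SS l.val).filter (fun z => ¬ (∀ l' : ℕ, l.val < l' →
          l' < d + 1 → νd * ((SS l').filter (fun w => ¬ ABc He col z w)).card ≤ mh))).card
          ≤ (d+1) * mh := by
        calc _ ≤ νd * _ := Nat.mul_le_mul_right _ hνd
          _ ≤ (d+1) * mh := hbound
      have h5 : (d+1) * (4 * ((SS l.val).filter (fun z => ¬ (∀ l' : ℕ, l.val < l' →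
          l' < d + 1 → νd * ((SS l').filter (fun w => ¬ ABc He col z w)).card ≤ mh))).card)
          ≤ (d+1) * mh := by
        calc _ = (4 * (d+1)) * _ := by ring
          _ ≤ (d+1) * mh := h4
      exact Nat.le_of_mul_le_mul_left h5 (Nat.succ_pos d)
    have hPScard : ∀ l : Fin (d+1), m₀b ≤ (PS l).card := by
      intro l
      have hsplit : ((SS l.val).filter (fun z => ∀ l' : ℕ, l.val < l' → l' < d + 1 →
          νd * ((SS l').filter (fun w => ¬ ABc He col z w)).card ≤ mh)).card
          + ((SS l.val).filter (fun z => ¬ (∀ l' : ℕ, l.val < l' → l' < d + 1 →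
          νd * ((SS l').filter (fun w => ¬ ABc He col z w)).card ≤ mh))).card
          = (SS l.val).card :=
        Finset.card_filter_add_card_filter_not
          (p := fun z => ∀ l' : ℕ, l.val < l' → l' < d + 1 →
            νd * ((SS l').filter (fun w => ¬ ABc He col z w)).card ≤ mh)
      have hm' : (SS l.val).card = mh := (hI1 l.val l.isLt).1
      have hR := hRcard l
      rw [hm'] at hsplit
      have hPSl : (PS l).card = ((SS l.val).filter (fun z => ∀ l' : ℕ, l.val < l' →
          l' < d + 1 →
          νd * ((SS l').filter (fun w => ¬ ABc He col z w)).card ≤ mh)).card := rfl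
      omega
    have hclean : ∀ a c : Fin (d+1), a ≠ c → ∀ v ∈ PS a,
        νd * ((PS c).filter (fun z => ¬ ABc He col v z)).card ≤ mh := by
      intro a c hac v hv
      have hvalne : a.val ≠ c.val := fun h => hac (Fin.ext h)
      have hmono : ((PS c).filter (fun z => ¬ ABc He col v z)).card
          ≤ ((SS c.val).filter (fun z => ¬ ABc He col v z)).card :=
        Finset.card_le_card (Finset.filter_subset_filter _ (hPSsub c))
      rcases Nat.lt_or_ge a.val c.val with hlt | hge
      · have hcond := (Finset.mem_filter.mp hv).2
        calc νd * ((PS c).filter (fun z => ¬ ABc He col v z)).card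
            ≤ νd * ((SS c.val).filter (fun z => ¬ ABc He col v z)).card :=
              Nat.mul_le_mul_left _ hmono
          _ ≤ mh := hcond c.val hlt c.isLt
      · have hlt : c.val < a.val := by omega
        have hv' : v ∈ SS a.val := hPSsub a hv
        have := hI5 c.val a.val hlt a.isLt v hv'
        calc νd * ((PS c).filter (fun z => ¬ ABc He col v z)).card
            ≤ νd * ((SS c.val).filter (fun z => ¬ ABc He col v z)).card :=
              Nat.mul_le_mul_left _ hmono
          _ ≤ νd ^ 2 * ((SS c.val).filter (fun z => ¬ ABc He col v z)).card := by
              apply Nat.mul_le_mul_right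
              calc νd = νd * 1 := (Nat.mul_one _).symm
                _ ≤ νd * νd := Nat.mul_le_mul_left _ hνd1
                _ = νd ^ 2 := (sq νd).symm
          _ ≤ mh := this
    have hHP2blue : ∀ a c : Fin (d+1), a ≠ c → ∀ C ⊆ PS c, κCb ≤ C.card →
        ∀ B ⊆ PS a, (∀ x ∈ B,
          2 * (C.filter (fun z => ABc He col x z)).card < 1 * C.card) → B.card < 1 := by
      intro a c hac C hC hCcard B hB hbad
      rcases Finset.eq_empty_or_nonempty B with rfl | ⟨x, hx⟩
      · simp
      exfalso
      have hxB := hbad x hx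
      have hxPS : x ∈ PS a := hB hx
      have hcl := hclean a c hac x hxPS
      have hsplit : (C.filter (fun z => ABc He col x z)).card
          + (C.filter (fun z => ¬ ABc He col x z)).card = C.card :=
        Finset.card_filter_add_card_filter_not (p := fun z => ABc He col x z)
      have hmono : ((C.filter (fun z => ¬ ABc He col x z))).card
          ≤ ((PS c).filter (fun z => ¬ ABc He col x z)).card :=
        Finset.card_le_card (Finset.filter_subset_filter _ hC)
      -- νd * |C| < νd * 2 * miss ≤ 2 mh ≤ νd * κCb ≤ νd |C| : contradiction
      have h1 : C.card < 2 * (C.filter (fun z => ¬ ABc He col x z)).card := by omega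
      have h2 : νd * C.card < νd * (2 * (C.filter (fun z => ¬ ABc He col x z)).card) :=
        mul_lt_mul_of_pos_left h1 (by omega)
      have h3 : νd * (2 * (C.filter (fun z => ¬ ABc He col x z)).card) ≤ 2 * mh := by
        calc νd * (2 * (C.filter (fun z => ¬ ABc He col x z)).card)
            = 2 * (νd * (C.filter (fun z => ¬ ABc He col x z)).card) := by ring
          _ ≤ 2 * (νd * ((PS c).filter (fun z => ¬ ABc He col x z)).card) := by
              apply Nat.mul_le_mul_left
              exact Nat.mul_le_mul_left _ hmono
          _ ≤ 2 * mh := Nat.mul_le_mul_left _ hcl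
      have h4 : νd * κCb ≤ νd * C.card := Nat.mul_le_mul_left _ hCcard
      omega
    -- invoke the embedding lemma in blue
    obtain ⟨y, f, hy, hf, he⟩ := embed G V₀ H col false (ABc He col) PS φ
      d k D 1 2 m₀b 1 κCb τ σ hdeg hk hABc_A
      (fun l => (hPSsub l).trans (hI1 l.val l.isLt).2) hφ le_rfl (by omega)
      hHP2blue hD hτσ (by simpa using hblueHS) hPScard
    exact ⟨false, y, f, hy, hf, he⟩
  | succ r ih =>
    intro j hj W SS hWV hWcard hI1 hI2 hI3 hI4 hI5
    have hr : r < d + 1 := by omega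
    have hF' : 1 ≤ F ^ r := Nat.one_le_pow _ _ (by omega)
    have hwF : 1 ≤ wlow * F ^ r := by
      calc 1 = 1 * 1 := rfl
        _ ≤ wlow * F ^ r := Nat.mul_le_mul hwlow hF'
    have hνdsq : 2 ≤ νd ^ 2 := by
      calc 2 ≤ νd := by omega
        _ = νd * 1 := (Nat.mul_one _).symm
        _ ≤ νd * νd := Nat.mul_le_mul_left _ hνd1
        _ = νd ^ 2 := (sq νd).symm
    by_cases hViol : ∃ S T : Finset (Fin N), S ⊆ W ∧ T ⊆ W ∧ Disjoint S T ∧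
        mh ≤ S.card ∧ 2 * (wlow * F ^ r) ≤ T.card ∧
        νd ^ 4 * (∑ v ∈ S, (T.filter (fun w => ARc He col v w)).card) < S.card * T.card
    · -- a sparse red pair exists: extract a blue part and recurse
      obtain ⟨S, T, hSW, hTW, hST, hScard, hTcard, hcount⟩ := hViol
      obtain ⟨S', hS'S, hS'card, hS'sum⟩ := exists_trim S
        (fun v => (T.filter (fun w => ARc He col v w)).card) mh hScard
      have hSpos : 0 < S.card := by omega
      have hkey1 : νd ^ 4 * (∑ v ∈ S', (T.filter (fun w => ARc He col v w)).card)
          < mh * T.card := by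
        have hchain : S.card * (νd ^ 4 *
            (∑ v ∈ S', (T.filter (fun w => ARc He col v w)).card))
            < S.card * (mh * T.card) := by
          calc S.card * (νd ^ 4 * (∑ v ∈ S', (T.filter (fun w => ARc He col v w)).card))
              = νd ^ 4 * (S.card * (∑ v ∈ S', (T.filter (fun w => ARc He col v w)).card)) := by
                ring
            _ ≤ νd ^ 4 * (mh * (∑ v ∈ S, (T.filter (fun w => ARc He col v w)).card)) :=
                Nat.mul_le_mul_left _ hS'sum
            _ = mh * (νd ^ 4 * (∑ v ∈ S, (T.filter (fun w => ARc He col v w)).card)) := by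
                ring
            _ < mh * (S.card * T.card) := mul_lt_mul_of_pos_left hcount (by omega)
            _ = S.card * (mh * T.card) := by ring
        exact lt_of_mul_lt_mul_left hchain (Nat.zero_le _)
      obtain ⟨T₂, hT₂T, hT₂card, hT₂sum⟩ := exists_trim T
        (fun w => (S'.filter (fun v => ARc He col v w)).card) (2 * (wlow * F ^ r)) hTcard
      have hTpos : 0 < T.card := by omega
      have hccST : ∑ w ∈ T, (S'.filter (fun v => ARc He col v w)).card
          = ∑ v ∈ S', (T.filter (fun w => ARc He col v w)).card := (cross_comm _ _ _).symm
      have hkey2 : νd ^ 4 * (∑ w ∈ T₂, (S'.filter (fun v => ARc He col v w)).card)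
          < mh * (2 * (wlow * F ^ r)) := by
        have hchain : T.card * (νd ^ 4 *
            (∑ w ∈ T₂, (S'.filter (fun v => ARc He col v w)).card))
            < T.card * (mh * (2 * (wlow * F ^ r))) := by
          calc T.card * (νd ^ 4 * (∑ w ∈ T₂, (S'.filter (fun v => ARc He col v w)).card))
              = νd ^ 4 * (T.card * (∑ w ∈ T₂, (S'.filter (fun v => ARc He col v w)).card)) := by
                ring
            _ ≤ νd ^ 4 * ((2 * (wlow * F ^ r)) *
                (∑ w ∈ T, (S'.filter (fun v => ARc He col v w)).card)) :=
                Nat.mul_le_mul_left _ hT₂sum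
            _ = (2 * (wlow * F ^ r)) * (νd ^ 4 *
                (∑ v ∈ S', (T.filter (fun w => ARc He col v w)).card)) := by
                rw [hccST]; ring
            _ < (2 * (wlow * F ^ r)) * (mh * T.card) :=
                mul_lt_mul_of_pos_left hkey1 (by omega)
            _ = T.card * (mh * (2 * (wlow * F ^ r))) := by ring
        exact lt_of_mul_lt_mul_left hchain (Nat.zero_le _)
      have hdisjS'T₂ : Disjoint S' T₂ := hST.mono hS'S hT₂T
      have hmiss_eq : ∀ v ∈ T₂, (S'.filter (fun z => ¬ ABc He col v z))
          = S'.filter (fun z => ARc He col v z) := by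
        intro v hv
        apply filter_notAB_eq_AR
        intro hvS'
        exact (Finset.disjoint_left.mp hdisjS'T₂ hvS') hv
      have hmiss_sum : νd ^ 4 * (∑ v ∈ T₂, ((S'.filter (fun z => ¬ ABc He col v z))).card)
          < mh * (2 * (wlow * F ^ r)) := by
        have heq : ∑ v ∈ T₂, (S'.filter (fun z => ¬ ABc He col v z)).card
            = ∑ w ∈ T₂, (S'.filter (fun v => ARc He col v w)).card := by
          calc ∑ v ∈ T₂, (S'.filter (fun z => ¬ ABc He col v z)).card
              = ∑ v ∈ T₂, (S'.filter (fun z => ARc He col v z)).card :=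
              Finset.sum_congr rfl (fun v hv => by rw [hmiss_eq v hv])
            _ = ∑ v ∈ T₂, (S'.filter (fun z => ARc He col z v)).card := by
              apply Finset.sum_congr rfl
              intro v _
              congr 1
              apply Finset.filter_congr
              intro z _
              exact ARc_symm He col hHesymm v z
            _ = ∑ w ∈ T₂, (S'.filter (fun v => ARc He col v w)).card := rfl
        rw [heq]
        exact hkey2
      -- clean T₂
      set W' : Finset (Fin N) := T₂.filter (fun v =>
        νd ^ 2 * ((S'.filter (fun z => ¬ ABc He col v z))).card ≤ mh) with hW'def
      have hsplit2 : W'.card + (T₂.filter (fun v =>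
          ¬ (νd ^ 2 * ((S'.filter (fun z => ¬ ABc He col v z))).card ≤ mh))).card
          = T₂.card :=
        Finset.card_filter_add_card_filter_not
          (p := fun v => νd ^ 2 * ((S'.filter (fun z => ¬ ABc He col v z))).card ≤ mh)
      have hRR : T₂.filter (fun v =>
          ¬ (νd ^ 2 * ((S'.filter (fun z => ¬ ABc He col v z))).card ≤ mh))
          = T₂.filter (fun v =>
            mh < νd ^ 2 * ((S'.filter (fun z => ¬ ABc He col v z))).card) := by
        apply Finset.filter_congr
        intro v _
        exact not_le
      have hRsmall : νd ^ 2 * (T₂.filter (fun v =>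
          mh < νd ^ 2 * ((S'.filter (fun z => ¬ ABc He col v z))).card)).card
          < 2 * (wlow * F ^ r) := by
        have hmk := markov_filter T₂
          (fun v => νd ^ 2 * ((S'.filter (fun z => ¬ ABc He col v z))).card) mh
        have h1 : νd ^ 2 * ((T₂.filter (fun v =>
            mh < νd ^ 2 * ((S'.filter (fun z => ¬ ABc He col v z))).card)).card * (mh + 1))
            ≤ νd ^ 4 * (∑ v ∈ T₂, ((S'.filter (fun z => ¬ ABc He col v z))).card) := by
          calc νd ^ 2 * ((T₂.filter (fun v =>
              mh < νd ^ 2 * ((S'.filter (fun z => ¬ ABc He col v z))).card)).card * (mh + 1))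
              ≤ νd ^ 2 * (∑ v ∈ T₂,
                νd ^ 2 * ((S'.filter (fun z => ¬ ABc He col v z))).card) :=
                Nat.mul_le_mul_left _ hmk
            _ = νd ^ 4 * (∑ v ∈ T₂, ((S'.filter (fun z => ¬ ABc He col v z))).card) := by
                rw [← Finset.mul_sum]; ring
        have h2 : mh * (νd ^ 2 * (T₂.filter (fun v =>
            mh < νd ^ 2 * ((S'.filter (fun z => ¬ ABc He col v z))).card)).card)
            < mh * (2 * (wlow * F ^ r)) := by
          calc mh * (νd ^ 2 * (T₂.filter (fun v =>
              mh < νd ^ 2 * ((S'.filter (fun z => ¬ ABc He col v z))).card)).card)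
              ≤ (mh + 1) * (νd ^ 2 * (T₂.filter (fun v =>
                mh < νd ^ 2 * ((S'.filter (fun z => ¬ ABc He col v z))).card)).card) :=
                Nat.mul_le_mul_right _ (Nat.le_succ _)
            _ = νd ^ 2 * ((T₂.filter (fun v =>
                mh < νd ^ 2 * ((S'.filter (fun z => ¬ ABc He col v z))).card)).card
                  * (mh + 1)) := by ring
            _ ≤ νd ^ 4 * (∑ v ∈ T₂, ((S'.filter (fun z => ¬ ABc He col v z))).card) := h1
            _ < mh * (2 * (wlow * F ^ r)) := hmiss_sum
        exact lt_of_mul_lt_mul_left h2 (Nat.zero_le _)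
      have hW'card : wlow * F ^ r ≤ W'.card := by
        rw [hRR] at hsplit2
        have hRatom := hRsmall
        have h2R : 2 * (T₂.filter (fun v =>
            mh < νd ^ 2 * ((S'.filter (fun z => ¬ ABc He col v z))).card)).card
            ≤ νd ^ 2 * (T₂.filter (fun v =>
            mh < νd ^ 2 * ((S'.filter (fun z => ¬ ABc He col v z))).card)).card :=
          Nat.mul_le_mul_right _ hνdsq
        omega
      have hW'T₂ : W' ⊆ T₂ := Finset.filter_subset _ _
      have hW'W : W' ⊆ W := hW'T₂.trans (hT₂T.trans hTW)
      -- recurse with the new part S'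
      set SS' : ℕ → Finset (Fin N) := Function.update SS j S' with hSS'def
      have hSS'j : SS' j = S' := Function.update_self _ _ _
      have hSS'old : ∀ l, l ≠ j → SS' l = SS l := fun l hl => Function.update_of_ne hl _ _
      have hS'V : S' ⊆ V₀ := hS'S.trans (hSW.trans hWV)
      refine ih (j + 1) (by omega) W' SS' (hW'W.trans hWV) hW'card ?_ ?_ ?_ ?_ ?_
      · intro l hl
        by_cases hlj : l = j
        · subst hlj
          rw [hSS'j]
          exact ⟨hS'card, hS'V⟩
        · rw [hSS'old l hlj]
          exact hI1 l (by omega)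
      · intro l hl
        by_cases hlj : l = j
        · subst hlj
          rw [hSS'j]
          exact (hST.mono hS'S (hW'T₂.trans hT₂T)).symm.symm
        · rw [hSS'old l hlj]
          exact (hI2 l (by omega)).mono_right hW'W
      · intro l l' hll' hl'
        by_cases hlj : l' = j
        · subst hlj
          rw [hSS'j, hSS'old l (by omega)]
          exact (hI2 l (by omega)).mono_right (hS'S.trans hSW)
        · rw [hSS'old l (by omega), hSS'old l' hlj]
          exact hI3 l l' hll' (by omega)
      · intro l hl v hv
        by_cases hlj : l = j
        · subst hlj
          rw [hSS'j]
          exact (Finset.mem_filter.mp hv).2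
        · rw [hSS'old l hlj]
          exact hI4 l (by omega) v (hW'W hv)
      · intro l l' hll' hl' v hv
        by_cases hlj : l' = j
        · subst hlj
          rw [hSS'j] at hv
          rw [hSS'old l (by omega)]
          exact hI4 l (by omega) v (hS'S.trans hSW hv)
        · rw [hSS'old l (by omega)]
          rw [hSS'old l' hlj] at hv
          exact hI5 l l' hll' (by omega) v hv
    · -- no sparse red pair: red is hereditarily dense, embed in red
      have hWbig : (d + 1) * mredf r ≤ W.card :=
        le_trans (hsplitOK r hr) hWcard
      obtain ⟨P, hP1, hP2⟩ := exists_split (d + 1) (mredf r) W hWbig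
      have hHP2red : ∀ a c : Fin (d+1), a ≠ c → ∀ C ⊆ P c, 2 * (wlow * F ^ r) ≤ C.card →
          ∀ B ⊆ P a, (∀ x ∈ B, (2 * νd ^ 4) *
            (C.filter (fun z => ARc He col x z)).card < 1 * C.card) → B.card < mh := by
        intro a c hac C hC hCcard B hB hbad
        by_contra hBc
        push_neg at hBc
        apply hViol
        refine ⟨B, C, hB.trans (hP1 a).1, hC.trans (hP1 c).1,
          (hP2 a c hac).mono hB hC, hBc, hCcard, ?_⟩
        have hsum : (2 * νd ^ 4) * (∑ x ∈ B, (C.filter (fun z => ARc He col x z)).card)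
            + B.card ≤ B.card * C.card := by
          calc (2 * νd ^ 4) * (∑ x ∈ B, (C.filter (fun z => ARc He col x z)).card) + B.card
              = ∑ x ∈ B, ((2 * νd ^ 4) * (C.filter (fun z => ARc He col x z)).card + 1) := by
                rw [Finset.sum_add_distrib, Finset.sum_const, smul_eq_mul, mul_one,
                  Finset.mul_sum]
            _ ≤ ∑ _x ∈ B, C.card := by
                apply Finset.sum_le_sum
                intro x hx
                have := hbad x hx
                omega
            _ = B.card * C.card := by rw [Finset.sum_const, smul_eq_mul]
        have hBpos : 0 < B.card := by omega
        have hhalf : νd ^ 4 * (∑ x ∈ B, (C.filter (fun z => ARc He col x z)).card)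
            ≤ (2 * νd ^ 4) * (∑ x ∈ B, (C.filter (fun z => ARc He col x z)).card) :=
          Nat.mul_le_mul_right _ (by omega)
        omega
      obtain ⟨y, f, hy, hf, he⟩ := embed G V₀ H col true (ARc He col) P φ
        d k D 1 (2 * νd ^ 4) (mredf r) mh (2 * (wlow * F ^ r)) τ σ hdeg hk hARc_A
        (fun l => (hP1 l).1.trans hWV) hφ le_rfl (by nlinarith [pow_pos (show 0 < νd by omega) 4])
        hHP2red hD hτσ (hredHS r hr) (fun l => le_of_eq (hP1 l).2.symm)
      exact ⟨true, y, f, hy, hf, he⟩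

end ChainMain

section Constants

def cνd (d : ℕ) : ℕ := 2^(d+3)*(d+4)
def cA₁ (d k : ℕ) : ℕ := 3 + d*k + 2*(d*d) + d*(cνd d)*(d*k + 2*(d*d) + d + 4)
def cF (d : ℕ) : ℕ := (d+1) * (2*(2*(cνd d)^4)^d + 1)
def cG₂ (d k : ℕ) : ℕ := cA₁ d k * (2*(cνd d)^4)^d * (cF d)^(d+1) * ((2*d+2)*k)
def cQ (d k : ℕ) : ℕ := 2*(cG₂ d k) + 2
def cC (d k : ℕ) : ℕ := (cQ d k + 1) * cA₁ d k * (2*(cνd d)^4)^d * (cF d)^(d+1)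
def cQn (d k n : ℕ) : ℕ := n * cQ d k
def cmB1 (d k : ℕ) : ℕ := d*k + 2*(d*d*(cQ d k)) + d + 4
def cmB (d k n : ℕ) : ℕ := n * cmB1 d k
def cmh (d k n : ℕ) : ℕ := cνd d * cmB d k n
def cκCb (d k n : ℕ) : ℕ := 2 * cmB d k n + 1
def cm₀b (d k n : ℕ) : ℕ :=
  2^d * (n + d*n*k + d*d*(cQn d k n) + d*d*(cQn d k n) + d*1 + cκCb d k n + 2)
def cD (d n : ℕ) : ℕ := d*n + d + 2
def cA₀ (d k n : ℕ) : ℕ :=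
  n + d*n*k + d*d*(cQn d k n) + d*d*(cQn d k n) + d*(cmh d k n) + 2
def cwlow (d k n : ℕ) : ℕ := (2*(cνd d)^4)^d * cA₀ d k n
def cN₀ (d k n : ℕ) : ℕ := cwlow d k n * (cF d)^(d+1)

lemma arith_νd (d : ℕ) : 4*(d+1) ≤ cνd d := by
  unfold cνd
  have h8 : 8 ≤ 2^(d+3) := by
    calc 8 = 2^3 := rfl
    _ ≤ 2^(d+3) := Nat.pow_le_pow_right (by omega) (by omega)
  calc 4*(d+1) ≤ 8*(d+4) := by omega
  _ ≤ 2^(d+3)*(d+4) := Nat.mul_le_mul_right _ h8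

lemma arith_νd1 (d : ℕ) : 1 ≤ cνd d := le_trans (by omega) (arith_νd d)

lemma arith_mB1pos (d k : ℕ) : 4 ≤ cmB1 d k := by unfold cmB1; omega

lemma arith_mh (d k n : ℕ) (hn : 1 ≤ n) : 2 ≤ cmh d k n := by
  unfold cmh cmB
  calc 2 = 1 * (1 * 2) := by ring
  _ ≤ cνd d * (n * cmB1 d k) := by
      apply Nat.mul_le_mul (arith_νd1 d)
      apply Nat.mul_le_mul hn
      have := arith_mB1pos d k
      omega

lemma arith_Fpos (d : ℕ) : 1 ≤ cF d := by
  unfold cF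
  have : 1 ≤ d + 1 := by omega
  calc 1 = 1 * 1 := rfl
  _ ≤ (d+1) * (2*(2*(cνd d)^4)^d + 1) := Nat.mul_le_mul this (by omega)

lemma arith_wlowpos (d k n : ℕ) : 1 ≤ cwlow d k n := by
  unfold cwlow
  have h1 : 1 ≤ (2*(cνd d)^4)^d := Nat.one_le_pow _ _ (by
    have := pow_pos (lt_of_lt_of_le one_pos (arith_νd1 d)) 4
    omega)
  have h2 : 1 ≤ cA₀ d k n := by unfold cA₀; omega
  calc 1 = 1*1 := rfl
  _ ≤ _ := Nat.mul_le_mul h1 h2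

lemma arith_split (d k n : ℕ) (r : ℕ) :
    (d+1) * ((2*(cνd d)^4)^d * (n + d*n*k + d*d*(cQn d k n) + d*d*(cQn d k n)
      + d*(cmh d k n) + 2*(cwlow d k n * (cF d)^r) + 2))
    ≤ cwlow d k n * (cF d)^(r+1) := by
  have hFr : 1 ≤ (cF d)^r := Nat.one_le_pow _ _ (lt_of_lt_of_le (by omega) (arith_Fpos d))
  have hsum : (2*(cνd d)^4)^d * (n + d*n*k + d*d*(cQn d k n) + d*d*(cQn d k n)
      + d*(cmh d k n) + 2*(cwlow d k n * (cF d)^r) + 2)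
      = cwlow d k n + (2*(cνd d)^4)^d * 2 * (cwlow d k n * (cF d)^r) := by
    unfold cwlow cA₀
    ring
  rw [hsum]
  have h1 : cwlow d k n ≤ cwlow d k n * (cF d)^r :=
    Nat.le_mul_of_pos_right _ (by omega)
  calc (d+1) * (cwlow d k n + (2*(cνd d)^4)^d * 2 * (cwlow d k n * (cF d)^r))
      ≤ (d+1) * (cwlow d k n * (cF d)^r
        + (2*(cνd d)^4)^d * 2 * (cwlow d k n * (cF d)^r)) := by
        apply Nat.mul_le_mul_left
        omega
    _ = ((d+1) * (2*(2*(cνd d)^4)^d + 1)) * (cwlow d k n * (cF d)^r) := by ring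
    _ = cwlow d k n * (cF d)^(r+1) := by
        unfold cF
        ring

end Constants

section Arith2

lemma arith_κCb (d k n : ℕ) : 2 * cmh d k n ≤ cνd d * cκCb d k n := by
  unfold cmh cκCb
  calc 2 * (cνd d * cmB d k n) = cνd d * (2 * cmB d k n) := by ring
  _ ≤ cνd d * (2 * cmB d k n + 1) := Nat.mul_le_mul_left _ (by omega)

lemma arith_m₀b (d k n : ℕ) (hn : 1 ≤ n) : 4 * cm₀b d k n ≤ 3 * cmh d k n := by
  have hX : n + d*n*k + d*d*(cQn d k n) + d*d*(cQn d k n) + d*1 + cκCb d k n + 2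
      ≤ 3 * cmB d k n := by
    unfold cκCb cmB cmB1 cQn
    have e1 : d*n*k = n*(d*k) := by ring
    have e2 : d*d*(n*cQ d k) = n*(d*d*(cQ d k)) := by ring
    have e3 : n*(d*k + 2*(d*d*(cQ d k)) + d + 4)
        = n*(d*k) + 2*(n*(d*d*(cQ d k))) + n*d + 4*n := by ring
    have e4 : d ≤ n*d := Nat.le_mul_of_pos_left d (by omega)
    rw [e1, e2]
    omega
  have e5 : (2:ℕ)^(d+3) = 2^d * 8 := by rw [pow_add]; norm_num
  calc 4 * cm₀b d k n
      = 2^d * (4 * (n + d*n*k + d*d*(cQn d k n) + d*d*(cQn d k n) + d*1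
        + cκCb d k n + 2)) := by unfold cm₀b; ring
    _ ≤ 2^d * (4 * (3 * cmB d k n)) := by
        apply Nat.mul_le_mul_left
        omega
    _ = (2^d * 12) * cmB d k n := by ring
    _ ≤ (2^d * (24 * (d+4))) * cmB d k n := by
        apply Nat.mul_le_mul_right
        apply Nat.mul_le_mul_left
        omega
    _ = 3 * cmh d k n := by
        unfold cmh cνd
        rw [e5]
        ring

lemma arith_mB1 (d k : ℕ) : cmB1 d k ≤ (cQ d k + 1) * (d*k + 2*(d*d) + d + 4) := by
  unfold cmB1
  have e : (cQ d k + 1) * (d*k + 2*(d*d) + d + 4)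
      = d*k + 2*(d*d) + d + 4 + (cQ d k)*(d*k) + 2*(d*d*(cQ d k)) + (cQ d k)*d
        + (cQ d k)*4 := by ring
  omega

lemma arith_A₀ (d k n : ℕ) (hn : 1 ≤ n) :
    cA₀ d k n ≤ n * (cQ d k + 1) * cA₁ d k := by
  have h1 : n + 2 ≤ 3*(n*(cQ d k + 1)) := by
    have : n*1 ≤ n*(cQ d k + 1) := Nat.mul_le_mul_left _ (by omega)
    have h3 : n + 2 ≤ 3*n := by omega
    calc n + 2 ≤ 3*n := h3
    _ = 3*(n*1) := by ring
    _ ≤ 3*(n*(cQ d k + 1)) := by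
        apply Nat.mul_le_mul_left
        exact Nat.mul_le_mul_left _ (by omega)
  have h2 : d*n*k ≤ (n*(cQ d k + 1))*(d*k) := by
    calc d*n*k = (n*1)*(d*k) := by ring
    _ ≤ (n*(cQ d k + 1))*(d*k) := by
        apply Nat.mul_le_mul_right
        exact Nat.mul_le_mul_left _ (by omega)
  have h3 : d*d*(cQn d k n) + d*d*(cQn d k n) ≤ (n*(cQ d k + 1))*(2*(d*d)) := by
    unfold cQn
    have e : (n*(cQ d k + 1))*(2*(d*d)) = d*d*(n*(cQ d k)) + d*d*(n*(cQ d k))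
        + 2*(d*d*n) := by ring
    omega
  have h4 : d*(cmh d k n)
      ≤ (n*(cQ d k + 1))*(d*(cνd d)*(d*k + 2*(d*d) + d + 4)) := by
    unfold cmh cmB
    calc d*(cνd d*(n*cmB1 d k)) = (d*(cνd d)*n)*(cmB1 d k) := by ring
    _ ≤ (d*(cνd d)*n)*((cQ d k + 1)*(d*k + 2*(d*d) + d + 4)) :=
        Nat.mul_le_mul_left _ (arith_mB1 d k)
    _ = (n*(cQ d k + 1))*(d*(cνd d)*(d*k + 2*(d*d) + d + 4)) := by ring
  calc cA₀ d k n = (n + 2) + d*n*k + (d*d*(cQn d k n) + d*d*(cQn d k n))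
      + d*(cmh d k n) := by unfold cA₀; ring
  _ ≤ 3*(n*(cQ d k + 1)) + (n*(cQ d k + 1))*(d*k) + (n*(cQ d k + 1))*(2*(d*d))
      + (n*(cQ d k + 1))*(d*(cνd d)*(d*k + 2*(d*d) + d + 4)) := by
      exact Nat.add_le_add (Nat.add_le_add (Nat.add_le_add h1 h2) h3) h4
  _ = n * (cQ d k + 1) * cA₁ d k := by unfold cA₁; ring

lemma arith_N₀ (d k n : ℕ) (hn : 1 ≤ n) : cN₀ d k n ≤ cC d k * n := by
  unfold cN₀ cwlow
  calc (2*(cνd d)^4)^d * cA₀ d k n * (cF d)^(d+1)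
      ≤ (2*(cνd d)^4)^d * (n * (cQ d k + 1) * cA₁ d k) * (cF d)^(d+1) := by
        apply Nat.mul_le_mul_right
        exact Nat.mul_le_mul_left _ (arith_A₀ d k n hn)
    _ = cC d k * n := by unfold cC; ring

lemma arith_Dle (d n : ℕ) (hn : 1 ≤ n) : cD d n ≤ (2*d+2)*n := by
  unfold cD
  have e : (2*d+2)*n = d*n + d*n + 2*n := by ring
  have e2 : d*1 ≤ d*n := Nat.mul_le_mul_left _ hn
  omega

lemma arith_τσ (d k n : ℕ) (hn : 1 ≤ n) :
    cN₀ d k n * (cD d n * k) ≤ cQn d k n * cQn d k n := by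
  have h1 : cN₀ d k n * (cD d n * k)
      ≤ ((2*(cνd d)^4)^d * (n * (cQ d k + 1) * cA₁ d k) * (cF d)^(d+1))
        * (((2*d+2)*n) * k) := by
    apply Nat.mul_le_mul
    · unfold cN₀ cwlow
      apply Nat.mul_le_mul_right
      exact Nat.mul_le_mul_left _ (arith_A₀ d k n hn)
    · exact Nat.mul_le_mul_right _ (arith_Dle d n hn)
  have h2 : ((2*(cνd d)^4)^d * (n * (cQ d k + 1) * cA₁ d k) * (cF d)^(d+1))
      * (((2*d+2)*n) * k) = (n*n) * ((cQ d k + 1) * cG₂ d k) := by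
    unfold cG₂
    ring
  have h3 : (cQ d k + 1) * cG₂ d k ≤ cQ d k * cQ d k := by
    have hQ2 : 2 ≤ cQ d k := by unfold cQ; omega
    calc (cQ d k + 1) * cG₂ d k ≤ (cQ d k + cQ d k) * cG₂ d k := by
          apply Nat.mul_le_mul_right
          omega
      _ = cQ d k * (2 * cG₂ d k) := by ring
      _ ≤ cQ d k * cQ d k := by
          apply Nat.mul_le_mul_left
          unfold cQ
          omega
  calc cN₀ d k n * (cD d n * k) ≤ (n*n) * ((cQ d k + 1) * cG₂ d k) := by rw [← h2]; exact h1
  _ ≤ (n*n) * (cQ d k * cQ d k) := Nat.mul_le_mul_left _ h3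
  _ = cQn d k n * cQn d k n := by unfold cQn; ring

end Arith2

/-- Linear cover Ramsey number for bounded-degree graphs: for all positive `d, k`
there is a constant `c` such that for every graph `G` on `n` vertices with maximum
degree at most `d`, every 2-colored covering `[k]`-uniform hypergraph on at least
`c·n` vertices contains a monochromatic Berge copy of `G`. -/
theorem cover_ramsey_bounded_degree_linear (d k : ℕ) (hd : 0 < d) (hk : 0 < k) :
    ∃ c : ℕ, ∀ (n : ℕ) (G : SimpleGraph (Fin n)),
      (∀ v : Fin n, (G.neighborSet v).ncard ≤ d) →
      ∀ N : ℕ, c * n ≤ N →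
      ∀ H : Finset (Finset (Fin N)),
        (∀ h ∈ H, 1 ≤ h.card ∧ h.card ≤ k) →
        (∀ u v : Fin N, u ≠ v → ∃ h ∈ H, u ∈ h ∧ v ∈ h) →
        ∀ col : Finset (Fin N) → Bool,
          ∃ b : Bool, HasBergeCopy G H (fun h => col h = b) := by
  refine ⟨cC d k, ?_⟩
  intro n G hdeg' N hcN H hHcard hcover col
  have hdeg : ∀ v : Fin n, (Finset.univ.filter (fun w => G.Adj v w)).card ≤ d := by
    intro v
    have h1 : G.neighborSet v = ↑(Finset.univ.filter (fun w => G.Adj v w)) := by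
      ext w
      simp [SimpleGraph.mem_neighborSet]
    have h2 := hdeg' v
    rwa [h1, Set.ncard_coe_finset] at h2
  rcases Nat.eq_zero_or_pos n with hn0 | hn
  · -- trivial case: no vertices
    subst hn0
    have hempty : ∀ e : Sym2 (Fin 0), e ∉ G.edgeSet := by
      intro e
      refine Sym2.ind ?_ e
      intro u v
      exact u.elim0
    exact ⟨true, fun v => v.elim0, fun _ => ∅,
      fun a => a.elim0, fun e1 he1 => absurd he1 (hempty e1),
      fun e he => absurd he (hempty e)⟩
  -- canonical covering hyperedge, symmetric in the pair
  set He' : Sym2 (Fin N) → Finset (Fin N) := fun e =>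
    if hp : ∃ h', h' ∈ H ∧ ∀ x ∈ e, x ∈ h' then hp.choose else ∅ with hHe'def
  set He : Fin N → Fin N → Finset (Fin N) := fun u v => He' s(u, v) with hHedef
  have hHe : ∀ u v : Fin N, u ≠ v → He u v ∈ H ∧ u ∈ He u v ∧ v ∈ He u v := by
    intro u v huv
    obtain ⟨h, hh, hu, hv⟩ := hcover u v huv
    have hp : ∃ h', h' ∈ H ∧ ∀ x ∈ (s(u,v) : Sym2 (Fin N)), x ∈ h' := by
      refine ⟨h, hh, ?_⟩
      intro x hx
      rw [Sym2.mem_iff] at hx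
      rcases hx with rfl | rfl <;> assumption
    have heq : He u v = hp.choose := by
      rw [hHedef, hHe'def]
      simp only [dif_pos hp]
    rw [heq]
    obtain ⟨h1, h2⟩ := hp.choose_spec
    refine ⟨h1, ?_, ?_⟩
    · exact h2 u (Sym2.mem_iff.mpr (Or.inl rfl))
    · exact h2 v (Sym2.mem_iff.mpr (Or.inr rfl))
  have hHesymm : ∀ u v : Fin N, u ≠ v → He u v = He v u := by
    intro u v _
    rw [hHedef]
    simp only
    rw [Sym2.eq_swap]
  -- the working vertex set
  have hN₀N : cN₀ d k n ≤ (Finset.univ : Finset (Fin N)).card := by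
    rw [Finset.card_univ, Fintype.card_fin]
    exact le_trans (arith_N₀ d k n hn) hcN
  obtain ⟨V₀, -, hV₀card⟩ := Finset.exists_subset_card_eq hN₀N
  obtain ⟨φ, hφ⟩ := exists_proper_coloring G hdeg
  have hmain := chain_rec G V₀ H col He hHe hHesymm d k (cD d n) (cνd d)
    (cmh d k n) (cQn d k n) (cQn d k n) (cwlow d k n) (cF d) (cκCb d k n) (cm₀b d k n)
    (fun r => (2*(cνd d)^4)^d * (n + d*n*k + d*d*(cQn d k n) + d*d*(cQn d k n)
      + d*(cmh d k n) + 2*(cwlow d k n*(cF d)^r) + 2))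
    φ hφ hdeg (fun h hh => (hHcard h hh).2)
    (le_of_eq rfl)
    (by rw [hV₀card]; unfold cN₀; exact arith_τσ d k n hn)
    (arith_mh d k n hn)
    (arith_νd d)
    (arith_wlowpos d k n)
    (arith_Fpos d)
    (fun r _ => by
      show (2*(cνd d)^4)^d * (n + d*n*k + d*d*(cQn d k n) + d*d*(cQn d k n)
        + d*(cmh d k n) + 2*(cwlow d k n*(cF d)^r) + 2)
        ≤ 1^d * ((2*(cνd d)^4)^d * (n + d*n*k + d*d*(cQn d k n) + d*d*(cQn d k n)
        + d*(cmh d k n) + 2*(cwlow d k n*(cF d)^r) + 2))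
      rw [one_pow, one_mul])
    (fun r _ => arith_split d k n r)
    (by
      show 2^d * (n + d*n*k + d*d*(cQn d k n) + d*d*(cQn d k n) + d*1 + cκCb d k n + 2)
        ≤ 1^d * cm₀b d k n
      rw [one_pow, one_mul]
      unfold cm₀b
      exact le_rfl)
    (arith_κCb d k n)
    (arith_m₀b d k n hn)
    (d+1) 0 (by omega) V₀ (fun _ => (∅ : Finset (Fin N)))
    Finset.Subset.rfl
    (le_of_eq (by rw [hV₀card]; rfl))
    (fun l hl => absurd hl (by omega))
    (fun l hl => absurd hl (by omega))
    (fun l l' hll' hl' => absurd hl' (by omega))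
    (fun l hl => absurd hl (by omega))
    (fun l l' hll' hl' => absurd hl' (by omega))
  obtain ⟨bb, y, f, hy, hf, hbe⟩ := hmain
  exact ⟨bb, y, f, hy, hf, hbe⟩
end

section
/- (Chvátal–Rödl–Szemerédi–Trotter, multicolor version) For all positive integers c and d there exists a constant C = C(c,d) such that the following holds: if G is a simple graph on n vertices with maximum degree at most d, then every coloring of the edges of the complete graph on C·n vertices with c colors contains a monochromatic copy of G. In particular, the multicolor Ramsey number satisfies R_c(G) ≤ C·n. -/
/-!
Cut the vertex set of `K_N` into `K = (c + 1) ^ (c * d + 1)` parts of linear size and refine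
them pair by pair. If two parts are not hereditarily dense in colour `j`, a Markov argument
gives large subsets in which every vertex of the first has few `j`-neighbours in the second.
This sparseness survives later shrinking (with a weaker constant), and no pair can be sparse
in all `c` colours, so after at most `c * K ^ 2` steps every pair of parts is hereditarily
dense in some colour, while parts have shrunk only by a constant factor. Ramsey's theorem on
the parts gives `d + 1` of them that are pairwise dense in a single colour `i`. Finally `G`
is `(d + 1)`-colourable and is embedded greedily, colour class `p` of `G` into part `p`:
every embedded neighbour shrinks the candidate set of a vertex by a factor at most `2 * D`,
where `1 / D` is the density guaranteed between parts, and hereditary density shows that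
few choices violate this.
-/

open Finset Function

theorem Finset.card_le_two_mul_card_filter_mul_le_two_mul_sum {ι : Type*} (s : Finset ι)
    (f : ι → ℕ) : #s ≤ 2 * #{i ∈ s | #s * f i ≤ 2 * ∑ j ∈ s, f j} := by
  have hsplit := card_filter_add_card_filter_not (s := s)
    fun i => #s * f i ≤ 2 * ∑ j ∈ s, f j
  set L := {i ∈ s | ¬ #s * f i ≤ 2 * ∑ j ∈ s, f j}
  have hL : #L * (2 * ∑ j ∈ s, f j + 1) ≤ #s * ∑ j ∈ s, f j :=
    calc #L * (2 * ∑ j ∈ s, f j + 1) = ∑ _i ∈ L, (2 * ∑ j ∈ s, f j + 1) := by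
          rw [sum_const, smul_eq_mul]
      _ ≤ ∑ i ∈ L, #s * f i := sum_le_sum fun i hi => by
          have := (mem_filter.mp hi).2; omega
      _ ≤ ∑ i ∈ s, #s * f i := sum_le_sum_of_subset (filter_subset _ s)
      _ = #s * ∑ j ∈ s, f j := (mul_sum ..).symm
  by_contra! hlt
  nlinarith [Nat.zero_le (∑ j ∈ s, f j)]

section Ramsey

variable {ι κ : Type*} [Fintype κ] (g : ι → ι → κ)

theorem exists_seq_color_eq_of_pow_le_card :
    ∀ (m : ℕ) (S : Finset ι), (Fintype.card κ + 1) ^ m ≤ #S →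
      ∃ (f : Fin m → ι) (h : Fin m → κ), (∀ a, f a ∈ S) ∧
        ∀ a b, a < b → f a ≠ f b ∧ g (f a) (f b) = h a
  | 0, _, _ => ⟨Fin.elim0, Fin.elim0, fun a => a.elim0, fun a => a.elim0⟩
  | m + 1, S, hS => by
    classical
    obtain ⟨x, hx⟩ : S.Nonempty := card_pos.mp (lt_of_lt_of_le (by positivity) hS)
    obtain ⟨j, -, hj⟩ := exists_le_card_fiber_of_mul_le_card_of_maps_to
      (s := S.erase x) (t := univ) (f := g x) (n := (Fintype.card κ + 1) ^ m)
      (fun _ _ => mem_univ _) ⟨g x x, mem_univ _⟩ (by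
        rw [card_univ, card_erase_of_mem hx]
        have := Nat.one_le_pow m _ (Nat.succ_pos (Fintype.card κ))
        rw [pow_succ] at hS
        have : Fintype.card κ * (Fintype.card κ + 1) ^ m + 1 ≤ #S := by nlinarith
        omega)
    obtain ⟨f, h, hfS, hfh⟩ := exists_seq_color_eq_of_pow_le_card m {y ∈ S.erase x | g x y = j} hj
    have hf (a : Fin m) : f a ≠ x ∧ g x (f a) = j := by
      have := mem_filter.mp (hfS a)
      exact ⟨ne_of_mem_erase this.1, this.2⟩
    refine ⟨Fin.cons x f, Fin.cons j h, Fin.cases hx fun a => mem_of_mem_erase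
      (mem_of_mem_filter _ (hfS a)), ?_⟩
    intro a b hab
    induction a using Fin.cases <;> induction b using Fin.cases
    · exact absurd hab (lt_irrefl _)
    · exact ⟨(hf _).1.symm, (hf _).2⟩
    · exact absurd hab (Fin.not_lt_zero _)
    · simpa using hfh _ _ (Fin.succ_lt_succ_iff.mp hab)

theorem exists_monochromatic_of_pow_le_card [Fintype ι] (t : ℕ)
    (hι : (Fintype.card κ + 1) ^ (Fintype.card κ * t + 1) ≤ Fintype.card ι) :
    ∃ (i : κ) (f : Fin (t + 1) → ι), Injective f ∧
      ∀ a b, a < b → g (f a) (f b) = i := by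
  classical
  obtain ⟨f, h, -, hf⟩ := exists_seq_color_eq_of_pow_le_card g _ univ hι
  obtain ⟨i, hi⟩ := Fintype.exists_lt_card_fiber_of_mul_lt_card h (n := t) (by simp)
  let e := orderEmbOfCardLe _ hi
  have he (a) : h (e a) = i := (mem_filter.mp (orderEmbOfCardLe_mem _ hi a)).2
  refine ⟨i, f ∘ e, fun a b hab => ?_, fun a b hab => ?_⟩
  · by_contra hne
    rcases lt_or_gt_of_ne hne with hlt | hlt
    · exact (hf _ _ (e.strictMono hlt)).1 hab
    · exact (hf _ _ (e.strictMono hlt)).1 hab.symm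
  · simpa [he] using (hf _ _ (e.strictMono hab)).2

theorem exists_injective_forall_ne_of_pow_le_card [Fintype ι] [Nonempty κ] (P : κ → ι → ι → Prop) (hsymm : ∀ j p q, P j p q → P j q p)
    (hP : ∀ p q, p ≠ q → ∃ j, P j p q) (t : ℕ)
    (hι : (Fintype.card κ + 1) ^ (Fintype.card κ * t + 1) ≤ Fintype.card ι) :
    ∃ (i : κ) (f : Fin (t + 1) → ι), Injective f ∧ ∀ a b, a ≠ b → P i (f a) (f b) := by
  classical
  choose g hg using fun p q => if h : p = q then ⟨Classical.arbitrary κ, fun hne => absurd h hne⟩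
    else (hP p q h).imp fun _ hj _ => hj
  obtain ⟨i, f, hf, hfi⟩ := exists_monochromatic_of_pow_le_card g t hι
  refine ⟨i, f, hf, fun a b hab => ?_⟩
  rcases lt_or_gt_of_ne hab with hlt | hlt
  · exact hfi a b hlt ▸ hg _ _ (hf.ne hab)
  · exact hsymm _ _ _ (hfi b a hlt ▸ hg _ _ (hf.ne hab.symm))

end Ramsey

theorem exists_pairwise_disjoint_card_eq {α ι : Type*} [Fintype α] [Fintype ι] (L : ℕ)
    (h : Fintype.card ι * L ≤ Fintype.card α) :
    ∃ U : ι → Finset α, Pairwise (Disjoint on U) ∧ ∀ p, #(U p) = L := by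
  obtain ⟨e⟩ := Embedding.nonempty_of_card_le (α := ι × Fin L) (β := α) (by simpa using h)
  refine ⟨fun p => univ.map ((Embedding.sectR p (Fin L)).trans e), fun p q hpq => ?_,
    fun p => by simp⟩
  refine disjoint_left.mpr fun x hx hx' => ?_
  obtain ⟨t, -, rfl⟩ := mem_map.mp hx
  obtain ⟨t', -, h⟩ := mem_map.mp hx'
  exact hpq (congrArg Prod.fst (e.injective h)).symm

namespace SimpleGraph

section Degree

variable {V : Type*} [Fintype V] (G : SimpleGraph V) [DecidableRel G.Adj]

theorem card_filter_adj_le_degree (S : Finset V) (u : V) :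
    #{w ∈ S | G.Adj u w} ≤ G.degree u := by
  rw [← card_neighborFinset_eq_degree]
  exact card_le_card fun w hw => by simpa using (mem_filter.mp hw).2

theorem ncard_neighborSet_eq_degree (v : V) : (G.neighborSet v).ncard = G.degree v := by
  rw [← card_neighborFinset_eq_degree, neighborFinset, Set.ncard_eq_toFinset_card']

theorem colorable_succ_of_forall_degree_le {d : ℕ} (hG : ∀ v, G.degree v ≤ d) :
    G.Colorable (d + 1) := by
  classical
  suffices ∀ S : Finset V, ∃ f : V → Fin (d + 1), ∀ u ∈ S, ∀ v ∈ S, G.Adj u v → f u ≠ f v by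
    obtain ⟨f, hf⟩ := this univ
    exact ⟨Coloring.mk f fun h => hf _ (mem_univ _) _ (mem_univ _) h⟩
  intro S
  induction S using Finset.induction_on with
  | empty => exact ⟨fun _ => 0, by simp⟩
  | @insert v S hv ih =>
    obtain ⟨f, hf⟩ := ih
    have hused : #({u ∈ S | G.Adj v u}.image f) < #(univ : Finset (Fin (d + 1))) :=
      card_image_le.trans_lt <| ((G.card_filter_adj_le_degree S v).trans (hG v)).trans_lt (by simp)
    obtain ⟨k, -, hk⟩ := exists_mem_notMem_of_card_lt_card hused
    have hfresh : ∀ u ∈ S, G.Adj v u → f u ≠ k := fun u hu huv hk' =>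
      hk (mem_image.mpr ⟨u, mem_filter.mpr ⟨hu, huv⟩, hk'⟩)
    refine ⟨update f v k, ?_⟩
    have hold : ∀ u ∈ S, update f v k u = f u := fun u hu =>
      update_of_ne (ne_of_mem_of_not_mem hu hv) _ _
    simp only [mem_insert]
    rintro u (rfl | hu) w (rfl | hw) huw
    · exact (G.irrefl huw).elim
    · simpa [hold w hw] using (hfresh w hw huw).symm
    · simpa [hold u hu] using hfresh u hu huw.symm
    · simpa [hold u hu, hold w hw] using hf u hu w hw huw

end Degree

section Density

variable {V : Type*} (H : SimpleGraph V) [DecidableRel H.Adj]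

theorem card_interedges_eq_sum (A B : Finset V) :
    #(H.interedges A B) = ∑ a ∈ A, #{b ∈ B | H.Adj a b} := by
  simp only [interedges_def, card_filter, sum_product]

def IsHereditarilyDense (E D : ℕ) (W₁ W₂ : Finset V) : Prop :=
  ∀ A ⊆ W₁, ∀ B ⊆ W₂, #W₁ ≤ E * #A → #W₂ ≤ E * #B → #A * #B ≤ D * #(H.interedges A B)

def IsSparseTo (k : ℕ) (A B : Finset V) : Prop :=
  ∀ a ∈ A, k * #{b ∈ B | H.Adj a b} ≤ #B

variable {H} {E D k : ℕ} {A B W₁ W₂ : Finset V}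

theorem IsHereditarilyDense.symm (h : H.IsHereditarilyDense E D W₁ W₂) :
    H.IsHereditarilyDense E D W₂ W₁ := by
  intro B hB A hA hBW hAW
  have := H.symm
  rw [mul_comm, interedges, Rel.card_interedges_comm]
  exact h A hA B hB hAW hBW

theorem IsSparseTo.mono {F : ℕ} {A' B' : Finset V} (h : H.IsSparseTo (F * k) A B)
    (hA : A' ⊆ A) (hB : B' ⊆ B) (hF : 0 < F) (hBB : #B ≤ F * #B') : H.IsSparseTo k A' B' := by
  intro a ha
  refine Nat.le_of_mul_le_mul_left ?_ hF
  calc F * (k * #{b ∈ B' | H.Adj a b}) ≤ F * k * #{b ∈ B | H.Adj a b} := by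
        rw [← mul_assoc]; gcongr
    _ ≤ F * #B' := (h a (hA ha)).trans hBB

theorem IsHereditarilyDense.mul_card_lt (h : H.IsHereditarilyDense E D W₁ W₂) (hA : A ⊆ W₁)
    (hB : B ⊆ W₂) (hW₁ : W₁.Nonempty) (hBW : #W₂ ≤ E * #B)
    (hsparse : ∀ a ∈ A, 2 * D * #{b ∈ B | H.Adj a b} < #B) : E * #A < #W₁ := by
  by_contra! hAW
  obtain ⟨a, ha⟩ : A.Nonempty := card_pos.mp (Nat.pos_of_mul_pos_left (hW₁.card_pos.trans_le hAW))
  have hdense := h A hA B hB hAW hBW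
  have hsum : 2 * D * #(H.interedges A B) < #A * #B := by
    calc 2 * D * #(H.interedges A B) = ∑ a ∈ A, 2 * D * #{b ∈ B | H.Adj a b} := by
          rw [card_interedges_eq_sum, mul_sum]
      _ < ∑ _a ∈ A, #B := sum_lt_sum_of_nonempty ⟨a, ha⟩ hsparse
      _ = #A * #B := by rw [sum_const, smul_eq_mul]
  nlinarith

theorem exists_subset_isSparseTo (h : 2 * k * #(H.interedges A B) < #A * #B) :
    ∃ A' ⊆ A, #A ≤ 2 * #A' ∧ H.IsSparseTo k A' B := by
  refine ⟨_, filter_subset _ A,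
    card_le_two_mul_card_filter_mul_le_two_mul_sum A fun a => #{b ∈ B | H.Adj a b}, ?_⟩
  intro a ha
  have hMarkov := (mem_filter.mp ha).2
  rw [← card_interedges_eq_sum] at hMarkov
  have : #A * (k * #{b ∈ B | H.Adj a b}) < #A * #B := by nlinarith
  exact (Nat.lt_of_mul_lt_mul_left this).le

end Density

section Embedding

variable {α V ι : Type*} {G : SimpleGraph α} [DecidableRel G.Adj] {H : SimpleGraph V} [DecidableRel H.Adj]
  {W : ι → Finset V} {col : α → ι} {d D : ℕ}
  {S : Finset α} {φ : α → V} {u v : α} {x : V}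

def embedFactor (d D : ℕ) : ℕ := (2 * D) ^ d * (2 * d + 2)

theorem embedFactor_pos (hD : 0 < D) : 0 < embedFactor d D := by
  unfold embedFactor; positivity

variable (G H W col) in
def cand (φ : α → V) (S : Finset α) (u : α) : Finset V :=
  {x ∈ W (col u) | ∀ w ∈ S, G.Adj u w → H.Adj (φ w) x}

theorem cand_subset : cand G H W col φ S u ⊆ W (col u) := filter_subset _ _

theorem cand_insert [DecidableEq α] (hv : v ∉ S) :
    cand G H W col (update φ v x) (insert v S) u =
      {y ∈ cand G H W col φ S u | G.Adj u v → H.Adj x y} := by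
  ext y
  have hold : ∀ w ∈ S, update φ v x w = φ w := fun w hw =>
    update_of_ne (ne_of_mem_of_not_mem hw hv) _ _
  simp only [cand, mem_filter, forall_mem_insert, update_self]
  rw [forall₂_congr fun w hw => by rw [hold w hw]]
  tauto

-- Invariant of the greedy embedding of `S`: every embedded neighbour of a vertex `u ∉ S` has
-- shrunk the candidate set of `u` by a factor at most `2 * D`.
variable (G H W col D) in
structure IsGoodPartialCopy (S : Finset α) (φ : α → V) : Prop where
  injOn : Set.InjOn φ S
  map_adj : ∀ u ∈ S, ∀ w ∈ S, G.Adj u w → H.Adj (φ u) (φ w)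
  card_le : ∀ u ∉ S, #(W (col u)) ≤ (2 * D) ^ #{w ∈ S | G.Adj u w} * #(cand G H W col φ S u)

theorem isGoodPartialCopy_empty : IsGoodPartialCopy G H W col D ∅ φ where
  injOn := by simp
  map_adj := by simp
  card_le u _ := by simp [cand]

theorem IsGoodPartialCopy.card_le_pow_degree_mul [Fintype α] (h : IsGoodPartialCopy G H W col D S φ)
    (hG : ∀ v, G.degree v ≤ d) (hD : 0 < D) (hu : u ∉ S) :
    #(W (col u)) ≤ (2 * D) ^ d * #(cand G H W col φ S u) := by
  exact (h.card_le u hu).trans (Nat.mul_le_mul_right _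
    (Nat.pow_le_pow_right (by omega) ((G.card_filter_adj_le_degree S u).trans (hG u))))

theorem IsGoodPartialCopy.exists_extension [Fintype α] (h : IsGoodPartialCopy G H W col D S φ)
    (hG : ∀ v, G.degree v ≤ d) (hcol : ∀ u v, G.Adj u v → col u ≠ col v) (hD : 0 < D)
    (hdense : ∀ p q, p ≠ q → H.IsHereditarilyDense (embedFactor d D) D (W p) (W q))
    (hW : ∀ p, embedFactor d D * Fintype.card α ≤ #(W p)) (hv : v ∉ S) :
    ∃ x ∈ cand G H W col φ S v, (∀ w ∈ S, φ w ≠ x) ∧ ∀ u ∉ S, G.Adj v u →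
      #(cand G H W col φ S u) ≤ 2 * D * #{y ∈ cand G H W col φ S u | H.Adj x y} := by
  classical
  set E := embedFactor d D
  set M := #(W (col v))
  have hpowE : (2 * D) ^ d ≤ E := Nat.le_mul_of_pos_right _ (by omega)
  have hE : 0 < E := embedFactor_pos hD
  have hSM : E * #S < M :=
    (Nat.mul_lt_mul_left hE).mpr (card_lt_univ_of_notMem hv) |>.trans_le (hW _)
  let bad u := {x ∈ cand G H W col φ S v |
    2 * D * #{y ∈ cand G H W col φ S u | H.Adj x y} < #(cand G H W col φ S u)}
  let F : Finset α := {u ∈ Sᶜ | G.Adj v u}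
  have hbad : ∀ u ∈ F, E * #(bad u) < M := by
    intro u hu
    obtain ⟨huS, hvu⟩ := mem_filter.mp hu
    exact (hdense _ _ (hcol v u hvu)).mul_card_lt
      ((filter_subset _ _).trans cand_subset) cand_subset
      (card_pos.mp (by omega)) ((h.card_le_pow_degree_mul hG hD (by simpa using huS)).trans (by gcongr))
      fun x hx => (mem_filter.mp hx).2
  have hF : #F ≤ d := (G.card_filter_adj_le_degree _ v).trans (hG v)
  have hcount : E * #(S.image φ ∪ F.biUnion bad) < E * #(cand G H W col φ S v) :=
    calc E * #(S.image φ ∪ F.biUnion bad)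
        ≤ E * #S + ∑ u ∈ F, E * #(bad u) := by
          rw [← mul_sum, ← mul_add]
          exact Nat.mul_le_mul_left _ ((card_union_le _ _).trans
            (add_le_add card_image_le card_biUnion_le))
      _ < M + #F * M := by
          refine add_lt_add_of_lt_of_le hSM ?_
          simpa using sum_le_sum fun u hu => (hbad u hu).le
      _ ≤ (2 * d + 2) * M := by nlinarith
      _ ≤ E * #(cand G H W col φ S v) := by
          have := h.card_le_pow_degree_mul hG hD hv
          simp only [E, embedFactor]; nlinarith
  obtain ⟨x, hxC, hx⟩ := exists_mem_notMem_of_card_lt_card (Nat.lt_of_mul_lt_mul_left hcount)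
  refine ⟨x, hxC, fun w hw hwx => hx (mem_union_left _ (mem_image.mpr ⟨w, hw, hwx⟩)),
    fun u hu hvu => ?_⟩
  by_contra! hlt
  exact hx (mem_union_right _ (mem_biUnion.mpr ⟨u, by simp [F, hu, hvu], mem_filter.mpr ⟨hxC, hlt⟩⟩))

theorem IsGoodPartialCopy.insert [DecidableEq α] (h : IsGoodPartialCopy G H W col D S φ) (hv : v ∉ S)
    (hx : x ∈ cand G H W col φ S v) (hxφ : ∀ w ∈ S, φ w ≠ x)
    (hgood : ∀ u ∉ S, G.Adj v u →
      #(cand G H W col φ S u) ≤ 2 * D * #{y ∈ cand G H W col φ S u | H.Adj x y}) :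
    IsGoodPartialCopy G H W col D (insert v S) (update φ v x) := by
  have hold : ∀ w ∈ S, update φ v x w = φ w := fun w hw =>
    update_of_ne (ne_of_mem_of_not_mem hw hv) _ _
  have hxv : ∀ w ∈ S, G.Adj v w → H.Adj x (φ w) := fun w hw hvw =>
    ((mem_filter.mp hx).2 w hw hvw).symm
  refine ⟨?_, ?_, ?_⟩
  · rw [coe_insert, Set.injOn_insert (by simpa using hv), update_self]
    refine ⟨h.injOn.congr fun w hw => (hold w hw).symm, ?_⟩
    rintro ⟨w, hw, hwx⟩
    exact hxφ w hw (by rwa [hold w hw] at hwx)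
  · simp only [mem_insert]
    rintro u (rfl | hu) w (rfl | hw) huw
    · exact (G.irrefl huw).elim
    · simpa [hold w hw] using hxv w hw huw
    · simpa [hold u hu] using (hxv u hu huw.symm).symm
    · simpa [hold u hu, hold w hw] using h.map_adj u hu w hw huw
  · intro u hu
    obtain ⟨huv, huS⟩ : u ≠ v ∧ u ∉ S := by simpa using hu
    rw [cand_insert hv, filter_insert]
    by_cases huv' : G.Adj u v
    · rw [if_pos huv', card_insert_of_notMem (by simp [hv]), pow_succ, mul_assoc]
      simp only [huv', true_implies]
      exact (h.card_le u huS).trans (Nat.mul_le_mul_left _ (hgood u huS huv'.symm))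
    · simpa [huv'] using h.card_le u huS

theorem isContained_of_isHereditarilyDense [Fintype α] (hG : ∀ v, G.degree v ≤ d)
    (hcol : ∀ u v, G.Adj u v → col u ≠ col v) (hD : 0 < D)
    (hdense : ∀ p q, p ≠ q → H.IsHereditarilyDense (embedFactor d D) D (W p) (W q))
    (hW : ∀ p, embedFactor d D * Fintype.card α ≤ #(W p)) : G ⊑ H := by
  classical
  obtain ⟨φ₀⟩ : Nonempty (α → V) := by
    rcases isEmpty_or_nonempty α with hα | ⟨⟨a⟩⟩
    · exact ⟨isEmptyElim⟩
    · obtain ⟨x, -⟩ : (W (col a)).Nonempty := card_pos.mp <| lt_of_lt_of_le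
        (Nat.mul_pos (embedFactor_pos hD) (Fintype.card_pos_iff.mpr ⟨a⟩)) (hW _)
      exact ⟨fun _ => x⟩
  suffices ∀ S : Finset α, ∃ φ, IsGoodPartialCopy G H W col D S φ by
    obtain ⟨φ, hφ⟩ := this univ
    exact ⟨⟨⟨φ, fun huv => hφ.map_adj _ (mem_univ _) _ (mem_univ _) huv⟩,
      fun a b hab => hφ.injOn (by simp) (by simp) hab⟩⟩
  intro S
  induction S using Finset.induction_on with
  | empty => exact ⟨φ₀, isGoodPartialCopy_empty⟩
  | @insert v S hv ih =>
    obtain ⟨φ, hφ⟩ := ih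
    obtain ⟨x, hx, hxφ, hgood⟩ := hφ.exists_extension hG hcol hD hdense hW hv
    exact ⟨_, hφ.insert hv hx hxφ hgood⟩

end Embedding

section Refinement

variable {V ι κ : Type*} {H : κ → SimpleGraph V} [∀ j, DecidableRel (H j).Adj]

theorem not_forall_isSparseTo [Fintype κ]
    (hcover : ∀ a b, a ≠ b → ∃ j, (H j).Adj a b) {A B : Finset V} {k : ℕ}
    (hAB : Disjoint A B) (hA : A.Nonempty) (hB : B.Nonempty) (hk : Fintype.card κ < k) :
    ¬ ∀ j, (H j).IsSparseTo k A B := by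
  classical
  intro hsparse
  obtain ⟨a, ha⟩ := hA
  have hcov : #B ≤ ∑ j, #{b ∈ B | (H j).Adj a b} := by
    refine (card_le_card fun b hb => ?_).trans card_biUnion_le
    obtain ⟨j, hj⟩ := hcover a b fun hab => Finset.disjoint_left.mp hAB ha (hab ▸ hb)
    exact mem_biUnion.mpr ⟨j, mem_univ _, mem_filter.mpr ⟨hb, hj⟩⟩
  have : k * #B ≤ Fintype.card κ * #B :=
    calc k * #B ≤ ∑ j, k * #{b ∈ B | (H j).Adj a b} := by rw [← mul_sum]; gcongr
      _ ≤ ∑ _j : κ, #B := sum_le_sum fun j _ => hsparse j a ha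
      _ = Fintype.card κ * #B := by simp
  have := Nat.le_of_mul_le_mul_right this (card_pos.mpr hB)
  omega

theorem exists_refinement_of_not_isHereditarilyDense {H' : SimpleGraph V} [DecidableRel H'.Adj]
    {U : ι → Finset V} {p q : ι} {E k : ℕ} (hpq : p ≠ q) (hE : 0 < E)
    (h : ¬ H'.IsHereditarilyDense E (2 * k) (U p) (U q)) :
    ∃ U' : ι → Finset V, (∀ x, U' x ⊆ U x) ∧ (∀ x, #(U x) ≤ 2 * E * #(U' x)) ∧
      H'.IsSparseTo k (U' p) (U' q) := by
  classical
  simp only [IsHereditarilyDense, not_forall, not_le] at h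
  obtain ⟨A, hA, B, hB, hAU, hBU, hlt⟩ := h
  obtain ⟨A', hA'A, hAA', hsparse⟩ := exists_subset_isSparseTo hlt
  refine ⟨update (update U p A') q B, fun x => ?_, fun x => ?_, ?_⟩
  · rcases eq_or_ne x q with rfl | hxq
    · simpa using hB
    rcases eq_or_ne x p with rfl | hxp
    · simpa [hxq] using hA'A.trans hA
    · simp [hxq, hxp]
  · rcases eq_or_ne x q with rfl | hxq
    · simpa using hBU.trans (Nat.mul_le_mul_right _ (by omega))
    rcases eq_or_ne x p with rfl | hxp
    · simpa [hxq] using hAU.trans (by nlinarith)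
    · simpa [hxq, hxp] using Nat.le_mul_of_pos_left _ (by omega)
  · simpa [hpq] using hsparse

theorem forall_isHereditarilyDense_of_forall_notMem [Fintype κ]
    (hcover : ∀ a b, a ≠ b → ∃ j, (H j).Adj a b) {U : ι → Finset V} {T : Finset (κ × ι × ι)}
    {k E D : ℕ} (hk : Fintype.card κ < k) (hdisj : Pairwise (Disjoint on U))
    (hne : ∀ p, (U p).Nonempty) (hmarks : ∀ j p q, (j, p, q) ∈ T → (H j).IsSparseTo k (U p) (U q))
    (hdense : ∀ j p q, p ≠ q → (j, p, q) ∉ T → (H j).IsHereditarilyDense E D (U p) (U q)) :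
    ∀ p q, p ≠ q → ∃ j, (H j).IsHereditarilyDense E D (U p) (U q) := by
  intro p q hpq
  by_contra! hnone
  exact not_forall_isSparseTo hcover (hdisj hpq) (hne p) (hne q) hk fun j =>
    hmarks j p q (not_not.mp fun hj => hnone j (hdense j p q hpq hj))

-- `levelSize c d m * n` is the part size needed while up to `m` refinement steps remain: a step
-- shrinks parts by the factor `2 * embedFactor d D`, and on termination they must still have
-- size `embedFactor d D * n`.
def levelSize (c d : ℕ) : ℕ → ℕ
  | 0 => 1
  | m + 1 => 2 * embedFactor d (2 * ((c + 1) * levelSize c d m)) * levelSize c d m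

theorem levelSize_pos {c d : ℕ} : ∀ m, 0 < levelSize c d m
  | 0 => Nat.one_pos
  | m + 1 => by
    have := levelSize_pos (c := c) (d := d) m
    have := embedFactor_pos (d := d) (D := 2 * ((c + 1) * levelSize c d m)) (by positivity)
    simp only [levelSize]; positivity

-- A mark `(j, p, q) ∈ T` records that `U p` is sparse to `U q` in colour `j`.
variable (H) in
structure IsMarkedFamily (c d s m : ℕ) (U : ι → Finset V) (T : Finset (κ × ι × ι)) : Prop where
  disjoint : Pairwise (Disjoint on U)
  card_le : ∀ p, levelSize c d m * s ≤ #(U p)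
  isSparseTo : ∀ j p q, (j, p, q) ∈ T → (H j).IsSparseTo ((c + 1) * levelSize c d m) (U p) (U q)

theorem IsMarkedFamily.refine [DecidableEq κ] [DecidableEq ι] {c d s m : ℕ} {U : ι → Finset V}
    {T : Finset (κ × ι × ι)} {j : κ} {p q : ι} (h : IsMarkedFamily H c d s (m + 1) U T)
    (hpq : p ≠ q) (hnd : ¬ (H j).IsHereditarilyDense (embedFactor d (2 * ((c + 1) * levelSize c d m)))
      (2 * ((c + 1) * levelSize c d m)) (U p) (U q)) :
    ∃ U', IsMarkedFamily H c d s m U' (insert (j, p, q) T) := by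
  set g := levelSize c d m
  set E := embedFactor d (2 * ((c + 1) * g))
  have hE : 0 < E := embedFactor_pos (by have := levelSize_pos (c := c) (d := d) m; positivity)
  obtain ⟨U', hsub, hshrink, hsparse⟩ := exists_refinement_of_not_isHereditarilyDense hpq hE hnd
  have hk : (c + 1) * levelSize c d (m + 1) = 2 * E * ((c + 1) * g) := by
    show (c + 1) * (2 * E * g) = _
    ring
  refine ⟨U', fun x y hxy => (h.disjoint hxy).mono (hsub x) (hsub y), fun x => ?_, ?_⟩
  · refine Nat.le_of_mul_le_mul_left ?_ (by positivity : 0 < 2 * E)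
    calc 2 * E * (g * s) = levelSize c d (m + 1) * s := by
          show _ = 2 * E * g * s
          ring
      _ ≤ 2 * E * #(U' x) := (h.card_le x).trans (hshrink x)
  intro j' p' q' h'
  rcases mem_insert.mp h' with h' | h'
  · obtain ⟨rfl, rfl, rfl⟩ : j' = j ∧ p' = p ∧ q' = q := by simpa using h'
    exact hsparse
  have := h.isSparseTo j' p' q' h'
  rw [hk] at this
  exact this.mono (hsub p') (hsub q') (by positivity) (hshrink q')

variable [Fintype ι] [Fintype κ]

-- Every refinement step adds a mark, which bounds the number of steps.
theorem IsMarkedFamily.exists_isHereditarilyDense (hcover : ∀ a b, a ≠ b → ∃ j, (H j).Adj a b)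
    {c d s : ℕ} (hc : Fintype.card κ ≤ c) (hs : 0 < s) :
    ∀ {m : ℕ} {U : ι → Finset V} {T : Finset (κ × ι × ι)}, IsMarkedFamily H c d s m U T →
      Fintype.card (κ × ι × ι) < #T + m →
      ∃ D > 0, ∃ U' : ι → Finset V, (∀ p, embedFactor d D * s ≤ #(U' p)) ∧
        ∀ p q, p ≠ q → ∃ j, (H j).IsHereditarilyDense (embedFactor d D) D (U' p) (U' q)
  | 0, _, T, _, hT => absurd (card_le_univ T) (by omega)
  | m + 1, U, T, h, hT => by
    classical
    set g := levelSize c d m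
    set D := 2 * ((c + 1) * g)
    have hg : 0 < g := levelSize_pos m
    have hsize : ∀ p, 2 * embedFactor d D * g * s ≤ #(U p) := h.card_le
    by_cases hdense : ∀ j p q, p ≠ q → (j, p, q) ∉ T →
        (H j).IsHereditarilyDense (embedFactor d D) D (U p) (U q)
    · refine ⟨D, by positivity, U, fun p => le_trans ?_ (hsize p),
        forall_isHereditarilyDense_of_forall_notMem hcover ?_ h.disjoint
          (fun p => card_pos.mp ((Nat.mul_pos (levelSize_pos _) hs).trans_le (h.card_le p)))
          h.isSparseTo hdense⟩
      · nlinarith [Nat.mul_le_mul_left (embedFactor d D * s) (show 1 ≤ 2 * g by omega)]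
      · have := levelSize_pos (c := c) (d := d) (m + 1)
        nlinarith
    push Not at hdense
    obtain ⟨j, p, q, hpq, hjT, hnd⟩ := hdense
    obtain ⟨U', h'⟩ := h.refine hpq hnd
    exact h'.exists_isHereditarilyDense hcover hc hs (by rw [card_insert_of_notMem hjT]; omega)

end Refinement

end SimpleGraph

theorem CRST_multicolor_general (c d : ℕ) (hc : 0 < c) :
    ∃ C : ℕ, ∀ (n : ℕ) (G : SimpleGraph (Fin n)),
      (∀ v : Fin n, (G.neighborSet v).ncard ≤ d) →
      ∀ χ : Sym2 (Fin (C * n)) → Fin c,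
        ∃ (i : Fin c) (φ : Fin n → Fin (C * n)),
          Function.Injective φ ∧ ∀ u v, G.Adj u v → χ s(φ u, φ v) = i := by
  classical
  set K := (c + 1) ^ (c * d + 1)
  set R := c * (K * K) + 1
  refine ⟨K * SimpleGraph.levelSize c d R, fun n G hG χ => ?_⟩
  obtain rfl | hn := n.eq_zero_or_pos
  · exact ⟨⟨0, hc⟩, Fin.elim0, fun a => a.elim0, fun a => a.elim0⟩
  let H (i : Fin c) := SimpleGraph.fromEdgeSet {e | χ e = i}
  have hcover : ∀ a b, a ≠ b → ∃ i, (H i).Adj a b := fun a b hab => ⟨χ s(a, b), by simp [H, hab]⟩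
  obtain ⟨U, hUdisj, hUcard⟩ := exists_pairwise_disjoint_card_eq (ι := Fin K)
    (α := Fin (K * SimpleGraph.levelSize c d R * n)) (SimpleGraph.levelSize c d R * n)
    (by simp [mul_assoc])
  obtain ⟨D, hD, U', hU'size, hU'dense⟩ := SimpleGraph.IsMarkedFamily.exists_isHereditarilyDense
    hcover (by simp) hn (T := ∅) ⟨hUdisj, fun p => (hUcard p).ge, by simp⟩ (by simp [R])
  have := Fin.pos_iff_nonempty.mp hc
  obtain ⟨i, f, hf, hfi⟩ := exists_injective_forall_ne_of_pow_le_card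
    (fun j p q => (H j).IsHereditarilyDense (SimpleGraph.embedFactor d D) D (U' p) (U' q))
    (fun _ _ _ h => h.symm) hU'dense d (by simp [K])
  have hGdeg : ∀ v, G.degree v ≤ d := fun v => G.ncard_neighborSet_eq_degree v ▸ hG v
  obtain ⟨col⟩ := G.colorable_succ_of_forall_degree_le hGdeg
  obtain ⟨φ⟩ := SimpleGraph.isContained_of_isHereditarilyDense (W := fun a => U' (f a)) hGdeg
    (fun _ _ => col.valid) hD hfi (fun a => by simpa using hU'size (f a))
  exact ⟨i, φ, φ.injective, fun u v huv => by
    simpa [H] using (φ.toHom.map_adj huv).1⟩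

/-- Chvátal–Rödl–Szemerédi–Trotter, multicolor version: for all positive integers
`c` and `d` there is a constant `C` such that for every graph `G` on `n` vertices
with maximum degree at most `d`, every `c`-coloring of the edges of the complete
graph on `C·n` vertices contains a monochromatic copy of `G`; i.e. `R_c(G) ≤ C·n`. -/
theorem CRST_multicolor (c d : ℕ) (hc : 0 < c) (hd : 0 < d) :
    ∃ C : ℕ, ∀ (n : ℕ) (G : SimpleGraph (Fin n)),
      (∀ v : Fin n, (G.neighborSet v).ncard ≤ d) →
      ∀ χ : Sym2 (Fin (C * n)) → Fin c,
        ∃ (i : Fin c) (φ : Fin n → Fin (C * n)),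
          Function.Injective φ ∧ ∀ u v, G.Adj u v → χ s(φ u, φ v) = i :=
  CRST_multicolor_general c d hc
end

section
/- Let k ≥ 2 and s ≥ 2 be integers, and let H be a hypergraph on a vertex set V of n vertices in which every edge has cardinality at most k and the number of edges is at most C(n,2) (the binomial coefficient n choose 2). If n ≥ (k³/12)·s³, then there exists a set S ⊆ V with |S| = s such that |h ∩ S| ≤ 2 for every edge h of H. -/
open Finset

private lemma two_mul_choose_two (m : ℕ) : 2 * m.choose 2 = m * (m - 1) := by
  have h := Nat.descFactorial_eq_factorial_mul_choose m 2
  simp [Nat.descFactorial_succ, Nat.descFactorial_zero, Nat.factorial] at h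
  rw [← h]; ring

private lemma six_mul_choose_three (m : ℕ) : 6 * m.choose 3 = m * (m - 1) * (m - 2) := by
  have h := Nat.descFactorial_eq_factorial_mul_choose m 3
  simp [Nat.descFactorial_succ, Nat.descFactorial_zero, Nat.factorial] at h
  rw [← h]; ring

private lemma count_supersets {α : Type*} [Fintype α] [DecidableEq α] (T : Finset α) (a : ℕ)
    (hTa : T.card ≤ a) :
    ((Finset.univ.powersetCard a).filter (fun S => T ⊆ S)).card
      = (Fintype.card α - T.card).choose (a - T.card) := by
  have : ((Finset.univ.powersetCard a).filter (fun S => T ⊆ S)).card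
      = ((Finset.univ \ T).powersetCard (a - T.card)).card := by
    apply Finset.card_nbij' (fun S => S \ T) (fun U => U ∪ T)
    · intro S hS
      simp only [mem_coe, mem_filter, mem_powersetCard] at hS
      obtain ⟨⟨-, hScard⟩, hTS⟩ := hS
      rw [mem_coe, mem_powersetCard]
      exact ⟨sdiff_subset_sdiff (subset_univ S) le_rfl, by rw [card_sdiff_of_subset hTS, hScard]⟩
    · intro U hU
      rw [mem_coe, mem_powersetCard] at hU
      obtain ⟨hU1, hU2⟩ := hU
      have hd : Disjoint U T := disjoint_right.mpr fun x hxT hxU => (mem_sdiff.mp (hU1 hxU)).2 hxT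
      rw [mem_coe, mem_filter, mem_powersetCard]
      refine ⟨⟨subset_univ _, ?_⟩, subset_union_right⟩
      rw [card_union_of_disjoint hd, hU2]
      omega
    · intro S hS
      simp only [mem_coe, mem_filter] at hS
      exact sdiff_union_of_subset hS.2
    · intro U hU
      rw [mem_coe, mem_powersetCard] at hU
      have hd : Disjoint U T := disjoint_right.mpr fun x hxT hxU => (mem_sdiff.mp (hU.1 hxU)).2 hxT
      exact union_sdiff_cancel_right hd
  rw [this, card_powersetCard, card_sdiff_of_subset (subset_univ T), card_univ]

private lemma key_ineq (k s c n : ℕ) (hk : 3 ≤ k) (hs : 3 ≤ s) (hc : s / 2 = c)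
    (hn : k^3 * s^3 ≤ 12 * n) :
    k*(k-1)*(k-2)*((s+c)*(s+c-1)*(s+c-2)) < 12*(c+1)*(n-2) := by
  obtain ⟨k', rfl⟩ : ∃ k', k = k' + 3 := ⟨k - 3, by omega⟩
  obtain ⟨n', rfl⟩ : ∃ n', n = n' + 2 := by
    have h1 : 27 ≤ (k'+3)^3 := by
      calc 27 = 3^3 := by norm_num
      _ ≤ (k'+3)^3 := Nat.pow_le_pow_left (by omega) 3
    have h2 : 27 ≤ s^3 := by
      calc 27 = 3^3 := by norm_num
      _ ≤ s^3 := Nat.pow_le_pow_left hs 3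
    have h3 : 27*27 ≤ (k'+3)^3 * s^3 := Nat.mul_le_mul h1 h2
    refine ⟨n - 2, by omega⟩
  rcases Nat.even_or_odd s with he | ho
  · obtain ⟨c', rfl⟩ : ∃ c', s = 2 * c' + 4 := by
      obtain ⟨t, rfl⟩ := he; exact ⟨t - 2, by omega⟩
    have hcc : c = c' + 2 := by omega
    subst hcc
    have e1 : k' + 3 - 1 = k' + 2 := by omega
    have e2 : k' + 3 - 2 = k' + 1 := by omega
    have e3 : 2*c'+4 + (c'+2) - 1 = 3*c' + 5 := by omega
    have e4 : 2*c'+4 + (c'+2) - 2 = 3*c' + 4 := by omega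
    rw [e1, e2, e3, e4, Nat.add_sub_cancel]
    nlinarith [sq_nonneg k', sq_nonneg c', sq_nonneg (k'*c'), Nat.zero_le (k'*c'*c'), Nat.zero_le (k'*k'*c')]
  · obtain ⟨c', rfl⟩ : ∃ c', s = 2 * c' + 3 := by
      obtain ⟨t, ht⟩ := ho; exact ⟨t - 1, by omega⟩
    have hcc : c = c' + 1 := by omega
    subst hcc
    have e1 : k' + 3 - 1 = k' + 2 := by omega
    have e2 : k' + 3 - 2 = k' + 1 := by omega
    have e3 : 2*c'+3 + (c'+1) - 1 = 3*c' + 3 := by omega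
    have e4 : 2*c'+3 + (c'+1) - 2 = 3*c' + 2 := by omega
    rw [e1, e2, e3, e4, Nat.add_sub_cancel]
    nlinarith [sq_nonneg k', sq_nonneg c', sq_nonneg (k'*c'), Nat.zero_le (k'*c'*c'), Nat.zero_le (k'*k'*c')]

/-- If every edge of a hypergraph `H` on `n` vertices has cardinality at most `k`,
the number of edges is at most `C(n,2)`, and `n ≥ (k³/12)·s³` (with `k, s ≥ 2`),
then there is a set `S` of `s` vertices meeting every edge in at most 2 vertices. -/
theorem exists_set_small_trace (n k s : ℕ) (hk : 2 ≤ k) (hs : 2 ≤ s)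
    (H : Finset (Finset (Fin n)))
    (hcard : ∀ h ∈ H, h.card ≤ k)
    (hm : H.card ≤ n.choose 2)
    (hn : ((k : ℝ) ^ 3 / 12) * (s : ℝ) ^ 3 ≤ (n : ℝ)) :
    ∃ S : Finset (Fin n), S.card = s ∧ ∀ h ∈ H, (h ∩ S).card ≤ 2 := by
  -- basic arithmetic consequences
  have hn12 : k ^ 3 * s ^ 3 ≤ 12 * n := by
    have : ((k:ℝ)^3 * (s:ℝ)^3 : ℝ) ≤ 12 * (n:ℝ) := by nlinarith
    exact_mod_cast this
  have hsn : s ≤ n := by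
    have h8 : 8 ≤ k^3 := by
      calc 8 = 2^3 := by norm_num
      _ ≤ k^3 := Nat.pow_le_pow_left hk 3
    have hss : 2*s ≤ s^3 := by
      calc 2*s = 2*s*1 := by ring
      _ ≤ s*s*s := Nat.mul_le_mul (Nat.mul_le_mul hs le_rfl) (by omega)
      _ = s^3 := by ring
    have h16 : 8*(2*s) ≤ k^3 * s^3 := Nat.mul_le_mul h8 hss
    omega
  -- trivial cases
  by_cases hk3 : k < 3
  · obtain ⟨S, hS, hScard⟩ := exists_subset_card_eq (show s ≤ (univ : Finset (Fin n)).card by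
      simpa using hsn)
    refine ⟨S, hScard, fun h hh => ?_⟩
    calc (h ∩ S).card ≤ h.card := card_le_card inter_subset_left
    _ ≤ k := hcard h hh
    _ ≤ 2 := by omega
  by_cases hs3 : s < 3
  · obtain ⟨S, hS, hScard⟩ := exists_subset_card_eq (show s ≤ (univ : Finset (Fin n)).card by
      simpa using hsn)
    refine ⟨S, hScard, fun h hh => ?_⟩
    calc (h ∩ S).card ≤ S.card := card_le_card inter_subset_right
    _ ≤ 2 := by omega
  push_neg at hk3 hs3
  -- main case
  set c := s / 2 with hc
  set a := s + c with ha
  have hc1 : 1 ≤ c := by omega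
  have h243 : 27*(9*s) ≤ 12*n := by
    have h27 : 27 ≤ k^3 := by
      calc 27 = 3^3 := by norm_num
      _ ≤ k^3 := Nat.pow_le_pow_left hk3 3
    have h27s : 27 * s^3 ≤ 12 * n := le_trans (Nat.mul_le_mul_right _ h27) hn12
    have h9s : 9 * s ≤ s^3 := by
      calc 9 * s = 3*3*s := by ring
      _ ≤ s*s*s := Nat.mul_le_mul (Nat.mul_le_mul hs3 hs3) le_rfl
      _ = s^3 := by ring
    exact le_trans (Nat.mul_le_mul_left 27 h9s) h27s
  have han : a ≤ n := by omega
  have ha4 : 4 ≤ a := by omega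
  have hn6 : 6 ≤ n := by omega
  -- the set of bad triples
  classical
  set bad : Finset (Finset (Fin n)) := H.biUnion (fun h => h.powersetCard 3) with hbad
  have hbad_mem : ∀ T ∈ bad, (∃ h ∈ H, T ⊆ h) ∧ T.card = 3 := by
    intro T hT
    rw [hbad, mem_biUnion] at hT
    obtain ⟨h, hh, hTh⟩ := hT
    rw [mem_powersetCard] at hTh
    exact ⟨⟨h, hh, hTh.1⟩, hTh.2⟩
  have hbad_card : bad.card ≤ n.choose 2 * k.choose 3 := by
    calc bad.card ≤ ∑ h ∈ H, (h.powersetCard 3).card := card_biUnion_le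
    _ ≤ ∑ _h ∈ H, k.choose 3 := by
        apply Finset.sum_le_sum
        intro h hh
        rw [card_powersetCard]
        exact Nat.choose_le_choose 3 (hcard h hh)
    _ = H.card * k.choose 3 := by rw [Finset.sum_const, smul_eq_mul]
    _ ≤ n.choose 2 * k.choose 3 := Nat.mul_le_mul_right _ hm
  -- key counting inequality
  have hKA := key_ineq k s c n hk3 hs3 rfl hn12
  have l2 : 2 * n.choose 2 = n * (n-1) := two_mul_choose_two n
  have l3k : 6 * k.choose 3 = k * (k-1) * (k-2) := six_mul_choose_three k
  have l3a : 6 * a.choose 3 = a * (a-1) * (a-2) := six_mul_choose_three a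
  have l3n : 6 * n.choose 3 = n * (n-1) * (n-2) := six_mul_choose_three n
  have hnpos : 0 < n * (n-1) := by
    apply Nat.mul_pos <;> omega
  have hP : n.choose 2 * k.choose 3 * a.choose 3 < (c+1) * n.choose 3 := by
    have hmul : n*(n-1) * ((k*(k-1)*(k-2)) * ((s+c)*(s+c-1)*(s+c-2)))
        < n*(n-1) * (12*(c+1)*(n-2)) := by
      exact (Nat.mul_lt_mul_left hnpos).mpr hKA
    have h72 : (n.choose 2 * k.choose 3 * a.choose 3) * 72 < ((c+1) * n.choose 3) * 72 := by
      calc (n.choose 2 * k.choose 3 * a.choose 3) * 72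
          = (2*n.choose 2) * ((6*k.choose 3) * (6*a.choose 3)) := by ring
      _ = (n*(n-1)) * ((k*(k-1)*(k-2)) * (a*(a-1)*(a-2))) := by rw [l2, l3k, l3a]
      _ = n*(n-1) * ((k*(k-1)*(k-2)) * ((s+c)*(s+c-1)*(s+c-2))) := by rw [ha]
      _ < n*(n-1) * (12*(c+1)*(n-2)) := hmul
      _ = 12*(c+1) * (n*(n-1)*(n-2)) := by ring
      _ = 12*(c+1) * (6 * n.choose 3) := by rw [l3n]
      _ = ((c+1) * n.choose 3) * 72 := by ring
    exact (Nat.mul_lt_mul_right (by norm_num : (0:ℕ) < 72)).mp h72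
  have hchoose_pos_n3 : 0 < (n-3).choose (a-3) := Nat.choose_pos (by omega)
  have hchoose_pos_a3 : 0 < a.choose 3 := Nat.choose_pos (by omega)
  have hid : n.choose a * a.choose 3 = n.choose 3 * (n-3).choose (a-3) :=
    Nat.choose_mul (by omega)
  have key2 : n.choose 2 * k.choose 3 * (n-3).choose (a-3) < (c+1) * n.choose a := by
    have h1 : (n.choose 2 * k.choose 3 * a.choose 3) * (n-3).choose (a-3)
        < ((c+1) * n.choose 3) * (n-3).choose (a-3) :=
      (Nat.mul_lt_mul_right hchoose_pos_n3).mpr hP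
    have h2 : (n.choose 2 * k.choose 3 * (n-3).choose (a-3)) * a.choose 3
        < ((c+1) * n.choose a) * a.choose 3 := by
      calc (n.choose 2 * k.choose 3 * (n-3).choose (a-3)) * a.choose 3
          = (n.choose 2 * k.choose 3 * a.choose 3) * (n-3).choose (a-3) := by ring
      _ < ((c+1) * n.choose 3) * (n-3).choose (a-3) := h1
      _ = (c+1) * (n.choose 3 * (n-3).choose (a-3)) := by ring
      _ = (c+1) * (n.choose a * a.choose 3) := by rw [hid]
      _ = ((c+1) * n.choose a) * a.choose 3 := by ring
    exact (Nat.mul_lt_mul_right hchoose_pos_a3).mp h2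
  -- averaging: find S₀ of size a with few bad triples inside
  set P : Finset (Finset (Fin n)) := (univ : Finset (Fin n)).powersetCard a with hPdef
  have hPcard : P.card = n.choose a := by rw [hPdef, card_powersetCard, card_univ, Fintype.card_fin]
  have hsum : ∑ S ∈ P, (bad.filter (· ⊆ S)).card = bad.card * (n-3).choose (a-3) := by
    calc ∑ S ∈ P, (bad.filter (· ⊆ S)).card
        = ∑ S ∈ P, ∑ T ∈ bad, if T ⊆ S then 1 else 0 := by
          apply Finset.sum_congr rfl; intro S _; exact Finset.card_filter _ _
    _ = ∑ T ∈ bad, ∑ S ∈ P, if T ⊆ S then 1 else 0 := Finset.sum_comm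
    _ = ∑ T ∈ bad, (P.filter (fun S => T ⊆ S)).card := by
          apply Finset.sum_congr rfl; intro T _; exact (Finset.card_filter _ _).symm
    _ = ∑ T ∈ bad, (n-3).choose (a-3) := by
          apply Finset.sum_congr rfl
          intro T hT
          have h3 : T.card = 3 := (hbad_mem T hT).2
          rw [hPdef, count_supersets T a (by rw [h3]; omega), Fintype.card_fin, h3]
    _ = bad.card * (n-3).choose (a-3) := by rw [Finset.sum_const, smul_eq_mul]
  have hexists : ∃ S₀ ∈ P, (bad.filter (· ⊆ S₀)).card ≤ c := by
    by_contra hno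
    push_neg at hno
    have hlow : P.card • (c+1) ≤ ∑ S ∈ P, (bad.filter (· ⊆ S)).card :=
      Finset.card_nsmul_le_sum P _ _ (fun S hS => hno S hS)
    rw [hsum, hPcard, smul_eq_mul] at hlow
    have hup : bad.card * (n-3).choose (a-3) ≤ (n.choose 2 * k.choose 3) * (n-3).choose (a-3) :=
      Nat.mul_le_mul_right _ hbad_card
    rw [mul_comm] at hlow
    exact lt_irrefl _ ((hlow.trans hup).trans_lt key2)
  obtain ⟨S₀, hS₀P, hS₀few⟩ := hexists
  have hS₀card : S₀.card = a := by
    rw [hPdef, mem_powersetCard] at hS₀P; exact hS₀P.2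
  -- delete one vertex from each bad triple inside S₀
  set F : Finset (Finset (Fin n)) := bad.filter (· ⊆ S₀) with hF
  have hF3 : ∀ T ∈ F, T.Nonempty := by
    intro T hT
    rw [hF, mem_filter] at hT
    have := (hbad_mem T hT.1).2
    rw [← card_pos, this]; norm_num
  set D : Finset (Fin n) := F.attach.image (fun T => T.1.min' (hF3 T.1 T.2)) with hD
  have hDcard : D.card ≤ c := by
    calc D.card ≤ F.attach.card := card_image_le
    _ = F.card := card_attach
    _ ≤ c := hS₀few
  have hS₁ : s ≤ (S₀ \ D).card := by
    have := le_card_sdiff D S₀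
    omega
  obtain ⟨S, hSsub, hScard⟩ := exists_subset_card_eq hS₁
  refine ⟨S, hScard, fun h hh => ?_⟩
  by_contra hgt
  push_neg at hgt
  obtain ⟨T, hTsub, hT3⟩ := exists_subset_card_eq (show 3 ≤ (h ∩ S).card by omega)
  have hTS : T ⊆ S := hTsub.trans inter_subset_right
  have hTbad : T ∈ bad := by
    rw [hbad, mem_biUnion]
    exact ⟨h, hh, mem_powersetCard.mpr ⟨hTsub.trans inter_subset_left, hT3⟩⟩
  have hTF : T ∈ F := by
    rw [hF, mem_filter]
    exact ⟨hTbad, (hTS.trans hSsub).trans sdiff_subset⟩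
  have hxD : T.min' (hF3 T hTF) ∈ D := by
    rw [hD]
    exact mem_image_of_mem _ (mem_attach F ⟨T, hTF⟩)
  have hxS : T.min' (hF3 T hTF) ∈ S₀ \ D := hSsub (hTS (T.min'_mem _))
  exact (mem_sdiff.mp hxS).2 hxD
end

section
/- Let k ≥ 2 and t ≥ 3 be integers, and let H be a k-uniform hypergraph on n vertices in which every pair of distinct vertices is contained in exactly one edge. If e·C(t,2)·C(k,2)·C(n−2, t−2)·2^{1−C(t,2)} < 1 (where e is Euler's number), then there exists a 2-edge-coloring of H that contains no monochromatic Berge copy of the complete graph K_t. -/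
open Finset Real

section Avoiding

variable {Ω κ : Type*} [Fintype Ω] [DecidableEq Ω] (A : κ → Finset Ω)

def avoiding (T : Finset κ) : Finset Ω := {σ | ∀ j ∈ T, σ ∉ A j}

variable {A}

@[simp]
lemma mem_avoiding {T : Finset κ} {σ : Ω} : σ ∈ avoiding A T ↔ ∀ j ∈ T, σ ∉ A j := by
  simp [avoiding]

@[simp]
lemma avoiding_empty : avoiding A ∅ = univ := by
  ext; simp

lemma avoiding_anti : Antitone (avoiding A) :=
  fun _ _ hT _ hσ ↦ mem_avoiding.2 fun j hj ↦ mem_avoiding.1 hσ j (hT hj)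

variable [DecidableEq κ]

lemma card_avoiding_insert (j : κ) (T : Finset κ) :
    (#(avoiding A (insert j T)) : ℝ) = #(avoiding A T) - #(A j ∩ avoiding A T) := by
  have hins : avoiding A (insert j T) = avoiding A T \ A j := by
    ext σ; simp [and_comm]
  rw [hins, eq_sub_iff_add_eq, inter_comm]
  exact_mod_cast card_sdiff_add_card_inter _ _

lemma one_sub_pow_mul_card_avoiding_le {x : ℝ} (hx : x ≤ 1) (U V : Finset κ)
    (hstep : ∀ a ∈ V, ∀ W ⊆ V, a ∉ W →
      (#(A a ∩ avoiding A (U ∪ W)) : ℝ) ≤ x * #(avoiding A (U ∪ W))) :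
    (1 - x) ^ #V * #(avoiding A U) ≤ #(avoiding A (U ∪ V)) := by
  induction V using Finset.induction_on with
  | empty => simp
  | insert a V ha ih =>
    have hV := ih fun b hb W hW ↦ hstep b (mem_insert_of_mem hb) W (hW.trans (subset_insert a V))
    have ha' := hstep a (mem_insert_self a V) V (subset_insert a V) ha
    rw [card_insert_of_notMem ha, union_insert, card_avoiding_insert, pow_succ]
    nlinarith [mul_le_mul_of_nonneg_right hV (sub_nonneg.2 hx)]

end Avoiding

section Product

variable {ι β : Type*}

def DeterminedBy (s : Finset ι) (P : Finset (ι → β)) : Prop :=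
  ∀ ⦃σ τ : ι → β⦄, (∀ i ∈ s, σ i = τ i) → σ ∈ P → τ ∈ P

variable [Fintype ι] [DecidableEq ι] [Fintype β] [DecidableEq β]

lemma card_inter_mul_card_eq {s : Finset ι} {P Q : Finset (ι → β)} (hP : DeterminedBy s P)
    (hQ : DeterminedBy sᶜ Q) : #(P ∩ Q) * Fintype.card (ι → β) = #P * #Q := by
  rw [← card_univ, ← card_product, ← card_product]
  -- exchanging the coordinates in `s` maps `(P ∩ Q) × univ` bijectively onto `P × Q`
  let swap (p : (ι → β) × (ι → β)) : (ι → β) × (ι → β) :=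
    (s.piecewise p.1 p.2, s.piecewise p.2 p.1)
  have hswap : ∀ p, swap (swap p) = p := fun p ↦ by
    ext i <;> by_cases hi : i ∈ s <;> simp [swap, hi]
  refine card_nbij' swap swap (fun p hp ↦ ?_) (fun p hp ↦ ?_) (fun p _ ↦ hswap p)
    (fun p _ ↦ hswap p)
  · simp only [coe_product, Set.mem_prod, coe_inter, Set.mem_inter_iff, mem_coe] at hp ⊢
    exact ⟨hP (fun i hi ↦ by simp [swap, hi]) hp.1.1,
      hQ (fun i hi ↦ by simp [swap, mem_compl.1 hi]) hp.1.2⟩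
  · simp only [coe_product, Set.mem_prod, coe_inter, Set.mem_inter_iff, mem_coe, coe_univ,
      Set.mem_univ, and_true] at hp ⊢
    exact ⟨hP (fun i hi ↦ by simp [swap, hi]) hp.1,
      hQ (fun i hi ↦ by simp [swap, mem_compl.1 hi]) hp.2⟩

lemma determinedBy_compl_avoiding {κ : Type*} {A : κ → Finset (ι → β)} {supp : κ → Finset ι}
    {s : Finset ι} {T : Finset κ} (hA : ∀ j ∈ T, DeterminedBy (supp j) (A j))
    (hT : ∀ j ∈ T, Disjoint s (supp j)) : DeterminedBy sᶜ (avoiding A T) := by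
  intro σ τ hστ hσ
  refine mem_avoiding.2 fun j hj hτ ↦ mem_avoiding.1 hσ j hj ?_
  exact hA j hj (fun i hi ↦ (hστ i (mem_compl.2 (disjoint_right.1 (hT j hj) hi))).symm) hτ

end Product

lemma one_le_exp_one_mul_div_pow (m : ℕ) : 1 ≤ exp 1 * ((m : ℝ) / (m + 1)) ^ m := by
  rcases Nat.eq_zero_or_pos m with rfl | hm
  · simp
  have hm' : (0 : ℝ) < m := by exact_mod_cast hm
  have hbase : ((m : ℝ) + 1) / m ≤ exp (1 / m) := by
    rw [add_div, div_self hm'.ne', add_comm]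
    exact Real.add_one_le_exp _
  have hpow : (((m : ℝ) + 1) / m) ^ m ≤ exp 1 := by
    calc (((m : ℝ) + 1) / m) ^ m ≤ exp (1 / m) ^ m := by gcongr
      _ = exp 1 := by rw [← Real.exp_nat_mul, mul_one_div_cancel hm'.ne']
  calc (1 : ℝ) = (((m : ℝ) + 1) / m) ^ m * ((m : ℝ) / (m + 1)) ^ m := by
        rw [← mul_pow, div_mul_div_comm, mul_comm, div_self (by positivity), one_pow]
    _ ≤ exp 1 * ((m : ℝ) / (m + 1)) ^ m := by gcongr

section LocalLemma

variable {ι β κ : Type*} [Fintype ι] [DecidableEq ι] [Fintype β] [DecidableEq β] [Nonempty β]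
  [DecidableEq κ] {J : Finset κ} {supp : κ → Finset ι} {A : κ → Finset (ι → β)} {Γ : κ → Finset κ}

theorem card_inter_avoiding_le {d : ℕ} {x : ℝ} (hx₀ : 0 ≤ x) (hx₁ : x ≤ 1)
    (hA : ∀ j ∈ J, DeterminedBy (supp j) (A j)) (hΓ : ∀ j ∈ J, #(Γ j) ≤ d)
    (hdisj : ∀ j ∈ J, ∀ j' ∈ J, j' ≠ j → j' ∉ Γ j → Disjoint (supp j) (supp j'))
    (hp : ∀ j ∈ J, (#(A j) : ℝ) ≤ x * (1 - x) ^ d * Fintype.card (ι → β))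
    {T : Finset κ} (hTJ : T ⊆ J) {j : κ} (hj : j ∈ J) (hjT : j ∉ T) :
    (#(A j ∩ avoiding A T) : ℝ) ≤ x * #(avoiding A T) := by
  induction T using Finset.strongInduction generalizing j with
  | H T ih =>
    -- `A j` is independent of avoiding the events of `far`, which share no coordinate with it;
    -- by induction, also avoiding the at most `d` events of `near` costs a factor `(1 - x) ^ d`.
    set near := T.filter (· ∈ Γ j)
    set far := T.filter (· ∉ Γ j)
    have hΩ : (0 : ℝ) < Fintype.card (ι → β) := by exact_mod_cast Fintype.card_pos
    have hindep : (#(A j ∩ avoiding A far) : ℝ) * Fintype.card (ι → β) =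
        #(A j) * #(avoiding A far) := by
      refine mod_cast card_inter_mul_card_eq (hA j hj) (determinedBy_compl_avoiding
        (fun j' hj' ↦ hA j' (hTJ (filter_subset _ _ hj'))) fun j' hj' ↦ ?_)
      obtain ⟨hj'T, hj'Γ⟩ := mem_filter.1 hj'
      exact hdisj j hj j' (hTJ hj'T) (ne_of_mem_of_not_mem hj'T hjT) hj'Γ
    have hnear : #near ≤ d :=
      (card_le_card fun j' hj' ↦ (mem_filter.1 hj').2).trans (hΓ j hj)
    have hpeel : (1 - x) ^ #near * #(avoiding A far) ≤ #(avoiding A T) := by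
      rw [← filter_union_filter_not_eq (· ∈ Γ j) T, union_comm]
      refine one_sub_pow_mul_card_avoiding_le hx₁ far near fun a ha W hW haW ↦ ?_
      obtain ⟨haT, haΓ⟩ := mem_filter.1 ha
      have hsub : far ∪ W ⊆ T.erase a := fun b hb ↦ by
        rcases mem_union.1 hb with hb | hb
        · exact mem_erase.2 ⟨by rintro rfl; exact (mem_filter.1 hb).2 haΓ, (mem_filter.1 hb).1⟩
        · exact mem_erase.2 ⟨by rintro rfl; exact haW hb, (mem_filter.1 (hW hb)).1⟩
      exact ih _ (hsub.trans_ssubset (erase_ssubset haT))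
        ((hsub.trans (erase_subset _ _)).trans hTJ) (hTJ haT) fun h ↦ notMem_erase a T (hsub h)
    calc (#(A j ∩ avoiding A T) : ℝ)
        ≤ #(A j ∩ avoiding A far) := by
          gcongr; exact avoiding_anti (filter_subset _ _)
      _ = #(A j) * #(avoiding A far) / Fintype.card (ι → β) := by
          rw [← hindep, mul_div_cancel_right₀ _ hΩ.ne']
      _ ≤ x * (1 - x) ^ d * #(avoiding A far) := by
          rw [div_le_iff₀ hΩ]
          nlinarith [hp j hj]
      _ ≤ x * ((1 - x) ^ #near * #(avoiding A far)) := by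
          rw [← mul_assoc]
          gcongr x * ?_ * _
          exact pow_le_pow_of_le_one (sub_nonneg.2 hx₁) (sub_le_self 1 hx₀) hnear
      _ ≤ x * #(avoiding A T) := by gcongr

theorem avoiding_nonempty_of_card_le {d : ℕ} {x : ℝ} (hx₀ : 0 ≤ x) (hx₁ : x < 1)
    (hA : ∀ j ∈ J, DeterminedBy (supp j) (A j)) (hΓ : ∀ j ∈ J, #(Γ j) ≤ d)
    (hdisj : ∀ j ∈ J, ∀ j' ∈ J, j' ≠ j → j' ∉ Γ j → Disjoint (supp j) (supp j'))
    (hp : ∀ j ∈ J, (#(A j) : ℝ) ≤ x * (1 - x) ^ d * Fintype.card (ι → β)) :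
    (avoiding A J).Nonempty := by
  have hJ := one_sub_pow_mul_card_avoiding_le hx₁.le ∅ J fun a ha W hW haW ↦
    card_inter_avoiding_le hx₀ hx₁.le hA hΓ hdisj hp (by simpa using hW) ha
      (by simpa using haW)
  rw [avoiding_empty, empty_union, card_univ] at hJ
  have hΩ : 0 < Fintype.card (ι → β) := Fintype.card_pos
  exact card_pos.1 (mod_cast (by positivity : (0 : ℝ) < _).trans_le hJ)

theorem avoiding_nonempty_of_exp_mul_le {D : ℕ} {p : ℝ}
    (hA : ∀ j ∈ J, DeterminedBy (supp j) (A j)) (hΓ : ∀ j ∈ J, #(Γ j) < D)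
    (hdisj : ∀ j ∈ J, ∀ j' ∈ J, j' ≠ j → j' ∉ Γ j → Disjoint (supp j) (supp j'))
    (hp : ∀ j ∈ J, (#(A j) : ℝ) ≤ p * Fintype.card (ι → β)) (hpD : exp 1 * p * D ≤ 1) :
    (avoiding A J).Nonempty := by
  rcases J.eq_empty_or_nonempty with rfl | ⟨j, hj⟩
  · simp
  obtain ⟨d, rfl⟩ : ∃ d, D = d + 1 := Nat.exists_eq_add_one.2 ((Nat.zero_le _).trans_lt (hΓ j hj))
  -- `x = 1 / (d + 2)` rather than the usual `1 / (d + 1)`, so that `x < 1` also when `d = 0`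
  refine avoiding_nonempty_of_card_le (x := 1 / (d + 2)) (d := d) (by positivity) ?_ hA
    (fun j hj ↦ Nat.lt_succ_iff.1 (hΓ j hj)) hdisj fun j hj ↦ (hp j hj).trans ?_
  · rw [div_lt_one (by positivity)]; linarith
  have hd : (0 : ℝ) < d + 1 := by positivity
  have hpd : p * (d + 1) ≤ ((d + 1) / (d + 2) : ℝ) ^ (d + 1) := by
    have h := one_le_exp_one_mul_div_pow (d + 1)
    push_cast at hpD h
    rw [add_assoc, one_add_one_eq_two] at h
    refine le_of_mul_le_mul_left ?_ (Real.exp_pos 1)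
    linarith
  have hx : (1 / (d + 2) * (1 - 1 / (d + 2)) ^ d : ℝ) =
      ((d + 1) / (d + 2) : ℝ) ^ (d + 1) / (d + 1) := by
    have h1 : (1 - 1 / (d + 2) : ℝ) = (d + 1) / (d + 2) := by field_simp; ring
    rw [h1, pow_succ]
    field_simp
  gcongr
  rw [hx, le_div_iff₀ hd]
  exact hpd

end LocalLemma

section Monochromatic

variable {ι β : Type*} [Fintype ι] [DecidableEq ι] [Fintype β] [DecidableEq β]

def monochromatic (s : Finset ι) : Finset (ι → β) := {σ | ∃ b, ∀ i ∈ s, σ i = b}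

lemma mem_monochromatic {s : Finset ι} {σ : ι → β} :
    σ ∈ monochromatic s ↔ ∃ b, ∀ i ∈ s, σ i = b := by
  simp [monochromatic]

lemma determinedBy_monochromatic (s : Finset ι) : DeterminedBy s (monochromatic (β := β) s) := by
  intro σ τ hστ hσ
  obtain ⟨b, hb⟩ := mem_monochromatic.1 hσ
  exact mem_monochromatic.2 ⟨b, fun i hi ↦ (hστ i hi).symm.trans (hb i hi)⟩

lemma card_monochromatic_le [Nonempty β] (s : Finset ι) :
    (#(monochromatic (β := β) s) : ℝ) ≤
      (Fintype.card β : ℝ) ^ (1 - (#s : ℤ)) * Fintype.card (ι → β) := by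
  have hsub : monochromatic (β := β) s ⊆
      univ.biUnion fun b ↦ Fintype.piFinset fun i ↦ if i ∈ s then {b} else univ := by
    intro σ hσ
    obtain ⟨b, hb⟩ := mem_monochromatic.1 hσ
    simp only [mem_biUnion, mem_univ, true_and, Fintype.mem_piFinset]
    exact ⟨b, fun i ↦ by split_ifs with hi <;> simp [hb i, hi]⟩
  have hcard : #(monochromatic (β := β) s) ≤
      Fintype.card β * Fintype.card β ^ (Fintype.card ι - #s) := by
    refine (card_le_card hsub).trans (card_biUnion_le.trans ?_)
    simp only [Fintype.card_piFinset, apply_ite card, card_singleton, card_univ, prod_ite,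
      prod_const_one, one_mul, prod_const, sum_const, smul_eq_mul]
    rw [← compl_filter, filter_univ_mem, card_compl]
  have hβ : (Fintype.card β : ℝ) ≠ 0 := by positivity
  calc (#(monochromatic (β := β) s) : ℝ)
      ≤ Fintype.card β * Fintype.card β ^ (Fintype.card ι - #s) := by exact_mod_cast hcard
    _ = _ := by
      rw [Fintype.card_fun, Nat.cast_pow, ← zpow_natCast, ← zpow_natCast, ← zpow_one_add₀ hβ,
        ← zpow_add₀ hβ]
      congr 1
      push_cast [card_le_univ s]
      ring

end Monochromatic

section Hypergraph

variable {V : Type*} [DecidableEq V] {H : Finset (Finset V)}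

def IsLinear (H : Finset (Finset V)) : Prop :=
  ∀ ⦃h⦄, h ∈ H → ∀ ⦃h'⦄, h' ∈ H → 1 < #(h ∩ h') → h = h'

lemma isLinear_of_existsUnique (hcov : ∀ u v : V, u ≠ v → ∃! h, h ∈ H ∧ u ∈ h ∧ v ∈ h) :
    IsLinear H := by
  intro h hh h' hh' h2
  obtain ⟨u, v, hu, hv, huv⟩ := one_lt_card_iff.1 h2
  rw [mem_inter] at hu hv
  exact (hcov u v huv).unique ⟨hh, hu.1, hv.1⟩ ⟨hh', hu.2, hv.2⟩

def pairEdges (H : Finset (Finset V)) (S : Finset V) : Finset (Finset V) :=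
  {h ∈ H | #(h ∩ S) = 2}

lemma card_pairEdges (hcov : ∀ u v : V, u ≠ v → ∃! h, h ∈ H ∧ u ∈ h ∧ v ∈ h) {S : Finset V}
    (hS : ∀ h ∈ H, #(h ∩ S) ≤ 2) : #(pairEdges H S) = (#S).choose 2 := by
  rw [← card_powersetCard]
  refine card_bij (fun h _ ↦ h ∩ S) (fun h hh ↦ ?_) (fun h hh h' hh' e ↦ ?_) fun p hp ↦ ?_
  · exact mem_powersetCard.2 ⟨inter_subset_right, (mem_filter.1 hh).2⟩
  · obtain ⟨hhH, h2⟩ := mem_filter.1 hh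
    refine isLinear_of_existsUnique hcov hhH (mem_filter.1 hh').1 ?_
    calc 1 < #(h ∩ S) := by omega
      _ ≤ #(h ∩ h') := card_le_card fun v hv ↦
        mem_inter.2 ⟨(mem_inter.1 hv).1, (mem_inter.1 (e ▸ hv)).1⟩
  · obtain ⟨hpS, hp2⟩ := mem_powersetCard.1 hp
    obtain ⟨u, v, huv, rfl⟩ := card_eq_two.1 hp2
    obtain ⟨h, ⟨hh, hu, hv⟩, -⟩ := hcov u v huv
    have hsub : {u, v} ⊆ h ∩ S := insert_subset (mem_inter.2 ⟨hu, hpS (by simp)⟩)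
      (singleton_subset_iff.2 (mem_inter.2 ⟨hv, hpS (by simp)⟩))
    have hcard : #(h ∩ S) = 2 := le_antisymm (hS h hh) (hp2 ▸ card_le_card hsub)
    exact ⟨h, mem_filter.2 ⟨hh, hcard⟩, (eq_of_subset_of_card_le hsub (by omega)).symm⟩

lemma HasBergeCopy.exists_pairEdges {α : Type*} [Fintype α] {P : Finset V → Prop}
    (hlin : IsLinear H) (hc : HasBergeCopy (⊤ : SimpleGraph α) H P) :
    ∃ S : Finset V, #S = Fintype.card α ∧ (∀ h ∈ H, #(h ∩ S) ≤ 2) ∧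
      ∀ h ∈ pairEdges H S, P h := by
  obtain ⟨y, f, hy, hf, hmem⟩ := hc
  have hedge : ∀ {u v : α}, u ≠ v → s(u, v) ∈ (⊤ : SimpleGraph α).edgeSet := by simp
  have hf_eq : ∀ {u v : α}, u ≠ v → ∀ h ∈ H, y u ∈ h → y v ∈ h → f s(u, v) = h := by
    intro u v huv h hh hu hv
    obtain ⟨hfH, -, hfy⟩ := hmem _ (hedge huv)
    refine hlin hfH hh (one_lt_card_iff.2 ⟨y u, y v, ?_, ?_, hy.ne huv⟩) <;>
      simp [hfy, hu, hv]
  refine ⟨univ.image y, by rw [card_image_of_injective _ hy, card_univ], fun h hh ↦ ?_,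
    fun h hh ↦ ?_⟩
  · by_contra! h3
    obtain ⟨_, ha, _, hb, _, hc, hab, hac, hbc⟩ := two_lt_card.1 h3
    simp only [mem_inter, mem_image, mem_univ, true_and] at ha hb hc
    obtain ⟨ha, u, rfl⟩ := ha
    obtain ⟨hb, v, rfl⟩ := hb
    obtain ⟨hc, w, rfl⟩ := hc
    have := hf (hedge (ne_of_apply_ne y hab)) (hedge (ne_of_apply_ne y hac))
      ((hf_eq (ne_of_apply_ne y hab) h hh ha hb).trans
        (hf_eq (ne_of_apply_ne y hac) h hh ha hc).symm)
    exact hbc (congrArg y (Sym2.congr_right.1 this))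
  · obtain ⟨hhH, h2⟩ := mem_filter.1 hh
    obtain ⟨_, _, hab, e⟩ := card_eq_two.1 h2
    have ha := e ▸ mem_insert_self _ _
    have hb := e ▸ mem_insert_of_mem (mem_singleton_self _)
    simp only [mem_inter, mem_image, mem_univ, true_and] at ha hb
    obtain ⟨ha, u, rfl⟩ := ha
    obtain ⟨hb, v, rfl⟩ := hb
    rw [← hf_eq (ne_of_apply_ne y hab) h hhH ha hb]
    exact (hmem _ (hedge (ne_of_apply_ne y hab))).2.1

variable [Fintype V]

lemma card_filter_superset_le (p : Finset V) (t : ℕ) :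
    #{S : Finset V | #S = t ∧ p ⊆ S} ≤ (Fintype.card V - #p).choose (t - #p) := by
  calc #{S : Finset V | #S = t ∧ p ⊆ S}
      ≤ #(((univ \ p).powersetCard (t - #p)).image (· ∪ p)) := by
        refine card_le_card fun S hS ↦ ?_
        obtain ⟨hSt, hpS⟩ := (mem_filter.1 hS).2
        refine mem_image.2 ⟨S \ p, mem_powersetCard.2
          ⟨sdiff_subset_sdiff (subset_univ S) le_rfl, ?_⟩, sdiff_union_of_subset hpS⟩
        rw [card_sdiff_of_subset hpS, hSt]
    _ ≤ _ := by
        rw [← card_univ, ← card_sdiff_of_subset (subset_univ p), ← card_powersetCard]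
        exact card_image_le

lemma card_filter_card_inter_eq_two_le (h : Finset V) (t : ℕ) :
    #{S : Finset V | #S = t ∧ #(h ∩ S) = 2} ≤
      (#h).choose 2 * (Fintype.card V - 2).choose (t - 2) := by
  calc #{S : Finset V | #S = t ∧ #(h ∩ S) = 2}
      ≤ #((h.powersetCard 2).biUnion fun p ↦ {S : Finset V | #S = t ∧ p ⊆ S}) := by
        refine card_le_card fun S hS ↦ ?_
        obtain ⟨hSt, h2⟩ := (mem_filter.1 hS).2
        exact mem_biUnion.2 ⟨h ∩ S, mem_powersetCard.2 ⟨inter_subset_left, h2⟩,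
          mem_filter.2 ⟨mem_univ _, hSt, inter_subset_right⟩⟩
    _ ≤ _ := by
        refine card_biUnion_le.trans ((sum_le_card_nsmul _ _
          ((Fintype.card V - 2).choose (t - 2)) fun p hp ↦ ?_).trans_eq ?_)
        · exact (mem_powersetCard.1 hp).2 ▸ card_filter_superset_le p t
        · rw [card_powersetCard, smul_eq_mul]

lemma card_filter_not_disjoint_pairEdges_le {k : ℕ} (hunif : ∀ h ∈ H, #h = k) (S : Finset V)
    (t : ℕ) :
    #{S' : Finset V | #S' = t ∧ ¬Disjoint (pairEdges H S) (pairEdges H S')} ≤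
      #(pairEdges H S) * (k.choose 2 * (Fintype.card V - 2).choose (t - 2)) := by
  calc #{S' : Finset V | #S' = t ∧ ¬Disjoint (pairEdges H S) (pairEdges H S')}
      ≤ #((pairEdges H S).biUnion fun h ↦ {S' : Finset V | #S' = t ∧ #(h ∩ S') = 2}) := by
        refine card_le_card fun S' hS' ↦ ?_
        obtain ⟨hS't, hnd⟩ := (mem_filter.1 hS').2
        obtain ⟨h, hh, hh'⟩ := not_disjoint_iff.1 hnd
        exact mem_biUnion.2 ⟨h, hh, mem_filter.2 ⟨mem_univ _, hS't, (mem_filter.1 hh').2⟩⟩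
    _ ≤ _ := by
        refine card_biUnion_le.trans (sum_le_card_nsmul _ _ _ fun h hh ↦ ?_)
        exact hunif h (mem_filter.1 hh).1 ▸ card_filter_card_inter_eq_two_le h t

-- the vertex sets that can be the core of a Berge-`K_t` in a linear hypergraph
def cliqueCores (H : Finset (Finset V)) (t : ℕ) : Finset (Finset V) :=
  {S | #S = t ∧ ∀ h ∈ H, #(h ∩ S) ≤ 2}

def dependentCores (H : Finset (Finset V)) (t : ℕ) (S : Finset V) : Finset (Finset V) :=
  {S' ∈ cliqueCores H t | ¬Disjoint (pairEdges H S) (pairEdges H S')}.erase S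

lemma mem_cliqueCores {t : ℕ} {S : Finset V} :
    S ∈ cliqueCores H t ↔ #S = t ∧ ∀ h ∈ H, #(h ∩ S) ≤ 2 := by
  simp [cliqueCores]

lemma card_pairEdges_of_mem_cliqueCores (hcov : ∀ u v : V, u ≠ v → ∃! h, h ∈ H ∧ u ∈ h ∧ v ∈ h)
    {t : ℕ} {S : Finset V} (hS : S ∈ cliqueCores H t) : #(pairEdges H S) = t.choose 2 := by
  obtain ⟨hSt, hS2⟩ := mem_cliqueCores.1 hS
  rw [card_pairEdges hcov hS2, hSt]

lemma card_dependentCores_lt (hcov : ∀ u v : V, u ≠ v → ∃! h, h ∈ H ∧ u ∈ h ∧ v ∈ h) {k t : ℕ}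
    (hunif : ∀ h ∈ H, #h = k) (ht : 2 ≤ t) {S : Finset V} (hS : S ∈ cliqueCores H t) :
    #(dependentCores H t S) < t.choose 2 * k.choose 2 * (Fintype.card V - 2).choose (t - 2) := by
  have hpair := card_pairEdges_of_mem_cliqueCores hcov hS
  have hself : S ∈ {S' ∈ cliqueCores H t | ¬Disjoint (pairEdges H S) (pairEdges H S')} := by
    refine mem_filter.2 ⟨hS, ?_⟩
    rw [disjoint_self_iff_empty, ← Ne, ← nonempty_iff_ne_empty, ← card_pos, hpair]
    exact Nat.choose_pos ht
  calc #(dependentCores H t S)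
      < #{S' ∈ cliqueCores H t | ¬Disjoint (pairEdges H S) (pairEdges H S')} :=
        card_erase_lt_of_mem hself
    _ ≤ #{S' : Finset V | #S' = t ∧ ¬Disjoint (pairEdges H S) (pairEdges H S')} :=
        card_le_card fun S' hS' ↦ by
          obtain ⟨hS', hnd⟩ := mem_filter.1 hS'
          exact mem_filter.2 ⟨mem_univ _, (mem_cliqueCores.1 hS').1, hnd⟩
    _ ≤ _ := card_filter_not_disjoint_pairEdges_le hunif S t
    _ = _ := by rw [hpair, mul_assoc]

lemma disjoint_pairEdges_of_notMem_dependentCores {t : ℕ} {S S' : Finset V}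
    (hS' : S' ∈ cliqueCores H t) (hne : S' ≠ S) (hdep : S' ∉ dependentCores H t S) :
    Disjoint (pairEdges H S) (pairEdges H S') := by
  by_contra hnd
  exact hdep (mem_erase.2 ⟨hne, mem_filter.2 ⟨hS', hnd⟩⟩)

end Hypergraph

theorem exists_coloring_no_mono_berge_clique_general (k t n : ℕ) (ht : 3 ≤ t)
    (H : Finset (Finset (Fin n)))
    (hunif : ∀ h ∈ H, h.card = k)
    (hcov : ∀ u v : Fin n, u ≠ v → ∃! h, h ∈ H ∧ u ∈ h ∧ v ∈ h)
    (hLLL : Real.exp 1 * (t.choose 2 : ℝ) * (k.choose 2 : ℝ) *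
        ((n - 2).choose (t - 2) : ℝ) * (2 : ℝ) ^ ((1 : ℤ) - (t.choose 2 : ℤ)) < 1) :
    ∃ col : Finset (Fin n) → Bool,
      ∀ b : Bool, ¬ HasBergeCopy (⊤ : SimpleGraph (Fin t)) H (fun h => col h = b) := by
  have hp : ∀ S ∈ cliqueCores H t, (#(monochromatic (β := Bool) (pairEdges H S)) : ℝ) ≤
      2 ^ (1 - (t.choose 2 : ℤ)) * Fintype.card (Finset (Fin n) → Bool) := fun S hS ↦ by
    simpa [card_pairEdges_of_mem_cliqueCores hcov hS] using
      card_monochromatic_le (β := Bool) (pairEdges H S)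
  obtain ⟨σ, hσ⟩ := avoiding_nonempty_of_exp_mul_le (Γ := dependentCores H t)
    (D := t.choose 2 * k.choose 2 * (n - 2).choose (t - 2))
    (fun S _ ↦ determinedBy_monochromatic _)
    (fun S hS ↦ (card_dependentCores_lt hcov hunif (by omega) hS).trans_eq
      (by rw [Fintype.card_fin]))
    (fun S _ S' hS' ↦ disjoint_pairEdges_of_notMem_dependentCores hS') hp
    (by push_cast; linarith)
  refine ⟨σ, fun b hc ↦ ?_⟩
  obtain ⟨S, hSt, hS2, hmono⟩ := hc.exists_pairEdges (isLinear_of_existsUnique hcov)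
  exact mem_avoiding.1 hσ S (mem_cliqueCores.2 ⟨by simpa using hSt, hS2⟩)
    (mem_monochromatic.2 ⟨b, hmono⟩)

/-- Lovász Local Lemma step: if `H` is a `k`-uniform hypergraph on `n` vertices in
which every pair of distinct vertices lies in exactly one edge, and
`e·C(t,2)·C(k,2)·C(n-2,t-2)·2^(1-C(t,2)) < 1`, then `H` admits a 2-edge-coloring
with no monochromatic Berge copy of `K_t`. -/
theorem exists_coloring_no_mono_berge_clique (k t n : ℕ) (hk : 2 ≤ k) (ht : 3 ≤ t)
    (H : Finset (Finset (Fin n)))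
    (hunif : ∀ h ∈ H, h.card = k)
    (hcov : ∀ u v : Fin n, u ≠ v → ∃! h, h ∈ H ∧ u ∈ h ∧ v ∈ h)
    (hLLL : Real.exp 1 * (t.choose 2 : ℝ) * (k.choose 2 : ℝ) *
        ((n - 2).choose (t - 2) : ℝ) * (2 : ℝ) ^ ((1 : ℤ) - (t.choose 2 : ℤ)) < 1) :
    ∃ col : Finset (Fin n) → Bool,
      ∀ b : Bool, ¬ HasBergeCopy (⊤ : SimpleGraph (Fin t)) H (fun h => col h = b) :=
  exists_coloring_no_mono_berge_clique_general k t n ht H hunif hcov hLLL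
end

section
/- Let k ≥ 2, let G be a simple graph, and let N be an integer such that every coloring of the edges of the complete graph K_N with 2·C(k,2) colors contains a monochromatic copy of G. Then for every covering [k]-uniform hypergraph H on N vertices and every 2-edge-coloring of H, there is a monochromatic Berge copy of G in H. -/
open Function

section

variable {α V ι κ : Type*}

def HasMonoCopy (G : SimpleGraph α) (χ : Sym2 V → ι) : Prop :=
  ∃ (i : ι) (φ : α → V), Injective φ ∧ ∀ u v, G.Adj u v → χ s(φ u, φ v) = i

theorem HasMonoCopy.of_equiv_comp {G : SimpleGraph α} {χ : Sym2 V → ι} (e : ι ≃ κ)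
    (h : HasMonoCopy G (e ∘ χ)) : HasMonoCopy G χ := by
  obtain ⟨i, φ, hφ, hmono⟩ := h
  exact ⟨e.symm i, φ, hφ, fun u v huv => e.eq_symm_apply.2 (hmono u v huv)⟩

theorem Finset.exists_injOn_fin_of_card_le {β : Type*} (t : Finset β) {m : ℕ}
    (ht : t.card ≤ m) (hm : 0 < m) : ∃ f : β → Fin m, Set.InjOn f t := by
  have : Nonempty (Fin m) := ⟨⟨0, hm⟩⟩
  rw [Set.exists_injOn_iff_injective]
  obtain ⟨f⟩ := Embedding.nonempty_of_card_le (α := t) (β := Fin m)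
    (by simpa using ht)
  exact ⟨f, f.injective⟩

theorem Sym2.exists_injOn_fin_choose_two (s : Finset V) {k : ℕ}
    (hs : s.card ≤ k) (hk : 2 ≤ k) :
    ∃ f : Sym2 V → Fin (k.choose 2), Set.InjOn f {p | ¬p.IsDiag ∧ ∀ x ∈ p, x ∈ s} := by
  classical
  obtain ⟨f, hf⟩ := (s.offDiag.image Sym2.mk.uncurry).exists_injOn_fin_of_card_le
    (m := k.choose 2) (by rw [Sym2.card_image_offDiag]; exact Nat.choose_le_choose 2 hs)
    (Nat.choose_pos hk)
  refine ⟨f, hf.mono ?_⟩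
  rintro p ⟨hp, hps⟩
  induction p using Sym2.ind with
  | _ u v =>
    refine Finset.mem_image.2 ⟨(u, v), ?_, rfl⟩
    simpa [Finset.mem_offDiag, hps] using hp

theorem exists_hyperedges_containing_pairs {H : Finset (Finset V)}
    (hcov : ∀ u v : V, u ≠ v → ∃ h ∈ H, u ∈ h ∧ v ∈ h) :
    ∃ E : Sym2 V → Finset V, ∀ p, ¬p.IsDiag → E p ∈ H ∧ ∀ x ∈ p, x ∈ E p := by
  have : ∀ p : Sym2 V, ∃ h, ¬p.IsDiag → h ∈ H ∧ ∀ x ∈ p, x ∈ h := by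
    intro p
    induction p using Sym2.ind with
    | _ u v =>
      by_cases huv : u = v
      · exact ⟨∅, fun hp => absurd (Sym2.mk_isDiag_iff.2 huv) hp⟩
      obtain ⟨h, hH, hu, hv⟩ := hcov u v huv
      exact ⟨h, fun _ => ⟨hH, by simp [hu, hv]⟩⟩
  choose E hE using this
  exact ⟨E, hE⟩

theorem hasBergeCopy_of_mono {G : SimpleGraph α} {H : Finset (Finset V)}
    {P : Finset V → Prop} {E : Sym2 V → Finset V} {c : Sym2 V → ι} {i : ι} {φ : α → V}
    (hE : ∀ p, ¬p.IsDiag → E p ∈ H ∧ ∀ x ∈ p, x ∈ E p)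
    (hc : ∀ p q, ¬p.IsDiag → ¬q.IsDiag → E p = E q → c p = c q → p = q)
    (hP : ∀ p, ¬p.IsDiag → c p = i → P (E p))
    (hφ : Injective φ) (hmono : ∀ u v, G.Adj u v → c s(φ u, φ v) = i) :
    HasBergeCopy G H P := by
  have hedge : ∀ e ∈ G.edgeSet, ¬(e.map φ).IsDiag ∧ c (e.map φ) = i := by
    intro e he
    induction e using Sym2.ind with
    | _ u v => exact ⟨by simpa using hφ.ne (G.ne_of_adj he), hmono u v he⟩
  refine ⟨φ, fun e => E (e.map φ), hφ, ?_, fun e he => ?_⟩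
  · intro e₁ he₁ e₂ he₂ h
    obtain ⟨hd₁, hc₁⟩ := hedge e₁ he₁
    obtain ⟨hd₂, hc₂⟩ := hedge e₂ he₂
    exact Sym2.map.injective hφ (hc _ _ hd₁ hd₂ h (hc₁.trans hc₂.symm))
  · obtain ⟨hd, hci⟩ := hedge e he
    exact ⟨(hE _ hd).1, hP _ hd hci,
      fun v hv => (hE _ hd).2 _ (Sym2.mem_map.2 ⟨v, hv, rfl⟩)⟩

end

/-- If every `2·C(k,2)`-coloring of the edges of `K_N` contains a monochromatic copy
of `G`, then every 2-edge-colored covering `[k]`-uniform hypergraph on `N` vertices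
contains a monochromatic Berge copy of `G`. -/
theorem mono_berge_from_multicolor_ramsey {α : Type*} (k : ℕ) (hk : 2 ≤ k)
    (G : SimpleGraph α) (N : ℕ)
    (hRam : ∀ χ : Sym2 (Fin N) → Fin (2 * k.choose 2),
      ∃ (i : Fin (2 * k.choose 2)) (φ : α → Fin N),
        Function.Injective φ ∧ ∀ u v, G.Adj u v → χ s(φ u, φ v) = i)
    (H : Finset (Finset (Fin N)))
    (hunif : ∀ h ∈ H, 1 ≤ h.card ∧ h.card ≤ k)
    (hcov : ∀ u v : Fin N, u ≠ v → ∃ h ∈ H, u ∈ h ∧ v ∈ h)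
    (col : Finset (Fin N) → Bool) :
    ∃ b : Bool, HasBergeCopy G H (fun h => col h = b) := by
  obtain ⟨E, hE⟩ := exists_hyperedges_containing_pairs hcov
  have : NeZero (k.choose 2) := ⟨(Nat.choose_pos hk).ne'⟩
  choose! num hnum using fun s hs => Sym2.exists_injOn_fin_choose_two s (hunif s hs).2 hk
  let c : Sym2 (Fin N) → Bool × Fin (k.choose 2) := fun p => (col (E p), num (E p) p)
  let e : Bool × Fin (k.choose 2) ≃ Fin (2 * k.choose 2) :=
    (finTwoEquiv.symm.prodCongr (Equiv.refl _)).trans finProdFinEquiv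
  obtain ⟨⟨b, j⟩, φ, hφ, hmono⟩ := HasMonoCopy.of_equiv_comp e (hRam (e ∘ c))
  refine ⟨b, hasBergeCopy_of_mono hE ?_ (fun p _ hp => congrArg Prod.fst hp) hφ hmono⟩
  intro p q hp hq hEpq hcpq
  have hq' : ¬q.IsDiag ∧ ∀ x ∈ q, x ∈ E p := hEpq ▸ ⟨hq, (hE q hq).2⟩
  exact hnum _ (hE p hp).1 ⟨hp, (hE p hp).2⟩ hq'
    (by simpa [c, hEpq] using congrArg Prod.snd hcpq)
end
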